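/- arXiv:2402.14387 — 9 statements merged into one kernel-verified Lean document; each statement's English description precedes it below -/
import Mathlib

section
/- Let q be a prime power. No F_q-linear set of rank 4 in PG(2,q^4) is 1-saturating: for every F_q-subspace U of F_{q^4}^3 with dim_{F_q}(U) = 4, there exists a point of PG(2,q^4) that lies on no line spanned by two distinct points of L_U. -/
noncomputable section

/-- The `F`-linear set `L_U` in `PG(V, K)` defined by an `F`-subspace `U` of `V`:
the set of projective points `⟨u⟩_K` for `u ∈ U \ {0}`. -/
def linSet (F K : Type*) {V : Type*} [Field F] [Field K] [AddCommGroup V]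
    [Module K V] [Module F V] (U : Submodule F V) : Set (Projectivization K V) :=
  {P | ∃ (u : V) (hu : u ≠ 0), u ∈ U ∧ P = Projectivization.mk K u hu}

/-- The weight of the projective subspace `PG(W, K)` in the linear set defined by `U`,
namely `dim_F (U ∩ W)`. -/
def wt (F : Type*) {K V : Type*} [Field F] [Field K] [AddCommGroup V]
    [Module K V] [Module F V] [SMul F K] [IsScalarTower F K V]
    (U : Submodule F V) (W : Submodule K V) : ℕ :=
  Module.finrank F (U ⊓ W.restrictScalars F : Submodule F V)

/-- The weight of a projective point in the linear set defined by `U`. -/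
def wtPt (F K : Type*) {V : Type*} [Field F] [Field K] [AddCommGroup V]
    [Module K V] [Module F V] [SMul F K] [IsScalarTower F K V]
    (U : Submodule F V) (P : Projectivization K V) : ℕ :=
  wt F U P.submodule

/-- `L_U` is scattered: every point of `L_U` has weight one. -/
def Scattered (F K : Type*) {V : Type*} [Field F] [Field K] [AddCommGroup V]
    [Module K V] [Module F V] [SMul F K] [IsScalarTower F K V]
    (U : Submodule F V) : Prop :=
  ∀ P ∈ linSet F K U, wtPt F K U P = 1

/-- `L_U` is `1`-saturating: every point of the projective space lies on a (secant) line
spanned by two distinct points of `L_U`. -/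
def OneSat (F K : Type*) {V : Type*} [Field F] [Field K] [AddCommGroup V]
    [Module K V] [Module F V] (U : Submodule F V) : Prop :=
  ∀ P : Projectivization K V, ∃ Q R : Projectivization K V,
    Q ∈ linSet F K U ∧ R ∈ linSet F K U ∧ Q ≠ R ∧
      P.submodule ≤ Q.submodule ⊔ R.submodule

set_option linter.unusedSectionVars false
set_option linter.unusedVariables false

open Module Submodule Polynomial

namespace NR4

variable {F K : Type*} [Field F] [Field K] [Fintype F] [Fintype K] [Algebra F K]

/-- Fixed points of the `q`-power map are exactly the image of `F`. -/
lemma mem_range_iff_pow_card (t : K) :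
    t ∈ Set.range (algebraMap F K) ↔ t ^ Fintype.card F = t := by
  classical
  constructor
  · rintro ⟨c, rfl⟩
    rw [← map_pow, FiniteField.pow_card]
  · intro ht
    by_contra hnot
    set q := Fintype.card F with hqdef
    have hq1 : 1 < q := Fintype.one_lt_card
    set P : K[X] := X ^ q - X with hP
    have hP0 : P ≠ 0 := FiniteField.X_pow_card_sub_X_ne_zero K hq1
    have hdeg : P.natDegree = q := FiniteField.X_pow_card_sub_X_natDegree_eq K hq1
    set S : Finset K := insert t (Finset.univ.image (algebraMap F K)) with hS
    have hcardim : (Finset.univ.image (algebraMap F K)).card = q := by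
      rw [Finset.card_image_of_injective _ (algebraMap F K).injective, Finset.card_univ]
    have htn : t ∉ Finset.univ.image (algebraMap F K) := by
      intro h
      obtain ⟨c, -, rfl⟩ := Finset.mem_image.mp h
      exact hnot ⟨c, rfl⟩
    have hcardS : S.card = q + 1 := by
      rw [hS, Finset.card_insert_of_notMem htn, hcardim]
    have hsub : S ⊆ P.roots.toFinset := by
      intro s hs
      rw [Multiset.mem_toFinset, mem_roots hP0]
      have : s ^ q = s := by
        rcases Finset.mem_insert.mp hs with rfl | h
        · exact ht
        · obtain ⟨c, -, rfl⟩ := Finset.mem_image.mp h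
          rw [← map_pow, FiniteField.pow_card]
      simp [hP, IsRoot, this]
    have h1 : S.card ≤ P.roots.toFinset.card := Finset.card_le_card hsub
    have h2 : P.roots.toFinset.card ≤ P.roots.card := Multiset.toFinset_card_le _
    have h3 : P.roots.card ≤ P.natDegree := P.card_roots' 
    omega

/-- Two solutions of `x ^ q = κ * x` are `F`-dependent. -/
lemma pair_dep {κ x y : K} (hx : x ^ Fintype.card F = κ * x)
    (hy : y ^ Fintype.card F = κ * y) (hx0 : x ≠ 0) : ∃ c : F, y = c • x := by
  rcases eq_or_ne y 0 with rfl | hy0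
  · exact ⟨0, by simp⟩
  · have hκ : κ ≠ 0 := by
      intro h
      rw [h, zero_mul, pow_eq_zero_iff (Fintype.card_pos).ne'] at hx
      exact hx0 hx
    have ht : (y * x⁻¹) ^ Fintype.card F = y * x⁻¹ := by
      rw [mul_pow, inv_pow, hx, hy, mul_inv]
      field_simp
    obtain ⟨c, hc⟩ := (mem_range_iff_pow_card (y * x⁻¹)).mpr ht
    refine ⟨c, ?_⟩
    rw [Algebra.smul_def, hc]
    field_simp


section Char

variable (F K)

/-- `x ↦ x ^ (q ^ j)` as an `F`-linear map on `K`, `q = |F|`. -/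
def powQ (j : ℕ) : K →ₗ[F] K where
  toFun x := x ^ (Fintype.card F ^ j)
  map_add' x y := by
    obtain ⟨p, hchar⟩ := CharP.exists F
    haveI : CharP F p := hchar
    haveI hp : Fact p.Prime := ⟨CharP.char_is_prime F p⟩
    haveI : CharP K p := charP_of_injective_algebraMap (algebraMap F K).injective p
    obtain ⟨n, -, hcard⟩ := FiniteField.card F p
    rw [hcard, ← pow_mul]
    exact add_pow_char_pow x y p (n * j)
  map_smul' c x := by
    simp only [RingHom.id_apply, _root_.smul_pow, FiniteField.pow_card_pow]

lemma powQ_apply (j : ℕ) (x : K) : powQ F K j x = x ^ (Fintype.card F ^ j) := rfl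

/-- The trace-like map `x ↦ x + x^q + x^{q²} + x^{q³}`. -/
def trL : K →ₗ[F] K := powQ F K 0 + powQ F K 1 + powQ F K 2 + powQ F K 3

lemma trL_apply (x : K) :
    trL F K x = x + x ^ Fintype.card F + x ^ Fintype.card F ^ 2 + x ^ Fintype.card F ^ 3 := by
  simp [trL, powQ_apply]

end Char

variable (F K)

lemma pow_card_K (hK4 : Fintype.card K = Fintype.card F ^ 4) (x : K) :
    x ^ Fintype.card F ^ 4 = x := by
  rw [← hK4, FiniteField.pow_card]

/-- Frobenius-stability of the trace. -/
lemma trL_pow_card (hK4 : Fintype.card K = Fintype.card F ^ 4) (x : K) :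
    (trL F K x) ^ Fintype.card F = trL F K x := by
  set q := Fintype.card F with hq
  have hfr : ∀ a b : K, (a + b) ^ q = a ^ q + b ^ q := by
    intro a b
    have := (powQ F K 1).map_add a b
    simpa [powQ_apply] using this
  have e1 : (x ^ q) ^ q = x ^ q ^ 2 := by rw [← pow_mul, pow_two]
  have e2 : (x ^ q ^ 2) ^ q = x ^ q ^ 3 := by rw [← pow_mul, ← pow_succ]
  have e3 : (x ^ q ^ 3) ^ q = x := by rw [← pow_mul, ← pow_succ, pow_card_K F K hK4]
  rw [trL_apply, hfr, hfr, hfr, ← hq, e1, e2, e3]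
  ring

lemma trL_frob (hK4 : Fintype.card K = Fintype.card F ^ 4) (x : K) :
    trL F K (x ^ Fintype.card F) = trL F K x := by
  set q := Fintype.card F with hq
  have e1 : (x ^ q) ^ q = x ^ q ^ 2 := by rw [← pow_mul, pow_two]
  have e2 : (x ^ q) ^ q ^ 2 = x ^ q ^ 3 := by rw [← pow_mul, ← pow_succ']
  have e3 : (x ^ q) ^ q ^ 3 = x := by rw [← pow_mul, ← pow_succ', pow_card_K F K hK4]
  rw [trL_apply, trL_apply, ← hq, e1, e2, e3]
  ring

/-- The trace map is nonzero. -/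
lemma trL_ne_zero (hK4 : Fintype.card K = Fintype.card F ^ 4) : trL F K ≠ 0 := by
  classical
  intro h0
  set q := Fintype.card F with hq
  have hq1 : 1 < q := Fintype.one_lt_card
  set P : K[X] := X ^ q ^ 3 + X ^ q ^ 2 + X ^ q + X with hP
  have hne : P ≠ 0 := by
    have hc : P.coeff (q ^ 3) = 1 := by
      have h1 : q < q ^ 3 := by
        calc q = q ^ 1 := (pow_one q).symm
        _ < q ^ 3 := by exact Nat.pow_lt_pow_right hq1 (by norm_num)
      have h2 : q ^ 2 < q ^ 3 := Nat.pow_lt_pow_right hq1 (by norm_num)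
      have h3 : 1 < q ^ 3 := lt_of_lt_of_le hq1 (Nat.le_self_pow (by norm_num) q)
      simp [hP, Polynomial.coeff_X_pow, Polynomial.coeff_X, h1.ne, h2.ne, h3.ne, h1.ne', h2.ne', h3.ne']
    intro h
    rw [h] at hc
    simp at hc
  have hdeg : P.natDegree ≤ q ^ 3 := by
    have b1 : (X ^ q ^ 3 : K[X]).natDegree ≤ q ^ 3 := by simp
    have b2 : (X ^ q ^ 2 : K[X]).natDegree ≤ q ^ 3 := by
      simp only [Polynomial.natDegree_X_pow]
      exact Nat.pow_le_pow_right (le_of_lt hq1) (by norm_num)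
    have b3 : (X ^ q : K[X]).natDegree ≤ q ^ 3 := by
      simp only [Polynomial.natDegree_X_pow]
      calc q = q ^ 1 := (pow_one q).symm
      _ ≤ q ^ 3 := Nat.pow_le_pow_right (le_of_lt hq1) (by norm_num)
    have b4 : (X : K[X]).natDegree ≤ q ^ 3 := by
      simp only [Polynomial.natDegree_X]
      exact le_trans (le_of_lt hq1) (Nat.le_self_pow (by norm_num) q)
    exact le_trans (Polynomial.natDegree_add_le _ _) (max_le (le_trans
      (Polynomial.natDegree_add_le _ _) (max_le (le_trans (Polynomial.natDegree_add_le _ _)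
      (max_le b1 b2)) b3)) b4)
  have hroots : (Finset.univ : Finset K) ⊆ P.roots.toFinset := by
    intro x _
    rw [Multiset.mem_toFinset, mem_roots hne]
    have : trL F K x = 0 := by rw [h0]; rfl
    rw [trL_apply, ← hq] at this
    simp only [IsRoot, hP, Polynomial.eval_add, Polynomial.eval_pow, Polynomial.eval_X]
    linear_combination this
  have hcard : Fintype.card K ≤ q ^ 3 := by
    calc Fintype.card K = (Finset.univ : Finset K).card := (Finset.card_univ).symm
    _ ≤ P.roots.toFinset.card := Finset.card_le_card hroots
    _ ≤ P.roots.card := Multiset.toFinset_card_le _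
    _ ≤ P.natDegree := P.card_roots'
    _ ≤ q ^ 3 := hdeg
  rw [hK4] at hcard
  have : q ^ 3 < q ^ 4 := Nat.pow_lt_pow_right hq1 (by norm_num)
  omega


/-- The Artin-Schreier map `x ↦ x^q - x`. -/
def wp : K →ₗ[F] K := powQ F K 1 - LinearMap.id

lemma wp_apply (x : K) : wp F K x = x ^ Fintype.card F - x := by
  simp [wp, powQ_apply, pow_one]

/-- The image of `F` in `K` as an `F`-submodule. -/
def R1 : Submodule F K := LinearMap.range (Algebra.linearMap F K)

lemma mem_R1 {x : K} : x ∈ R1 F K ↔ x ∈ Set.range (algebraMap F K) := by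
  simp [R1, LinearMap.mem_range, Set.mem_range, Algebra.linearMap_apply]

lemma ker_wp : LinearMap.ker (wp F K) = R1 F K := by
  ext x
  rw [LinearMap.mem_ker, wp_apply, sub_eq_zero, mem_R1]
  exact (mem_range_iff_pow_card x).symm

lemma R1_eq_span : R1 F K = span F {(1 : K)} := by
  ext z
  rw [mem_R1, Submodule.mem_span_singleton]
  constructor
  · rintro ⟨c, rfl⟩; exact ⟨c, by rw [Algebra.smul_def, mul_one]⟩
  · rintro ⟨c, rfl⟩; exact ⟨c, by rw [Algebra.smul_def, mul_one]⟩

lemma finrank_R1 : finrank F (R1 F K) = 1 := by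
  rw [R1_eq_span, finrank_span_singleton one_ne_zero]

lemma finrank_K (hK4 : Fintype.card K = Fintype.card F ^ 4) : finrank F K = 4 := by
  have h := card_eq_pow_finrank (K := F) (V := K)
  rw [hK4] at h
  exact (Nat.pow_right_injective Fintype.one_lt_card h.symm)

lemma range_wp (hK4 : Fintype.card K = Fintype.card F ^ 4) :
    LinearMap.range (wp F K) = LinearMap.ker (trL F K) := by
  have h4 := finrank_K F K hK4
  have hle : LinearMap.range (wp F K) ≤ LinearMap.ker (trL F K) := by
    rintro _ ⟨x, rfl⟩
    rw [LinearMap.mem_ker, wp_apply, map_sub, trL_frob F K hK4, sub_self]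
  have h1 : finrank F (LinearMap.range (wp F K)) = 3 := by
    have := LinearMap.finrank_range_add_finrank_ker (wp F K)
    rw [ker_wp, finrank_R1, h4] at this
    omega
  have h2 : finrank F (LinearMap.ker (trL F K)) = 3 := by
    have hrle : LinearMap.range (trL F K) ≤ R1 F K := by
      rintro _ ⟨x, rfl⟩
      rw [mem_R1]
      exact (mem_range_iff_pow_card _).mpr (trL_pow_card F K hK4 x)
    have hne : LinearMap.range (trL F K) ≠ ⊥ := fun h =>
      trL_ne_zero F K hK4 (LinearMap.range_eq_bot.mp h)
    have hub : finrank F (LinearMap.range (trL F K)) ≤ 1 := by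
      have := Submodule.finrank_mono hrle
      rwa [finrank_R1] at this
    have hlb : finrank F (LinearMap.range (trL F K)) ≠ 0 := fun h =>
      hne (Submodule.finrank_eq_zero.mp h)
    have := LinearMap.finrank_range_add_finrank_ker (trL F K)
    rw [h4] at this
    omega
  exact Submodule.eq_of_le_of_finrank_le hle (by omega)

/-- Every functional on `K` has a kernel; conversely every hyperplane is the kernel of a
functional. -/
lemma exists_functional (h4 : finrank F K = 4) (W : Submodule F K) (hW : finrank F W = 3) :
    ∃ φ : K →ₗ[F] F, LinearMap.ker φ = W := by
  have hq : finrank F (K ⧸ W) = 1 := by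
    have := Submodule.finrank_quotient_add_finrank W
    rw [h4, hW] at this
    omega
  let bq : Basis (Fin 1) F (K ⧸ W) := finBasisOfFinrankEq F _ hq
  let e : (K ⧸ W) ≃ₗ[F] F := bq.equivFun.trans (LinearEquiv.funUnique (Fin 1) F F)
  refine ⟨e.toLinearMap ∘ₗ W.mkQ, ?_⟩
  rw [LinearMap.ker_comp, LinearEquiv.ker, Submodule.comap_bot, Submodule.ker_mkQ]

/-- Every hyperplane of `K` is the kernel of a twisted trace. -/
lemma exists_trace_ker (hK4 : Fintype.card K = Fintype.card F ^ 4)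
    (W : Submodule F K) (hW : finrank F W = 3) :
    ∃ a : K, a ≠ 0 ∧ W = LinearMap.ker ((trL F K) ∘ₗ (LinearMap.mulLeft F a)) := by
  have h4 := finrank_K F K hK4
  have hmem : ∀ z : K, trL F K z ∈ R1 F K := fun z => by
    rw [mem_R1]; exact (mem_range_iff_pow_card _).mpr (trL_pow_card F K hK4 z)
  let e1 : F ≃ₗ[F] (LinearMap.range (Algebra.linearMap F K)) :=
    LinearEquiv.ofInjective (Algebra.linearMap F K) (algebraMap F K).injective
  let f : K →ₗ[F] F := e1.symm.toLinearMap ∘ₗ ((trL F K).codRestrict (R1 F K) hmem)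
  have hf : ∀ z : K, algebraMap F K (f z) = trL F K z := by
    intro z
    have h1 : e1 (f z) = (trL F K).codRestrict (R1 F K) hmem z := by
      simp only [f, LinearMap.coe_comp, Function.comp_apply, LinearEquiv.coe_toLinearMap]
      exact e1.apply_symm_apply _
    have h2 : (e1 (f z) : K) = algebraMap F K (f z) := by
      exact LinearEquiv.ofInjective_apply _ _
    rw [← h2, h1]
    rfl
  have hfz : ∀ z : K, f z = 0 ↔ trL F K z = 0 := by
    intro z
    constructor
    · intro h; rw [← hf, h, map_zero]
    · intro h
      have := hf z
      rw [h] at this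
      exact (algebraMap F K).injective (by rwa [map_zero])
  let Ψ : K →ₗ[F] Module.Dual F K :=
    { toFun := fun a => f ∘ₗ LinearMap.mulLeft F a
      map_add' := fun a b => by
        ext x
        simp [LinearMap.mulLeft_apply, add_mul]
      map_smul' := fun c a => by
        ext x
        simp [LinearMap.mulLeft_apply, smul_mul_assoc] }
  have hΨinj : Function.Injective Ψ := by
    rw [injective_iff_map_eq_zero]
    intro a ha
    by_contra ha0
    apply trL_ne_zero F K hK4
    ext y
    have hy : f (a * (a⁻¹ * y)) = 0 := by
      have := congrFun (congrArg (fun g => g.toFun) ha) (a⁻¹ * y)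
      simpa [Ψ, LinearMap.mulLeft_apply] using this
    rw [mul_inv_cancel_left₀ ha0] at hy
    rw [LinearMap.zero_apply]
    exact (hfz y).mp hy
  have hdual : finrank F (Module.Dual F K) = 4 := by
    rw [Subspace.dual_finrank_eq, h4]
  have hΨsurj : Function.Surjective Ψ := by
    have hrange : LinearMap.range Ψ = ⊤ := by
      apply Submodule.eq_top_of_finrank_eq
      have := LinearMap.finrank_range_add_finrank_ker Ψ
      rw [LinearMap.ker_eq_bot.mpr hΨinj, finrank_bot, h4] at this
      omega
    exact LinearMap.range_eq_top.mp hrange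
  obtain ⟨φ, hφ⟩ := exists_functional F K h4 W hW
  obtain ⟨a, ha⟩ := hΨsurj φ
  have ha0 : a ≠ 0 := by
    rintro rfl
    rw [map_zero] at ha
    rw [← ha] at hφ
    rw [LinearMap.ker_zero] at hφ
    have : finrank F (⊤ : Submodule F K) = 3 := by rw [hφ, hW]
    rw [finrank_top, h4] at this
    omega
  refine ⟨a, ha0, ?_⟩
  rw [← hφ, ← ha]
  ext x
  simp only [LinearMap.mem_ker, LinearMap.coe_comp, Function.comp_apply,
    LinearMap.mulLeft_apply]
  constructor
  · intro h
    exact (hfz _).mp (by simpa [Ψ] using h)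
  · intro h
    simpa [Ψ] using (hfz _).mpr h


/-- Kernels in the pencil `id + λ•N` for a `q`-binomial `N` are at most lines. -/
lemma kerG_le_one (N : K →ₗ[F] K) (c b : K) (hc : c ≠ 0)
    (hN : ∀ x : K, N x = c * x ^ Fintype.card F + b * x) (lam : K) :
    finrank F (LinearMap.ker (LinearMap.id + lam • N)) ≤ 1 := by
  rcases eq_or_ne lam 0 with rfl | hlam
  · have : LinearMap.ker (LinearMap.id + (0:K) • N) = ⊥ := by
      rw [zero_smul, add_zero, LinearMap.ker_id]
    rw [this, finrank_bot]
    omega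
  · set κ : K := -(1 + lam * b) / (lam * c) with hκ
    have key : ∀ x : K, x ∈ LinearMap.ker (LinearMap.id + lam • N) →
        x ^ Fintype.card F = κ * x := by
      intro x hx
      rw [LinearMap.mem_ker, LinearMap.add_apply, LinearMap.id_apply, LinearMap.smul_apply,
        hN, smul_eq_mul] at hx
      rw [hκ, div_mul_eq_mul_div, eq_div_iff (mul_ne_zero hlam hc)]
      linear_combination hx
    by_cases hbot : LinearMap.ker (LinearMap.id + lam • N) = ⊥
    · rw [hbot, finrank_bot]; omega
    · obtain ⟨x0, hx0mem, hx00⟩ := (Submodule.ne_bot_iff _).mp hbot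
      have hle : LinearMap.ker (LinearMap.id + lam • N) ≤ span F {x0} := by
        intro y hy
        obtain ⟨d, hd⟩ := pair_dep (key x0 hx0mem) (key y hy) hx00
        rw [Submodule.mem_span_singleton]
        exact ⟨d, hd.symm⟩
      have := Submodule.finrank_mono hle
      rwa [finrank_span_singleton hx00] at this

/-- If `T v` factors as `N ∘ T u` with `T u` injective and all pencil kernels small, then
all the combinations `u + λ • v` have coordinate rank at least 3. -/
lemma rank_ge_of_factor (hK4 : Fintype.card K = Fintype.card F ^ 4) {v u : Fin 4 → K}
    (N : K →ₗ[F] K)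
    (hinj : Function.Injective (Fintype.linearCombination F u))
    (hfac : Fintype.linearCombination F v = N ∘ₗ Fintype.linearCombination F u)
    (hker : ∀ lam : K, finrank F (LinearMap.ker (LinearMap.id + lam • N)) ≤ 1)
    (lam : K) : 3 ≤ finrank F (span F (Set.range (u + lam • v))) := by
  have h4 := finrank_K F K hK4
  set G : K →ₗ[F] K := LinearMap.id + lam • N with hG
  set Tu := Fintype.linearCombination F u with hTu
  have hlin : Fintype.linearCombination F (u + lam • v) = G ∘ₗ Tu := by
    rw [← Fintype.bilinearCombination_apply (S := K) F, map_add, map_smul,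
      Fintype.bilinearCombination_apply, Fintype.bilinearCombination_apply, hfac]
    ext x
    simp only [LinearMap.add_apply, LinearMap.smul_apply, LinearMap.coe_comp,
      Function.comp_apply, hG, LinearMap.id_apply, hTu]
  rw [show span F (Set.range (u + lam • v)) =
      LinearMap.range (Fintype.linearCombination F (u + lam • v)) from
      (Fintype.range_linearCombination F (u + lam • v)).symm, hlin]
  have hkerc : finrank F (LinearMap.ker (G ∘ₗ Tu)) ≤ 1 := by
    rw [LinearMap.ker_comp]
    have hmaple : Submodule.map Tu (Submodule.comap Tu (LinearMap.ker G)) ≤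
        LinearMap.ker G := Submodule.map_comap_le _ _
    have heq := (Submodule.equivMapOfInjective _ hinj
      (Submodule.comap Tu (LinearMap.ker G))).finrank_eq
    rw [heq]
    exact le_trans (Submodule.finrank_mono hmaple) (hker lam)
  have hrn := LinearMap.finrank_range_add_finrank_ker (G ∘ₗ Tu)
  have hdom : finrank F (Fin 4 → F) = 4 := by
    rw [finrank_fintype_fun_eq_card, Fintype.card_fin]
  rw [hdom] at hrn
  omega


lemma Tu_eq (u : Fin 4 → K) (M : (Fin 4 → F) →ₗ[F] K)
    (h : ∀ i, u i = M (Pi.single i 1)) : Fintype.linearCombination F u = M := by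
  classical
  apply (Pi.basisFun F (Fin 4)).ext
  intro i
  rw [Pi.basisFun_apply, Fintype.linearCombination_apply_single, one_smul, h i]

/-- Case of coordinate rank 4. -/
lemma case_rank4 (hK4 : Fintype.card K = Fintype.card F ^ 4)
    (v : Fin 4 → K) (hrk : finrank F (span F (Set.range v)) = 4) :
    ∃ u : Fin 4 → K, ∀ lam : K, 3 ≤ finrank F (span F (Set.range (u + lam • v))) := by
  have h4 := finrank_K F K hK4
  refine ⟨fun i => (v i) ^ (Fintype.card F ^ 3), ?_⟩
  have hq43 : ∀ x : K, (x ^ Fintype.card F ^ 3) ^ Fintype.card F = x := by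
    intro x
    rw [← pow_mul, ← pow_succ, pow_card_K F K hK4]
  have hcomp3 : Fintype.linearCombination F (fun i => (v i) ^ (Fintype.card F ^ 3)) =
      (powQ F K 3) ∘ₗ (Fintype.linearCombination F v) := by
    apply (Pi.basisFun F (Fin 4)).ext
    intro i
    rw [Pi.basisFun_apply, Fintype.linearCombination_apply_single, one_smul,
      LinearMap.comp_apply, Fintype.linearCombination_apply_single, one_smul, powQ_apply]
  have hTvinj : Function.Injective (Fintype.linearCombination F v) := by
    rw [← LinearMap.ker_eq_bot]
    have hrn := LinearMap.finrank_range_add_finrank_ker (Fintype.linearCombination F v)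
    rw [Fintype.range_linearCombination F v, hrk] at hrn
    have hdom : finrank F (Fin 4 → F) = 4 := by
      rw [finrank_fintype_fun_eq_card, Fintype.card_fin]
    rw [hdom] at hrn
    have : finrank F (LinearMap.ker (Fintype.linearCombination F v)) = 0 := by omega
    exact Submodule.finrank_eq_zero.mp this
  have hp3inj : Function.Injective (powQ F K 3) := by
    intro x y hxy
    have := congrArg (fun z : K => z ^ Fintype.card F) hxy
    simpa only [powQ_apply, hq43] using this
  have hinj : Function.Injective
      (Fintype.linearCombination F (fun i => (v i) ^ (Fintype.card F ^ 3))) := by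
    rw [hcomp3, LinearMap.coe_comp]
    exact Function.Injective.comp hp3inj hTvinj
  have hfac : Fintype.linearCombination F v =
      (powQ F K 1) ∘ₗ (Fintype.linearCombination F (fun i => (v i) ^ (Fintype.card F ^ 3))) := by
    rw [hcomp3, ← LinearMap.comp_assoc]
    have hpp : (powQ F K 1) ∘ₗ (powQ F K 3) = LinearMap.id := by
      apply LinearMap.ext
      intro x
      simp only [LinearMap.comp_apply, powQ_apply, LinearMap.id_apply, pow_one]
      exact hq43 x
    rw [hpp, LinearMap.id_comp]
  intro lam
  refine rank_ge_of_factor F K hK4 (powQ F K 1) hinj hfac ?_ lam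
  intro lam'
  refine kerG_le_one F K (powQ F K 1) 1 0 one_ne_zero ?_ lam'
  intro x
  rw [powQ_apply, pow_one, one_mul, zero_mul, add_zero]

/-- Case of coordinate rank 3. -/
lemma case_rank3 (hK4 : Fintype.card K = Fintype.card F ^ 4)
    (v : Fin 4 → K) (hrk : finrank F (span F (Set.range v)) = 3) :
    ∃ u : Fin 4 → K, ∀ lam : K, 3 ≤ finrank F (span F (Set.range (u + lam • v))) := by
  classical
  have h4 := finrank_K F K hK4
  set Tv := Fintype.linearCombination F v with hTvdef
  have hrange : LinearMap.range Tv = span F (Set.range v) :=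
    Fintype.range_linearCombination F v
  obtain ⟨a, ha0, hWk⟩ := exists_trace_ker F K hK4 (span F (Set.range v)) hrk
  set N : K →ₗ[F] K := (LinearMap.mulLeft F a⁻¹) ∘ₗ (wp F K) with hNdef
  have hNapp : ∀ x : K, N x = a⁻¹ * x ^ Fintype.card F + (-a⁻¹) * x := by
    intro x
    simp only [hNdef, LinearMap.comp_apply, wp_apply, LinearMap.mulLeft_apply]
    ring
  have hNrange : LinearMap.range N = span F (Set.range v) := by
    rw [hNdef, LinearMap.range_comp, range_wp F K hK4, hWk]
    ext x
    simp only [Submodule.mem_map, LinearMap.mem_ker, LinearMap.comp_apply,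
      LinearMap.mulLeft_apply]
    constructor
    · rintro ⟨y, hy, rfl⟩
      rw [mul_inv_cancel_left₀ ha0]
      exact hy
    · intro hx
      exact ⟨a * x, hx, by rw [inv_mul_cancel_left₀ ha0]⟩
  have hN1 : N 1 = 0 := by
    rw [hNapp, one_pow, mul_one, mul_one, add_neg_cancel]
  -- kernel of Tv
  have hkerrank : finrank F (LinearMap.ker Tv) = 1 := by
    have hrn := LinearMap.finrank_range_add_finrank_ker Tv
    rw [hrange, hrk] at hrn
    have hdom : finrank F (Fin 4 → F) = 4 := by
      rw [finrank_fintype_fun_eq_card, Fintype.card_fin]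
    rw [hdom] at hrn
    omega
  have hkne : LinearMap.ker Tv ≠ ⊥ := by
    intro h
    rw [h, finrank_bot] at hkerrank
    omega
  obtain ⟨x0, hx0k, hx00⟩ := (Submodule.ne_bot_iff _).mp hkne
  have hkspan : LinearMap.ker Tv = span F {x0} := by
    refine (Submodule.eq_of_le_of_finrank_le ?_ ?_).symm
    · rw [Submodule.span_le, Set.singleton_subset_iff]; exact hx0k
    · rw [hkerrank, finrank_span_singleton hx00]
  obtain ⟨j, hj⟩ : ∃ j, x0 j ≠ 0 := by
    by_contra h
    push_neg at h
    exact hx00 (funext h)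
  set χ : (Fin 4 → F) →ₗ[F] F := (x0 j)⁻¹ • LinearMap.proj j with hχ
  have hχx0 : χ x0 = 1 := by
    simp only [hχ, LinearMap.smul_apply, LinearMap.proj_apply, smul_eq_mul]
    exact inv_mul_cancel₀ hj
  have hTvmem : ∀ x, Tv x ∈ LinearMap.range N := fun x => by
    rw [hNrange, ← hrange]; exact LinearMap.mem_range_self _ x
  obtain ⟨sct, hsct⟩ := LinearMap.exists_rightInverse_of_surjective
    (N.rangeRestrict) (LinearMap.range_rangeRestrict N)
  set Tv' : (Fin 4 → F) →ₗ[F] LinearMap.range N := Tv.codRestrict (LinearMap.range N) hTvmem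
    with hTv'
  set Mt : (Fin 4 → F) →ₗ[F] K := (sct ∘ₗ Tv') + χ.smulRight (1 : K) with hMt
  have hNsct : ∀ w : LinearMap.range N, N (sct w) = (w : K) := by
    intro w
    have := congrArg (fun g => g w) hsct
    simp only [LinearMap.comp_apply, LinearMap.id_apply] at this
    have := congrArg (Subtype.val) this
    rwa [LinearMap.codRestrict_apply] at this
  have hfacM : N ∘ₗ Mt = Tv := by
    apply LinearMap.ext
    intro x
    simp only [hMt, LinearMap.comp_apply, LinearMap.add_apply, LinearMap.smulRight_apply,
      map_add, map_smul, hN1, smul_zero, add_zero, hNsct, hTv', LinearMap.codRestrict_apply]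
  have hTvx0 : Tv x0 = 0 := LinearMap.mem_ker.mp hx0k
  have hTv'x0 : Tv' x0 = 0 := by
    apply Subtype.ext
    rw [LinearMap.codRestrict_apply, hTvx0]
    rfl
  have hMx0 : Mt x0 = 1 := by
    simp only [hMt, LinearMap.add_apply, LinearMap.comp_apply, hTv'x0, map_zero,
      LinearMap.smulRight_apply, hχx0, one_smul, zero_add]
  have hMinj : Function.Injective Mt := by
    rw [← LinearMap.ker_eq_bot, Submodule.eq_bot_iff]
    intro x hx
    rw [LinearMap.mem_ker] at hx
    have hTvx : Tv x = 0 := by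
      rw [← hfacM, LinearMap.comp_apply, hx, map_zero]
    have hxs : x ∈ span F {x0} := by
      rw [← hkspan]
      exact LinearMap.mem_ker.mpr hTvx
    obtain ⟨d, rfl⟩ := Submodule.mem_span_singleton.mp hxs
    rw [map_smul, hMx0] at hx
    have hd : d = 0 := by
      have h1 : algebraMap F K d = 0 := by
        rw [Algebra.algebraMap_eq_smul_one]
        exact hx
      exact (_root_.map_eq_zero (algebraMap F K)).mp h1
    rw [hd, zero_smul]
  set u : Fin 4 → K := fun i => Mt (Pi.single i 1) with hu
  have hTu : Fintype.linearCombination F u = Mt := Tu_eq F K u Mt (fun i => rfl)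
  refine ⟨u, ?_⟩
  intro lam
  refine rank_ge_of_factor F K hK4 N ?_ ?_ ?_ lam
  · rw [hTu]; exact hMinj
  · rw [hTu]; exact hfacM.symm
  · intro lam'
    exact kerG_le_one F K N a⁻¹ (-a⁻¹) (inv_ne_zero ha0) hNapp lam'


lemma one_tau_indep {τ : K} (hτ : τ ∉ Set.range (algebraMap F K)) {c d : F}
    (h : c • (1 : K) + d • τ = 0) : c = 0 ∧ d = 0 := by
  rcases eq_or_ne d 0 with rfl | hd
  · rw [zero_smul, add_zero] at h
    have : algebraMap F K c = 0 := by rw [Algebra.algebraMap_eq_smul_one]; exact h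
    exact ⟨(_root_.map_eq_zero (algebraMap F K)).mp this, rfl⟩
  · exfalso
    apply hτ
    refine ⟨-(d⁻¹ * c), ?_⟩
    have h1 : d • τ = -(c • (1:K)) := eq_neg_of_add_eq_zero_right h
    have h2 : τ = (-(d⁻¹ * c)) • (1:K) := by
      have h3 := congrArg (fun z => d⁻¹ • z) h1
      simp only [inv_smul_smul₀ hd, smul_neg, smul_smul] at h3
      rw [h3, neg_smul]
    rw [Algebra.algebraMap_eq_smul_one]
    exact h2.symm

lemma span4_rank3 (h4 : finrank F K = 4) {τ w1 : K}
    (hτ : τ ∉ Set.range (algebraMap F K))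
    (hw1 : w1 ∉ span F (Set.range ![(1:K), τ, τ * τ])) (μ : K) :
    3 ≤ finrank F (span F (Set.range ![μ, w1 + μ * τ, (1:K), τ])) := by
  by_contra hcon
  push_neg at hcon
  set S := span F (Set.range ![μ, w1 + μ * τ, (1:K), τ]) with hS
  have hle2 : finrank F S ≤ 2 := by omega
  have h1S : (1:K) ∈ S := Submodule.subset_span ⟨2, rfl⟩
  have hτS : τ ∈ S := Submodule.subset_span ⟨3, rfl⟩
  have hμS : μ ∈ S := Submodule.subset_span ⟨0, rfl⟩
  have hwS : w1 + μ * τ ∈ S := Submodule.subset_span ⟨1, rfl⟩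
  have hpair_li : LinearIndependent F ![τ, (1:K)] := by
    rw [linearIndependent_fin2]
    constructor
    · simp
    · intro a ha
      apply hτ
      refine ⟨a, ?_⟩
      rw [Algebra.algebraMap_eq_smul_one]
      simpa using ha
  have hpair_rank : finrank F (span F (Set.range ![τ, (1:K)])) = 2 := by
    rw [finrank_span_eq_card hpair_li, Fintype.card_fin]
  have hsub : span F (Set.range ![τ, (1:K)]) ≤ S := by
    rw [Submodule.span_le]
    rintro z ⟨i, rfl⟩
    fin_cases i
    · exact hτS
    · exact h1S
  have heq : span F (Set.range ![τ, (1:K)]) = S :=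
    Submodule.eq_of_le_of_finrank_le hsub (by rw [hpair_rank]; exact hle2)
  have hμmem : μ ∈ span F (Set.range ![τ, (1:K)]) := by rw [heq]; exact hμS
  have hwmem : w1 + μ * τ ∈ span F (Set.range ![τ, (1:K)]) := by rw [heq]; exact hwS
  rw [mem_span_range_iff_exists_fun] at hμmem hwmem
  obtain ⟨cμ, hcd⟩ := hμmem
  obtain ⟨cw, hcw⟩ := hwmem
  rw [Fin.sum_univ_two] at hcd hcw
  simp only [Matrix.cons_val_zero, Matrix.cons_val_one, Matrix.head_cons] at hcd hcw
  apply hw1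
  have hw1eq : w1 = (cw 1) • (1:K) + (cw 0 - cμ 1) • τ + (-(cμ 0)) • (τ * τ) := by
    simp only [Algebra.smul_def, map_sub, map_neg] at hcd hcw ⊢
    linear_combination τ * hcd - hcw
  rw [hw1eq]
  refine add_mem (add_mem ?_ ?_) ?_
  · exact Submodule.smul_mem _ _ (Submodule.subset_span ⟨0, rfl⟩)
  · exact Submodule.smul_mem _ _ (Submodule.subset_span ⟨1, rfl⟩)
  · exact Submodule.smul_mem _ _ (Submodule.subset_span ⟨2, rfl⟩)

/-- Case of coordinate rank 2. -/
lemma case_rank2 (hK4 : Fintype.card K = Fintype.card F ^ 4)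
    (v : Fin 4 → K) (hrk : finrank F (span F (Set.range v)) = 2) :
    ∃ u : Fin 4 → K, ∀ lam : K, 3 ≤ finrank F (span F (Set.range (u + lam • v))) := by
  classical
  have h4 := finrank_K F K hK4
  set V2 := span F (Set.range v) with hV2
  let B2 : Basis (Fin 2) F V2 := finBasisOfFinrankEq F _ hrk
  set g : K := (B2 0 : K) with hg
  set h : K := (B2 1 : K) with hh
  have hg0 : g ≠ 0 := by
    intro hgz
    exact B2.ne_zero 0 (Subtype.ext hgz)
  set τ : K := g⁻¹ * h with hτdef
  have hτ : τ ∉ Set.range (algebraMap F K) := by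
    rintro ⟨c, hc⟩
    have hhc : h = c • g := by
      have : g * τ = g * algebraMap F K c := by rw [hc]
      rw [hτdef, mul_inv_cancel_left₀ hg0] at this
      rw [this, Algebra.smul_def, mul_comm]
    have hB : B2 1 = c • B2 0 := Subtype.ext (by
      rw [Submodule.coe_smul, ← hg, ← hh, hhc])
    have h1 := congrArg (fun z => B2.repr z 1) hB
    simp only [Basis.repr_self, map_smul, Finsupp.smul_apply, smul_eq_mul] at h1
    rw [Finsupp.single_eq_same, Finsupp.single_eq_of_ne (by decide)] at h1
    simp at h1
  -- coordinates
  have hvmem : ∀ i, v i ∈ V2 := fun i => Submodule.subset_span (Set.mem_range_self i)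
  set v' : Fin 4 → K := fun i => g⁻¹ * v i with hv'
  set Tv' := Fintype.linearCombination F v' with hTv'def
  have hrangeTv' : LinearMap.range Tv' = span F (Set.range v') :=
    Fintype.range_linearCombination F v'
  have hrange_eq : span F (Set.range v') = Submodule.map (LinearMap.mulLeft F g⁻¹) V2 := by
    have himg : Set.range v' = (⇑(LinearMap.mulLeft F g⁻¹)) '' (Set.range v) := by
      ext z
      simp only [Set.mem_range, Set.mem_image, LinearMap.mulLeft_apply, hv']
      constructor
      · rintro ⟨i, rfl⟩; exact ⟨v i, ⟨i, rfl⟩, rfl⟩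
      · rintro ⟨y, ⟨i, rfl⟩, rfl⟩; exact ⟨i, rfl⟩
    rw [himg, ← Submodule.map_span]
  have h1mem : (1 : K) ∈ LinearMap.range Tv' := by
    rw [hrangeTv', hrange_eq]
    exact ⟨g, hg ▸ SetLike.coe_mem (B2 0), by rw [LinearMap.mulLeft_apply, inv_mul_cancel₀ hg0]⟩
  have hτmem : τ ∈ LinearMap.range Tv' := by
    rw [hrangeTv', hrange_eq]
    exact ⟨h, hh ▸ SetLike.coe_mem (B2 1), by rw [LinearMap.mulLeft_apply]⟩
  have hrkv' : finrank F (span F (Set.range v')) = 2 := by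
    rw [hrange_eq]
    have hinj : Function.Injective (LinearMap.mulLeft F g⁻¹) := by
      intro x y hxy
      simp only [LinearMap.mulLeft_apply] at hxy
      exact mul_left_cancel₀ (inv_ne_zero hg0) hxy
    rw [← (Submodule.equivMapOfInjective _ hinj V2).finrank_eq]
    exact hrk
  have hkerrank : finrank F (LinearMap.ker Tv') = 2 := by
    have hrn := LinearMap.finrank_range_add_finrank_ker Tv'
    rw [hrangeTv', hrkv'] at hrn
    have hdom : finrank F (Fin 4 → F) = 4 := by
      rw [finrank_fintype_fun_eq_card, Fintype.card_fin]
    rw [hdom] at hrn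
    omega
  let kb : Basis (Fin 2) F (LinearMap.ker Tv') := finBasisOfFinrankEq F _ hkerrank
  obtain ⟨X0, hX0⟩ := h1mem
  obtain ⟨X1, hX1⟩ := hτmem
  set Z0 : Fin 4 → F := ↑(kb 0) with hZ0
  set Z1 : Fin 4 → F := ↑(kb 1) with hZ1
  have hTZ0 : Tv' Z0 = 0 := LinearMap.mem_ker.mp (kb 0).2
  have hTZ1 : Tv' Z1 = 0 := LinearMap.mem_ker.mp (kb 1).2
  set cb' : Fin 4 → (Fin 4 → F) := ![X0, X1, Z0, Z1] with hcb'
  have hc0 : cb' 0 = X0 := rfl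
  have hc1 : cb' 1 = X1 := rfl
  have hc2 : cb' 2 = Z0 := rfl
  have hc3 : cb' 3 = Z1 := rfl
  have hindep : LinearIndependent F cb' := by
    rw [Fintype.linearIndependent_iff]
    intro gc hgc
    rw [Fin.sum_univ_four, hc0, hc1, hc2, hc3] at hgc
    have hT := congrArg Tv' hgc
    rw [map_zero, map_add, map_add, map_add, map_smul, map_smul, map_smul, map_smul,
      hX0, hX1, hTZ0, hTZ1, smul_zero, smul_zero, add_zero, add_zero] at hT
    obtain ⟨hgc0, hgc1⟩ := one_tau_indep F K hτ hT
    rw [hgc0, hgc1, zero_smul, zero_smul, zero_add, zero_add] at hgc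
    have hker2 : gc 2 • kb 0 + gc 3 • kb 1 = 0 := by
      apply Subtype.ext
      rw [Submodule.coe_add, SetLike.val_smul, SetLike.val_smul, ZeroMemClass.coe_zero]
      exact hgc
    have hkbli := Fintype.linearIndependent_iff.mp kb.linearIndependent
    have hzz := hkbli ![gc 2, gc 3] (by rw [Fin.sum_univ_two]; exact hker2)
    intro i
    fin_cases i
    · exact hgc0
    · exact hgc1
    · exact hzz 0
    · exact hzz 1
  have hcard : Fintype.card (Fin 4) = finrank F (Fin 4 → F) := by simp
  let cb : Basis (Fin 4) F (Fin 4 → F) := basisOfLinearIndependentOfCardEqFinrank hindep hcard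
  have hcbeq : ∀ i, cb i = cb' i := fun i => by
    rw [coe_basisOfLinearIndependentOfCardEqFinrank]
  -- choice of w1
  set SP3 := span F (Set.range ![(1:K), τ, τ * τ]) with hSP3
  have hSP3ne : SP3 ≠ ⊤ := by
    intro htop
    have hle3 : finrank F SP3 ≤ 3 := by
      refine le_trans (finrank_span_le_card _) ?_
      rw [Set.toFinset_range]
      exact le_trans (Finset.card_image_le) (by simp)
    rw [htop, finrank_top, h4] at hle3
    omega
  obtain ⟨w1, -, hw1⟩ := SetLike.exists_of_lt hSP3ne.lt_top
  set Mu : (Fin 4 → F) →ₗ[F] K := cb.constr F ![0, w1, 1, τ] with hMu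
  set u : Fin 4 → K := fun i => Mu (Pi.single i 1) with hu
  have hTu : Fintype.linearCombination F u = Mu := Tu_eq F K u Mu (fun i => rfl)
  refine ⟨u, ?_⟩
  intro lam
  -- rewrite v in terms of v'
  have hvv' : u + lam • v = u + (lam * g) • v' := by
    funext i
    simp only [Pi.add_apply, Pi.smul_apply, smul_eq_mul, hv']
    rw [mul_assoc, mul_inv_cancel_left₀ hg0]
  rw [hvv']
  set μ : K := lam * g with hμ
  -- compute the span
  have hspan : span F (Set.range (u + μ • v')) =
      span F (Set.range ![μ, w1 + μ * τ, (1:K), τ]) := by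
    have hTcomb : Fintype.linearCombination F (u + μ • v') = Mu + μ • Tv' := by
      rw [← Fintype.bilinearCombination_apply (S := K) F, map_add, map_smul,
          Fintype.bilinearCombination_apply, Fintype.bilinearCombination_apply, hTu, hTv'def]
    rw [show span F (Set.range (u + μ • v')) =
        LinearMap.range (Fintype.linearCombination F (u + μ • v')) from
        (Fintype.range_linearCombination F _).symm, hTcomb]
    rw [LinearMap.range_eq_map, ← cb.span_eq, Submodule.map_span, ← Set.range_comp]
    congr 1
    have e0 : Mu (cb 0) + μ * Tv' (cb 0) = μ := by
      rw [show Mu (cb 0) = ![0, w1, 1, τ] 0 from cb.constr_basis F _ 0, hcbeq 0, hc0, hX0]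
      simp
    have e1 : Mu (cb 1) + μ * Tv' (cb 1) = w1 + μ * τ := by
      rw [show Mu (cb 1) = ![0, w1, 1, τ] 1 from cb.constr_basis F _ 1, hcbeq 1, hc1, hX1]
      simp
    have e2 : Mu (cb 2) + μ * Tv' (cb 2) = 1 := by
      rw [show Mu (cb 2) = ![0, w1, 1, τ] 2 from cb.constr_basis F _ 2, hcbeq 2, hc2, hTZ0]
      simp
    have e3 : Mu (cb 3) + μ * Tv' (cb 3) = τ := by
      rw [show Mu (cb 3) = ![0, w1, 1, τ] 3 from cb.constr_basis F _ 3, hcbeq 3, hc3, hTZ1]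
      simp
    have hfun : ((Mu + μ • Tv') ∘ ⇑cb) = ![μ, w1 + μ * τ, (1:K), τ] := by
      funext i
      simp only [Function.comp_apply, LinearMap.add_apply, LinearMap.smul_apply, smul_eq_mul]
      fin_cases i
      · exact e0
      · exact e1
      · exact e2
      · exact e3
    rw [hfun]
  rw [hspan]
  exact span4_rank3 F K h4 hτ hw1 μ


/-- Core lemma: for every vector of coordinate rank at least `2` there is a direction `u`
such that all points `u + λ•v` have coordinate rank at least `3`. -/
lemma core (hK4 : Fintype.card K = Fintype.card F ^ 4) (v : Fin 4 → K)
    (hrk : 2 ≤ finrank F (span F (Set.range v))) :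
    ∃ u : Fin 4 → K, ∀ lam : K, 3 ≤ finrank F (span F (Set.range (u + lam • v))) := by
  have h4 := finrank_K F K hK4
  have hub : finrank F (span F (Set.range v)) ≤ 4 := by
    have := Submodule.finrank_le (span F (Set.range v))
    omega
  have hcases : finrank F (span F (Set.range v)) = 2 ∨
      finrank F (span F (Set.range v)) = 3 ∨ finrank F (span F (Set.range v)) = 4 := by omega
  rcases hcases with h | h | h
  · exact case_rank2 F K hK4 v h
  · exact case_rank3 F K hK4 v h
  · exact case_rank4 F K hK4 v h

end NR4

open NR4

/-- No `F_q`-linear set of rank `4` in `PG(2, q^4)` is `1`-saturating: there is a point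
lying on no line spanned by two distinct points of `L_U`. -/
theorem no_rank_four_one_saturating (q : ℕ) (hq : IsPrimePow q) (F K : Type*)
    [Field F] [Field K] [Fintype F] [Fintype K] [Algebra F K]
    (hF : Fintype.card F = q) (hK : Fintype.card K = q ^ 4)
    (U : Submodule F (Fin 3 → K)) (hU : Module.finrank F ↥U = 4) :
    ∃ P : Projectivization K (Fin 3 → K),
      ¬ ∃ Q R : Projectivization K (Fin 3 → K),
        Q ∈ linSet F K U ∧ R ∈ linSet F K U ∧ Q ≠ R ∧
          P.submodule ≤ Q.submodule ⊔ R.submodule := by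
  classical
  have hK4 : Fintype.card K = Fintype.card F ^ 4 := by rw [hF, hK]
  by_cases hspan : Submodule.span K (U : Set (Fin 3 → K)) = ⊤
  · -- main case: U spans the plane over K
    let bU : Basis (Fin 4) F U := finBasisOfFinrankEq F U hU
    set b : Fin 4 → (Fin 3 → K) := fun i => (bU i : Fin 3 → K) with hb
    set Pi4 : (Fin 4 → K) →ₗ[K] (Fin 3 → K) := Fintype.linearCombination K b with hPi
    have hmemspan : ∀ s, s ∈ U → s ∈ Submodule.span K (Set.range b) := by
      intro s hsU
      have hrepr : ∑ i, (bU.repr ⟨s, hsU⟩ i) • bU i = (⟨s, hsU⟩ : U) := bU.sum_repr _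
      have hcoe : ∑ i, (bU.repr ⟨s, hsU⟩ i) • b i = s := by
        have := congrArg (U.subtype) hrepr
        rwa [map_sum] at this
      rw [← hcoe]
      refine Submodule.sum_mem _ fun i _ => ?_
      rw [← algebraMap_smul K (bU.repr ⟨s, hsU⟩ i) (b i)]
      exact Submodule.smul_mem _ _ (Submodule.subset_span ⟨i, rfl⟩)
    have hRange : LinearMap.range Pi4 = ⊤ := by
      rw [hPi, Fintype.range_linearCombination K b, eq_top_iff, ← hspan,
        Submodule.span_le]
      intro s hsU
      exact hmemspan s hsU
    have hV3 : finrank K (Fin 3 → K) = 3 := by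
      rw [finrank_fintype_fun_eq_card, Fintype.card_fin]
    have hkerrank : finrank K (LinearMap.ker Pi4) = 1 := by
      have hrn := LinearMap.finrank_range_add_finrank_ker Pi4
      rw [hRange, finrank_top, hV3, finrank_fintype_fun_eq_card, Fintype.card_fin] at hrn
      omega
    have hkne : LinearMap.ker Pi4 ≠ ⊥ := by
      intro h
      rw [h, finrank_bot] at hkerrank
      omega
    obtain ⟨vstar, hvmem, hv0⟩ := (Submodule.ne_bot_iff _).mp hkne
    have hkerspan : LinearMap.ker Pi4 = Submodule.span K {vstar} := by
      refine (Submodule.eq_of_le_of_finrank_le ?_ ?_).symm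
      · rw [Submodule.span_le, Set.singleton_subset_iff]; exact hvmem
      · rw [hkerrank, finrank_span_singleton hv0]
    -- the kernel vector has coordinate rank at least 2
    have hrkv : 2 ≤ finrank F (span F (Set.range vstar)) := by
      by_contra hcon
      push_neg at hcon
      have hle1 : finrank F (span F (Set.range vstar)) ≤ 1 := by omega
      obtain ⟨i0, hi0⟩ : ∃ i, vstar i ≠ 0 := by
        by_contra hforall
        push_neg at hforall
        exact hv0 (funext hforall)
      set gk : K := vstar i0 with hgk
      have heqsp : span F {gk} = span F (Set.range vstar) := by
        refine Submodule.eq_of_le_of_finrank_le ?_ ?_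
        · rw [Submodule.span_le, Set.singleton_subset_iff]
          exact Submodule.subset_span ⟨i0, rfl⟩
        · rw [finrank_span_singleton hi0]
          exact hle1
      have hcoord : ∀ i, ∃ c : F, vstar i = c • gk := by
        intro i
        have hmem : vstar i ∈ span F {gk} := by
          rw [heqsp]; exact Submodule.subset_span ⟨i, rfl⟩
        obtain ⟨c, hc⟩ := Submodule.mem_span_singleton.mp hmem
        exact ⟨c, hc.symm⟩
      choose xc hxc using hcoord
      have h0 : ∑ i, vstar i • b i = 0 := by
        have := LinearMap.mem_ker.mp hvmem
        rwa [hPi, Fintype.linearCombination_apply] at this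
      have h0' : gk • (∑ i, xc i • b i) = (0 : Fin 3 → K) := by
        rw [Finset.smul_sum, ← h0]
        refine Finset.sum_congr rfl fun i _ => ?_
        rw [hxc i, smul_assoc, smul_comm]
      have hsum0 : (∑ i, xc i • b i) = (0 : Fin 3 → K) := by
        rcases smul_eq_zero.mp h0' with h | h
        · exact absurd h hi0
        · exact h
      have hsumU : (∑ i, xc i • bU i) = (0 : U) := by
        apply Subtype.ext
        calc (↑(∑ i, xc i • bU i) : Fin 3 → K) = ∑ i, xc i • b i := by simp [hb]
        _ = 0 := hsum0
      have hxc0 := Fintype.linearIndependent_iff.mp bU.linearIndependent xc hsumU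
      apply hv0
      funext i
      rw [hxc i, hxc0 i, zero_smul]
      rfl
    obtain ⟨u, hu⟩ := core F K hK4 vstar hrkv
    set w : Fin 3 → K := Pi4 u with hw
    have hw0 : w ≠ 0 := by
      intro hwz
      have humem : u ∈ LinearMap.ker Pi4 := LinearMap.mem_ker.mpr hwz
      rw [hkerspan] at humem
      obtain ⟨c, hc⟩ := Submodule.mem_span_singleton.mp humem
      have h3 := hu (-c)
      have hzero : u + (-c) • vstar = 0 := by
        rw [← hc, neg_smul, add_neg_cancel]
      rw [hzero] at h3
      have : span F (Set.range (0 : Fin 4 → K)) = ⊥ := by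
        rw [Set.range_zero, Submodule.span_singleton_eq_bot.mpr rfl]
      rw [this, finrank_bot] at h3
      omega
    refine ⟨Projectivization.mk K w hw0, ?_⟩
    rintro ⟨Q, R, hQ, hR, hne, hle⟩
    obtain ⟨s, hs0, hsU, rfl⟩ := hQ
    obtain ⟨t, ht0, htU, rfl⟩ := hR
    rw [Projectivization.submodule_mk, Projectivization.submodule_mk,
      Projectivization.submodule_mk] at hle
    have hwmem : w ∈ Submodule.span K {s} ⊔ Submodule.span K {t} :=
      hle (Submodule.mem_span_singleton_self w)
    obtain ⟨as, hasmem, bt, hbtmem, heq⟩ := Submodule.mem_sup.mp hwmem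
    obtain ⟨α, rfl⟩ := Submodule.mem_span_singleton.mp hasmem
    obtain ⟨β, rfl⟩ := Submodule.mem_span_singleton.mp hbtmem
    -- coordinates of s and t
    set xs : Fin 4 → F := fun i => bU.repr ⟨s, hsU⟩ i with hxs
    set ys : Fin 4 → F := fun i => bU.repr ⟨t, htU⟩ i with hys
    set xhat : Fin 4 → K := fun i => algebraMap F K (xs i) with hxhat
    set yhat : Fin 4 → K := fun i => algebraMap F K (ys i) with hyhat
    have hPis : Pi4 xhat = s := by
      rw [hPi, Fintype.linearCombination_apply]
      have hrepr : ∑ i, (bU.repr ⟨s, hsU⟩ i) • bU i = (⟨s, hsU⟩ : U) := bU.sum_repr _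
      have hco := congrArg (fun z : U => (z : Fin 3 → K)) hrepr
      calc ∑ i, xhat i • b i = ∑ i, xs i • b i := by
            refine Finset.sum_congr rfl fun i _ => ?_
            simp only [hxhat]
            exact algebraMap_smul K (xs i) (b i)
      _ = s := by simpa only [Submodule.coe_sum, Submodule.coe_smul] using hco
    have hPit : Pi4 yhat = t := by
      rw [hPi, Fintype.linearCombination_apply]
      have hrepr : ∑ i, (bU.repr ⟨t, htU⟩ i) • bU i = (⟨t, htU⟩ : U) := bU.sum_repr _
      have hco := congrArg (fun z : U => (z : Fin 3 → K)) hrepr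
      calc ∑ i, yhat i • b i = ∑ i, ys i • b i := by
            refine Finset.sum_congr rfl fun i _ => ?_
            simp only [hyhat]
            exact algebraMap_smul K (ys i) (b i)
      _ = t := by simpa only [Submodule.coe_sum, Submodule.coe_smul] using hco
    have hker : Pi4 (u - α • xhat - β • yhat) = 0 := by
      rw [map_sub, map_sub, map_smul, map_smul, hPis, hPit, ← hw, ← heq]
      abel
    have hmem2 : u - α • xhat - β • yhat ∈ LinearMap.ker Pi4 := LinearMap.mem_ker.mpr hker
    rw [hkerspan] at hmem2
    obtain ⟨c, hc⟩ := Submodule.mem_span_singleton.mp hmem2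
    have hcomb : u + (-c) • vstar = α • xhat + β • yhat := by
      rw [neg_smul, hc]
      abel
    have h3 := hu (-c)
    rw [hcomb] at h3
    have hle2 : span F (Set.range (α • xhat + β • yhat)) ≤ span F {α, β} := by
      rw [Submodule.span_le]
      rintro z ⟨i, rfl⟩
      have hzi : (α • xhat + β • yhat) i = xs i • α + ys i • β := by
        simp only [Pi.add_apply, Pi.smul_apply, smul_eq_mul, hxhat, hyhat]
        simp only [Algebra.smul_def]
        ring
      rw [hzi]
      refine add_mem ?_ ?_
      · exact Submodule.smul_mem _ _ (Submodule.subset_span (Set.mem_insert _ _))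
      · exact Submodule.smul_mem _ _
          (Submodule.subset_span (Set.mem_insert_of_mem _ (Set.mem_singleton _)))
    have hrk2 : finrank F (span F (Set.range (α • xhat + β • yhat))) ≤ 2 := by
      refine le_trans (Submodule.finrank_mono hle2) ?_
      refine le_trans (finrank_span_le_card _) ?_
      rw [Set.toFinset_insert, Set.toFinset_singleton]
      exact le_trans (Finset.card_insert_le _ _) (by simp)
    omega
  · -- degenerate case: U does not span over K
    have hlt : Submodule.span K (U : Set (Fin 3 → K)) < ⊤ :=
      lt_of_le_of_ne le_top hspan
    obtain ⟨w, -, hw⟩ := SetLike.exists_of_lt hlt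
    have hw0 : w ≠ 0 := by
      rintro rfl
      exact hw (Submodule.zero_mem _)
    refine ⟨Projectivization.mk K w hw0, ?_⟩
    rintro ⟨Q, R, hQ, hR, hne, hle⟩
    obtain ⟨s, hs0, hsU, rfl⟩ := hQ
    obtain ⟨t, ht0, htU, rfl⟩ := hR
    apply hw
    rw [Projectivization.submodule_mk, Projectivization.submodule_mk,
      Projectivization.submodule_mk] at hle
    have hwmem : w ∈ Submodule.span K {s} ⊔ Submodule.span K {t} :=
      hle (Submodule.mem_span_singleton_self w)
    have hsup : Submodule.span K {s} ⊔ Submodule.span K {t} ≤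
        Submodule.span K (U : Set (Fin 3 → K)) := by
      refine sup_le ?_ ?_ <;> rw [Submodule.span_le, Set.singleton_subset_iff]
      · exact Submodule.subset_span hsU
      · exact Submodule.subset_span htU
    exact hsup hwmem
end
end

section
/- Suppose L_U is an F_q-linear set of rank 4 in PG(2,q^4) which is 1-saturating. Then L_U is scattered, and either every line of PG(2,q^4) has weight at most 2 in L_U, or there is exactly one line of weight 3 in L_U and all other lines have weight at most 2. -/
noncomputable section

open Module Submodule

section Helpers

lemma exists_not_mem_of_ne_top' {R M : Type*} [Semiring R] [AddCommMonoid M] [Module R M]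
    {W : Submodule R M} (h : W ≠ ⊤) : ∃ v, v ∉ W := by
  by_contra h'
  push_neg at h'
  exact h (eq_top_iff.2 fun x _ => h' x)

variable {F K : Type*} [Field F] [Field K] [Fintype F] [Fintype K] [Algebra F K]

/-- If `U` is contained in a `K`-subspace of dimension at most `2`, then `L_U` is not
`1`-saturating. -/
lemma oneSat_not_le {U : Submodule F (Fin 3 → K)} (hsat : OneSat F K U)
    {W : Submodule K (Fin 3 → K)} (hW : finrank K ↥W ≤ 2)
    (hUW : U ≤ W.restrictScalars F) : False := by
  have htop : W ≠ ⊤ := by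
    intro h
    rw [h, finrank_top, Module.finrank_fin_fun] at hW
    omega
  obtain ⟨v, hv⟩ := exists_not_mem_of_ne_top' htop
  have hv0 : v ≠ 0 := fun h => hv (h ▸ W.zero_mem)
  obtain ⟨Q, R, hQ, hR, -, hle⟩ := hsat (Projectivization.mk K v hv0)
  obtain ⟨u, hu0, huU, rfl⟩ := hQ
  obtain ⟨u', hu0', huU', rfl⟩ := hR
  apply hv
  have hvmem : v ∈ (Projectivization.mk K v hv0).submodule := by
    rw [Projectivization.submodule_mk]
    exact mem_span_singleton_self v
  have h2 := hle hvmem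
  rw [Projectivization.submodule_mk, Projectivization.submodule_mk] at h2
  have h1' : (span K {u} : Submodule K (Fin 3 → K)) ≤ W :=
    span_le.2 (Set.singleton_subset_iff.2 ((W.restrictScalars_mem F u).1 (hUW huU)))
  have h2' : (span K {u'} : Submodule K (Fin 3 → K)) ≤ W :=
    span_le.2 (Set.singleton_subset_iff.2 ((W.restrictScalars_mem F u').1 (hUW huU')))
  exact (sup_le h1' h2') h2

/-- A space of dimension at most two is spanned by two of its vectors. -/
lemma exists_span_pair {V : Type*} [AddCommGroup V] [Module F V] (W : Submodule F V)
    [Module.Finite F ↥W] (hW : finrank F ↥W ≤ 2) :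
    ∃ y₁ y₂, y₁ ∈ W ∧ y₂ ∈ W ∧ W ≤ span F {y₁, y₂} := by
  set n := finrank F ↥W with hn
  let bb := finBasis F ↥W
  by_cases h0 : 0 < n
  · by_cases h1 : 1 < n
    · refine ⟨(bb ⟨0, h0⟩ : V), (bb ⟨1, h1⟩ : V), (bb ⟨0, h0⟩).2, (bb ⟨1, h1⟩).2, ?_⟩
      intro w hw
      have hrep := bb.sum_repr ⟨w, hw⟩
      have hw' : w = ∑ i, bb.repr ⟨w, hw⟩ i • (bb i : V) := by
        have := congrArg (Subtype.val) hrep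
        rw [Submodule.coe_sum] at this
        simp only [Submodule.coe_smul] at this
        exact this.symm
      rw [hw']
      refine Submodule.sum_mem _ fun i _ => Submodule.smul_mem _ _ (Submodule.subset_span ?_)
      have hi : (i : ℕ) = 0 ∨ (i : ℕ) = 1 := by omega
      rcases hi with hi | hi
      · have : i = ⟨0, h0⟩ := Fin.ext (by simp [hi])
        rw [this]
        exact Set.mem_insert _ _
      · have : i = ⟨1, h1⟩ := Fin.ext (by simp [hi])
        rw [this]
        exact Set.mem_insert_of_mem _ rfl
    · refine ⟨(bb ⟨0, h0⟩ : V), 0, (bb ⟨0, h0⟩).2, W.zero_mem, ?_⟩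
      intro w hw
      have hrep := bb.sum_repr ⟨w, hw⟩
      have hw' : w = ∑ i, bb.repr ⟨w, hw⟩ i • (bb i : V) := by
        have := congrArg (Subtype.val) hrep
        rw [Submodule.coe_sum] at this
        simp only [Submodule.coe_smul] at this
        exact this.symm
      rw [hw']
      refine Submodule.sum_mem _ fun i _ => Submodule.smul_mem _ _ (Submodule.subset_span ?_)
      have : i = ⟨0, h0⟩ := Fin.ext (by omega)
      rw [this]
      exact Set.mem_insert _ _
  · refine ⟨0, 0, W.zero_mem, W.zero_mem, ?_⟩
    intro w hw
    have hbot : finrank F ↥W = 0 := by omega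
    have : W = ⊥ := Submodule.finrank_eq_zero.1 hbot
    rw [this] at hw
    simp only [Submodule.mem_bot] at hw
    rw [hw]
    exact Submodule.zero_mem _

set_option maxHeartbeats 2000000 in
/-- The key lemma: a point of a `1`-saturating linear set of rank `4` in `PG(2,q^4)` has
weight at most `1`. -/
lemma point_weight_le_one {q : ℕ} (hq : IsPrimePow q)
    (hF : Fintype.card F = q) (hK : Fintype.card K = q ^ 4)
    (U : Submodule F (Fin 3 → K)) (hU : finrank F ↥U = 4) (hsat : OneSat F K U)
    (x : Fin 3 → K) (hx0 : x ≠ 0) (hxU : x ∈ U) :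
    finrank F ↥(U ⊓ (span K ({x} : Set (Fin 3 → K))).restrictScalars F) ≤ 1 := by
  by_contra hge
  push_neg at hge
  set X : Submodule F (Fin 3 → K) := U ⊓ (span K ({x} : Set (Fin 3 → K))).restrictScalars F
    with hXdef
  -- the degree of K over F is 4
  have hq1 : 2 ≤ q := hq.two_le
  have hcard : Fintype.card K = Fintype.card F ^ finrank F K := card_eq_pow_finrank
  rw [hF, hK] at hcard
  have hFK : finrank F K = 4 := Nat.pow_right_injective hq1 hcard.symm
  -- the subspace of coefficients of x
  let φ : K →ₗ[F] (Fin 3 → K) := (LinearMap.toSpanSingleton K (Fin 3 → K) x).restrictScalars F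
  have hφ : ∀ c : K, φ c = c • x := fun c => rfl
  have hφinj : Function.Injective φ := by
    intro c d hcd
    have h : (c - d) • x = 0 := by
      rw [sub_smul, sub_eq_zero]
      exact hcd
    rcases smul_eq_zero.1 h with h | h
    · exact sub_eq_zero.1 h
    · exact absurd h hx0
  set A : Submodule F K := Submodule.comap φ U with hAdef
  have hmemA : ∀ c : K, c ∈ A ↔ c • x ∈ U := fun c => Iff.rfl
  have hmapA : A.map φ = X := by
    ext y
    constructor
    · rintro ⟨c, hc, rfl⟩
      exact ⟨hc, mem_span_singleton.2 ⟨c, rfl⟩⟩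
    · rintro ⟨hyU, hyX⟩
      obtain ⟨c, rfl⟩ := mem_span_singleton.1 hyX
      exact ⟨c, hyU, rfl⟩
  have hArank : finrank F ↥A = finrank F ↥X := by
    rw [← hmapA]
    exact (Submodule.equivMapOfInjective φ hφinj A).finrank_eq
  have h1A : (1 : K) ∈ A := by
    show (1 : K) • x ∈ U
    rw [one_smul]
    exact hxU
  obtain ⟨a, haA, ha1⟩ : ∃ a ∈ A, a ∉ span F {(1 : K)} := by
    by_contra h
    push_neg at h
    have hle : A ≤ span F {(1 : K)} := h
    have hh := Submodule.finrank_mono hle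
    rw [finrank_span_singleton (one_ne_zero : (1 : K) ≠ 0)] at hh
    omega
  -- the quotient by the K-line through x
  set π : (Fin 3 → K) →ₗ[F]
      ((Fin 3 → K) ⧸ (span K ({x} : Set (Fin 3 → K))).restrictScalars F) :=
    Submodule.mkQ _ with hπdef
  set Ubar := U.map π with hUbardef
  have hkerπ : LinearMap.ker π = (span K ({x} : Set (Fin 3 → K))).restrictScalars F :=
    Submodule.ker_mkQ _
  set f : ↥U →ₗ[F] ((Fin 3 → K) ⧸ (span K ({x} : Set (Fin 3 → K))).restrictScalars F) :=
    π ∘ₗ U.subtype with hfdef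
  have hrange : LinearMap.range f = Ubar := by
    rw [hfdef, LinearMap.range_comp, Submodule.range_subtype]
  have hker : LinearMap.ker f = X.comap U.subtype := by
    ext u
    constructor
    · intro hu
      have h1 : π (u : Fin 3 → K) = 0 := hu
      have h2 : (u : Fin 3 → K) ∈ (span K ({x} : Set (Fin 3 → K))).restrictScalars F := by
        rw [← hkerπ]
        exact h1
      exact ⟨u.2, h2⟩
    · intro hu
      show π (u : Fin 3 → K) = 0
      rw [← LinearMap.mem_ker, hkerπ]
      exact hu.2
  have hrn := LinearMap.finrank_range_add_finrank_ker f
  rw [hrange, hker] at hrn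
  have hXrank' : finrank F ↥(X.comap U.subtype) = finrank F ↥X :=
    (Submodule.comapSubtypeEquivOfLe inf_le_left).finrank_eq
  rw [hXrank', hU] at hrn
  have hUbar2 : finrank F ↥Ubar ≤ 2 := by omega
  obtain ⟨y₁, y₂, hy₁, hy₂, hyspan⟩ := exists_span_pair Ubar hUbar2
  obtain ⟨b₁, hb₁U, hb₁⟩ := Submodule.mem_map.1 hy₁
  obtain ⟨b₂, hb₂U, hb₂⟩ := Submodule.mem_map.1 hy₂
  -- the representation of elements of U
  have hrep : ∀ u ∈ U, ∃ (c : K) (e₁ e₂ : F), c ∈ A ∧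
      u = c • x + e₁ • b₁ + e₂ • b₂ := by
    intro u hu
    have h1 : π u ∈ Ubar := Submodule.mem_map_of_mem hu
    have h2 := hyspan h1
    obtain ⟨e₁, e₂, he⟩ := Submodule.mem_span_pair.1 h2
    have h3 : π (u - e₁ • b₁ - e₂ • b₂) = 0 := by
      rw [map_sub, map_sub, map_smul, map_smul, hb₁, hb₂, ← he]
      abel
    have h4 : u - e₁ • b₁ - e₂ • b₂ ∈ (span K ({x} : Set (Fin 3 → K))).restrictScalars F := by
      rw [← hkerπ]
      exact h3
    obtain ⟨c, hc⟩ := mem_span_singleton.1 h4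
    refine ⟨c, e₁, e₂, ?_, ?_⟩
    · show c • x ∈ U
      rw [hc]
      exact U.sub_mem (U.sub_mem hu (U.smul_mem _ hb₁U)) (U.smul_mem _ hb₂U)
    · rw [hc]
      abel
  -- U is contained in the K-span of x, b₁, b₂
  have hUle : U ≤ (span K ({x, b₁, b₂} : Set (Fin 3 → K))).restrictScalars F := by
    intro u hu
    obtain ⟨c, e₁, e₂, hcA, rfl⟩ := hrep u hu
    have hx' : x ∈ span K ({x, b₁, b₂} : Set (Fin 3 → K)) := subset_span (by simp)
    have hb₁' : b₁ ∈ span K ({x, b₁, b₂} : Set (Fin 3 → K)) := subset_span (by simp)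
    have hb₂' : b₂ ∈ span K ({x, b₁, b₂} : Set (Fin 3 → K)) := subset_span (by simp)
    show _ ∈ span K ({x, b₁, b₂} : Set (Fin 3 → K))
    refine add_mem (add_mem (smul_mem _ _ hx') ?_) ?_
    · rw [← algebraMap_smul K e₁ b₁]
      exact smul_mem _ _ hb₁'
    · rw [← algebraMap_smul K e₂ b₂]
      exact smul_mem _ _ hb₂'
  by_cases hsp : finrank K ↥(span K ({x, b₁, b₂} : Set (Fin 3 → K))) ≤ 2
  · exact oneSat_not_le hsat hsp hUle
  push_neg at hsp
  have hsp3 : finrank K ↥(span K ({x, b₁, b₂} : Set (Fin 3 → K))) = 3 := by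
    have hh := Submodule.finrank_le (span K ({x, b₁, b₂} : Set (Fin 3 → K)))
    rw [Module.finrank_fin_fun] at hh
    omega
  have htop : span K ({x, b₁, b₂} : Set (Fin 3 → K)) = ⊤ :=
    Submodule.eq_top_of_finrank_eq (by rw [hsp3, Module.finrank_fin_fun])
  have hrange3 : Set.range ![x, b₁, b₂] = {x, b₁, b₂} := by
    ext y
    simp [Fin.exists_fin_succ, Matrix.cons_val_zero, Matrix.cons_val_one]
    tauto
  have li : LinearIndependent K ![x, b₁, b₂] := by
    apply linearIndependent_of_top_le_span_of_card_eq_finrank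
    · rw [hrange3, htop]
    · simp [Module.finrank_fin_fun]
  have li' : ∀ c₀ c₁ c₂ : K, c₀ • x + c₁ • b₁ + c₂ • b₂ = 0 → c₀ = 0 ∧ c₁ = 0 ∧ c₂ = 0 := by
    intro c₀ c₁ c₂ hc
    have hh := Fintype.linearIndependent_iff.1 li ![c₀, c₁, c₂] (by
      simpa [Fin.sum_univ_three, add_assoc] using hc)
    exact ⟨hh 0, hh 1, hh 2⟩
  -- y₁ y₂ are linearly independent over F, hence finrank X = 2
  have hainj : Function.Injective (algebraMap F K) := (algebraMap F K).injective
  have liy : LinearIndependent F ![y₁, y₂] := by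
    rw [Fintype.linearIndependent_iff]
    intro g hg
    have hg' : g 0 • y₁ + g 1 • y₂ = 0 := by
      simpa [Fin.sum_univ_two] using hg
    have hπ0 : π (g 0 • b₁ + g 1 • b₂) = 0 := by
      rw [map_add, map_smul, map_smul, hb₁, hb₂]
      exact hg'
    have hmem : g 0 • b₁ + g 1 • b₂ ∈ (span K ({x} : Set (Fin 3 → K))).restrictScalars F := by
      rw [← hkerπ]
      exact hπ0
    obtain ⟨c, hc⟩ := mem_span_singleton.1 hmem
    have h0 : (-c) • x + (algebraMap F K (g 0)) • b₁ + (algebraMap F K (g 1)) • b₂ = 0 := by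
      rw [algebraMap_smul, algebraMap_smul, neg_smul, hc]
      abel
    obtain ⟨-, h1, h2⟩ := li' _ _ _ h0
    intro i
    apply hainj
    rw [map_zero]
    fin_cases i
    · exact h1
    · exact h2
  have h2Ubar : 2 ≤ finrank F ↥Ubar := by
    have hle2 : span F ({y₁, y₂} :
        Set ((Fin 3 → K) ⧸ (span K ({x} : Set (Fin 3 → K))).restrictScalars F)) ≤ Ubar := by
      rw [span_le]
      rintro yy (rfl | rfl)
      · exact hy₁
      · exact hy₂
    have hfr_y := finrank_span_eq_card liy
    have hry : Set.range ![y₁, y₂] = {y₁, y₂} := by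
      ext yy
      simp [Fin.exists_fin_succ]
      tauto
    rw [hry] at hfr_y
    have hh := Submodule.finrank_mono hle2
    rw [hfr_y] at hh
    simpa using hh
  have hXrank : finrank F ↥X = 2 := by omega
  -- A = span {1, a}
  have li1a : LinearIndependent F ![(1 : K), a] := by
    rw [Fintype.linearIndependent_iff]
    intro g hg
    have hg' : g 0 • (1 : K) + g 1 • a = 0 := by
      simpa [Fin.sum_univ_two] using hg
    by_cases h1 : g 1 = 0
    · rw [h1, zero_smul, add_zero] at hg'
      have hz : algebraMap F K (g 0) = 0 := by
        rw [Algebra.smul_def, mul_one] at hg'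
        exact hg'
      intro i
      fin_cases i
      · exact hainj (by rw [map_zero]; exact hz)
      · exact h1
    · exfalso
      apply ha1
      have hval : a = (-(g 0 / g 1)) • (1 : K) := by
        rw [Algebra.smul_def, Algebra.smul_def, mul_one] at hg'
        have hg1 : algebraMap F K (g 1) ≠ 0 := fun h => h1 (hainj (by rw [h, map_zero]))
        rw [Algebra.smul_def, mul_one, map_neg, map_div₀, ← neg_div, eq_div_iff hg1]
        linear_combination hg'
      rw [hval]
      exact smul_mem _ _ (mem_span_singleton_self _)
  have hA : A = span F {(1 : K), a} := by
    have hle : span F {(1 : K), a} ≤ A := by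
      rw [span_le]
      rintro yy (rfl | rfl)
      · exact h1A
      · exact haA
    have hfr1a := finrank_span_eq_card li1a
    have hr1a : Set.range ![(1 : K), a] = {(1 : K), a} := by
      ext yy
      simp [Fin.exists_fin_succ]
      tauto
    rw [hr1a] at hfr1a
    refine (Submodule.eq_of_le_of_finrank_le hle ?_).symm
    rw [hfr1a]
    simp only [Fintype.card_fin]
    omega
  have hAdec : ∀ c ∈ A, ∃ d₀ d₁ : F, c = algebraMap F K d₀ + algebraMap F K d₁ * a := by
    intro c hc
    rw [hA] at hc
    obtain ⟨d₀, d₁, hd⟩ := Submodule.mem_span_pair.1 hc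
    refine ⟨d₀, d₁, ?_⟩
    rw [← hd, Algebra.smul_def, mul_one, Algebra.smul_def]
  -- choose z outside span {1, a, a²}
  classical
  have hSfin : finrank F ↥(span F ({1, a, a * a} : Set K)) ≤ 3 := by
    have hset : ({1, a, a * a} : Set K) = (↑({1, a, a * a} : Finset K) : Set K) := by
      simp
    rw [hset]
    refine le_trans (finrank_span_finset_le_card _) ?_
    refine le_trans (Finset.card_insert_le _ _) ?_
    exact Nat.succ_le_succ (le_trans (Finset.card_insert_le _ _) (by simp))
  have hSne : span F ({1, a, a * a} : Set K) ≠ ⊤ := by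
    intro h
    rw [h] at hSfin
    rw [finrank_top, hFK] at hSfin
    omega
  obtain ⟨z, hz⟩ := exists_not_mem_of_ne_top' hSne
  -- the uncovered point
  have hv0 : z • x + b₁ + a • b₂ ≠ 0 := by
    intro h
    have h' : z • x + (1 : K) • b₁ + a • b₂ = 0 := by
      rw [one_smul]
      exact h
    obtain ⟨-, h1, -⟩ := li' _ _ _ h'
    exact one_ne_zero h1
  obtain ⟨Q, R, hQ, hR, -, hle⟩ := hsat (Projectivization.mk K _ hv0)
  obtain ⟨u, hu0, huU, rfl⟩ := hQ
  obtain ⟨u', hu0', huU', rfl⟩ := hR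
  have hvmem : z • x + b₁ + a • b₂ ∈ span K ({u, u'} : Set (Fin 3 → K)) := by
    have h1 : z • x + b₁ + a • b₂ ∈ (Projectivization.mk K _ hv0).submodule := by
      rw [Projectivization.submodule_mk]
      exact mem_span_singleton_self _
    have h2 := hle h1
    rw [Projectivization.submodule_mk, Projectivization.submodule_mk, ← Submodule.span_union,
      Set.singleton_union] at h2
    exact h2
  obtain ⟨lam, mu, hlm⟩ := Submodule.mem_span_pair.1 hvmem
  obtain ⟨c, e₁, e₂, hcA, hcu⟩ := hrep u huU
  obtain ⟨c', e₁', e₂', hcA', hcu'⟩ := hrep u' huU'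
  have hsum : (lam * c + mu * c' - z) • x
      + (lam * algebraMap F K e₁ + mu * algebraMap F K e₁' - 1) • b₁
      + (lam * algebraMap F K e₂ + mu * algebraMap F K e₂' - a) • b₂ = 0 := by
    have h := hlm
    rw [hcu, hcu'] at h
    rw [← algebraMap_smul K e₁ b₁, ← algebraMap_smul K e₂ b₂,
        ← algebraMap_smul K e₁' b₁, ← algebraMap_smul K e₂' b₂] at h
    linear_combination (norm := module) h
  obtain ⟨h0, h1, h2⟩ := li' _ _ _ hsum
  rw [sub_eq_zero] at h0 h1 h2
  obtain ⟨d₀, d₁, hc⟩ := hAdec c hcA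
  obtain ⟨d₀', d₁', hc'⟩ := hAdec c' hcA'
  by_cases hd : e₁ * e₂' - e₂ * e₁' = 0
  · -- the degenerate case: contradiction
    have hsF : ∀ g g' : F, algebraMap F K g' = a * algebraMap F K g → g = 0 ∧ g' = 0 := by
      intro g g' hgg
      by_cases hgz : g = 0
      · subst hgz
        rw [map_zero, mul_zero] at hgg
        exact ⟨rfl, hainj (by rw [hgg, map_zero])⟩
      · exfalso
        apply ha1
        have hgne : algebraMap F K g ≠ 0 := fun h => hgz (hainj (by rw [h, map_zero]))
        have hval : a = (g' / g) • (1 : K) := by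
          rw [Algebra.smul_def, mul_one, map_div₀]
          field_simp
          linear_combination -hgg
        rw [hval]
        exact smul_mem _ _ (mem_span_singleton_self _)
    by_cases he : e₁ = 0 ∧ e₂ = 0
    · obtain ⟨he1, he2⟩ := he
      rw [he1, map_zero, mul_zero, zero_add] at h1
      rw [he2, map_zero, mul_zero, zero_add] at h2
      have hkey : algebraMap F K e₂' = a * algebraMap F K e₁' := by
        linear_combination (algebraMap F K e₁') * h2 - (algebraMap F K e₂') * h1
      obtain ⟨he₁', he₂'⟩ := hsF _ _ hkey
      rw [he₁', map_zero, mul_zero] at h1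
      exact one_ne_zero h1.symm
    · obtain ⟨g, hg1, hg2⟩ : ∃ g : F, e₁' = g * e₁ ∧ e₂' = g * e₂ := by
        by_cases h1' : e₁ = 0
        · have h2' : e₂ ≠ 0 := fun h => he ⟨h1', h⟩
          have h1'' : e₁' = 0 := by
            rw [h1', zero_mul, zero_sub, neg_eq_zero] at hd
            rcases mul_eq_zero.1 hd with h | h
            · exact absurd h h2'
            · exact h
          refine ⟨e₂' / e₂, ?_, ?_⟩
          · rw [h1'', h1', mul_zero]
          · field_simp
        · refine ⟨e₁' / e₁, ?_, ?_⟩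
          · field_simp
          · field_simp
            linear_combination hd
      rw [hg1, map_mul] at h1
      rw [hg2, map_mul] at h2
      have h1' : (lam + mu * algebraMap F K g) * algebraMap F K e₁ = 1 := by
        linear_combination h1
      have h2' : (lam + mu * algebraMap F K g) * algebraMap F K e₂ = a := by
        linear_combination h2
      have hkey : algebraMap F K e₂ = a * algebraMap F K e₁ := by
        linear_combination (algebraMap F K e₁) * h2' - (algebraMap F K e₂) * h1'
      obtain ⟨he1, he2⟩ := hsF _ _ hkey
      exact he ⟨he1, he2⟩
  · -- the main case: z would lie in span {1, a, a²}
    apply hz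
    rw [hc, hc'] at h0
    have hkey : algebraMap F K (e₁ * e₂' - e₂ * e₁') * z =
        algebraMap F K (e₂' * d₀ - e₂ * d₀')
        + algebraMap F K (e₂' * d₁ - e₂ * d₁' + e₁ * d₀' - e₁' * d₀) * a
        + algebraMap F K (e₁ * d₁' - e₁' * d₁) * (a * a) := by
      simp only [map_sub, map_add, map_mul]
      linear_combination (-(algebraMap F K e₁ * algebraMap F K e₂'
            - algebraMap F K e₂ * algebraMap F K e₁')) * h0
        + ((algebraMap F K d₀ + algebraMap F K d₁ * a) * algebraMap F K e₂'
            - (algebraMap F K d₀' + algebraMap F K d₁' * a) * algebraMap F K e₂) * h1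
        + ((algebraMap F K d₀' + algebraMap F K d₁' * a) * algebraMap F K e₁
            - (algebraMap F K d₀ + algebraMap F K d₁ * a) * algebraMap F K e₁') * h2
    have hmem : (e₁ * e₂' - e₂ * e₁') • z ∈ span F ({1, a, a * a} : Set K) := by
      rw [Algebra.smul_def, hkey]
      refine add_mem (add_mem ?_ ?_) ?_
      · rw [Algebra.algebraMap_eq_smul_one]
        exact smul_mem _ _ (subset_span (by simp))
      · rw [← Algebra.smul_def]
        exact smul_mem _ _ (subset_span (by simp))
      · rw [← Algebra.smul_def]
        exact smul_mem _ _ (subset_span (by simp))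
    have hzz : z = (e₁ * e₂' - e₂ * e₁')⁻¹ • ((e₁ * e₂' - e₂ * e₁') • z) := by
      rw [smul_smul, inv_mul_cancel₀ hd, one_smul]
    rw [hzz]
    exact smul_mem _ _ hmem

end Helpers

/-- A `1`-saturating `F_q`-linear set of rank `4` in `PG(2, q^4)` is scattered, and either
every line has weight at most `2`, or there is exactly one line of weight `3` and every
other line has weight at most `2`. -/
theorem one_saturating_rank_four_scattered (q : ℕ) (hq : IsPrimePow q) (F K : Type*)
    [Field F] [Field K] [Fintype F] [Fintype K] [Algebra F K]
    (hF : Fintype.card F = q) (hK : Fintype.card K = q ^ 4)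
    (U : Submodule F (Fin 3 → K)) (hU : Module.finrank F ↥U = 4)
    (hsat : OneSat F K U) :
    Scattered F K U ∧
      ((∀ W : Submodule K (Fin 3 → K), Module.finrank K ↥W = 2 → wt F U W ≤ 2) ∨
        (∃ W₀ : Submodule K (Fin 3 → K), Module.finrank K ↥W₀ = 2 ∧ wt F U W₀ = 3 ∧
          ∀ W : Submodule K (Fin 3 → K), Module.finrank K ↥W = 2 → W ≠ W₀ →
            wt F U W ≤ 2)) := by
  have hscat : Scattered F K U := by
    rintro P ⟨x, hx0, hxU, rfl⟩
    have hle1 := point_weight_le_one hq hF hK U hU hsat x hx0 hxU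
    have hnt : Nontrivial
        ↥(U ⊓ (span K ({x} : Set (Fin 3 → K))).restrictScalars F) := by
      refine ⟨⟨⟨x, ⟨hxU, ?_⟩⟩, 0, ?_⟩⟩
      · exact mem_span_singleton_self x
      · intro h
        exact hx0 (by simpa using congrArg Subtype.val h)
    have hge1 : 0 < finrank F
        ↥(U ⊓ (span K ({x} : Set (Fin 3 → K))).restrictScalars F) :=
      Module.finrank_pos_iff.2 hnt
    show wt F U (Projectivization.mk K x hx0).submodule = 1
    unfold wt
    rw [Projectivization.submodule_mk]
    have hle1' : finrank F
        ↥(U ⊓ (span K ({x} : Set (Fin 3 → K))).restrictScalars F) ≤ 1 := hle1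
    omega
  refine ⟨hscat, ?_⟩
  have hwt4 : ∀ W : Submodule K (Fin 3 → K), Module.finrank K ↥W = 2 →
      wt F U W ≤ 4 ∧ wt F U W ≠ 4 := by
    intro W hW2
    have hle : (U ⊓ W.restrictScalars F) ≤ U := inf_le_left
    have h4 : wt F U W ≤ 4 := by
      have hh := Submodule.finrank_mono (t := U) hle
      unfold wt
      omega
    refine ⟨h4, ?_⟩
    intro heq
    have heqU : U ⊓ W.restrictScalars F = U := by
      apply Submodule.eq_of_le_of_finrank_le hle
      unfold wt at heq
      omega
    exact oneSat_not_le hsat (by omega) (inf_eq_left.1 heqU)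
  by_cases h3 : ∃ W₀ : Submodule K (Fin 3 → K), Module.finrank K ↥W₀ = 2 ∧ wt F U W₀ = 3
  · obtain ⟨W₀, hW₀2, hW₀3⟩ := h3
    right
    refine ⟨W₀, hW₀2, hW₀3, ?_⟩
    intro W hW2 hWne
    obtain ⟨h4, hne4⟩ := hwt4 W hW2
    have hne3 : wt F U W ≠ 3 := by
      intro hW3
      have hsupK : finrank K ↥(W ⊔ W₀) = 3 := by
        have hle3 : finrank K ↥(W ⊔ W₀) ≤ 3 := by
          have hh := Submodule.finrank_le (W ⊔ W₀)
          rw [Module.finrank_fin_fun] at hh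
          exact hh
        have hgeW : finrank K ↥W ≤ finrank K ↥(W ⊔ W₀) :=
          Submodule.finrank_mono le_sup_left
        rcases Nat.lt_or_ge (finrank K ↥(W ⊔ W₀)) 3 with h | h
        · exfalso
          have hWeq : W = W ⊔ W₀ :=
            Submodule.eq_of_le_of_finrank_le le_sup_left (by omega)
          have hW₀eq : W₀ = W ⊔ W₀ :=
            Submodule.eq_of_le_of_finrank_le le_sup_right (by omega)
          exact hWne (hWeq.trans hW₀eq.symm)
        · omega
      have hinfK : finrank K ↥(W ⊓ W₀) = 1 := by
        have hh := Submodule.finrank_sup_add_finrank_inf_eq W W₀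
        omega
      have hFinf : 2 ≤ finrank F ↥(U ⊓ (W ⊓ W₀).restrictScalars F) := by
        have hkey := Submodule.finrank_sup_add_finrank_inf_eq
          (U ⊓ W.restrictScalars F) (U ⊓ W₀.restrictScalars F)
        have hsle : (U ⊓ W.restrictScalars F) ⊔ (U ⊓ W₀.restrictScalars F) ≤ U :=
          sup_le inf_le_left inf_le_left
        have h1 := Submodule.finrank_mono (t := U) hsle
        have hinf_eq : (U ⊓ W.restrictScalars F) ⊓ (U ⊓ W₀.restrictScalars F)
            = U ⊓ (W ⊓ W₀).restrictScalars F := by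
          ext y
          simp only [Submodule.mem_inf, Submodule.restrictScalars_mem]
          tauto
        rw [hinf_eq] at hkey
        unfold wt at hW3 hW₀3
        omega
      obtain ⟨w, hwmem, hw0⟩ : ∃ w, w ∈ U ⊓ (W ⊓ W₀).restrictScalars F ∧ w ≠ 0 := by
        have hpos : 0 < finrank F ↥(U ⊓ (W ⊓ W₀).restrictScalars F) := by omega
        have hnt := Module.finrank_pos_iff.1 hpos
        obtain ⟨⟨w, hw⟩, hne⟩ := exists_ne (0 : ↥(U ⊓ (W ⊓ W₀).restrictScalars F))
        exact ⟨w, hw, fun h => hne (Subtype.ext h)⟩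
      have hwU : w ∈ U := hwmem.1
      have hwY : w ∈ (W ⊓ W₀ : Submodule K (Fin 3 → K)) := hwmem.2
      have hPw := hscat (Projectivization.mk K w hw0) ⟨w, hw0, hwU, rfl⟩
      have hPw' : wt F U (Projectivization.mk K w hw0).submodule = 1 := hPw
      unfold wt at hPw'
      rw [Projectivization.submodule_mk] at hPw'
      have hspw : (span K ({w} : Set (Fin 3 → K))) = W ⊓ W₀ := by
        apply Submodule.eq_of_le_of_finrank_le
          (span_le.2 (Set.singleton_subset_iff.2 hwY))
        rw [finrank_span_singleton hw0, hinfK]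
      rw [hspw] at hPw'
      omega
    omega
  · left
    intro W hW2
    obtain ⟨h4, hne4⟩ := hwt4 W hW2
    have hne3 : wt F U W ≠ 3 := fun h => h3 ⟨W, hW2, h⟩
    omega
end
end

section
/- Let q be a prime power and let U = {(x, x^q, a) : x ∈ F_{q^4}, a ∈ F_q} ⊆ F_{q^4}^3. Then U is an F_q-subspace with dim_{F_q}(U) = 5, the linear set L_U is scattered (so |L_U| = q^4 + q^3 + q^2 + q + 1), and L_U is a 1-saturating F_q-linear set in PG(2,q^4). -/
noncomputable section

open Polynomial in
lemma exists_algebraMap_of_pow_card_eq {q : ℕ} (hq2 : 2 ≤ q) {F K : Type*} [Field F] [Field K]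
    [Fintype F] [Algebra F K] (hF : Fintype.card F = q) {l : K} (hl : l ^ q = l) :
    ∃ c : F, algebraMap F K c = l := by
  classical
  set f : K[X] := X ^ q - X with hfdef
  have hdeg : f.natDegree = q := by
    rw [hfdef, natDegree_sub_eq_left_of_natDegree_lt] <;>
      simp only [natDegree_X_pow, natDegree_X] <;> omega
  have hf0 : f ≠ 0 := by
    intro h
    rw [h, natDegree_zero] at hdeg
    omega
  have hroot : ∀ z : K, z ^ q = z → z ∈ f.roots.toFinset := by
    intro z hz
    rw [Multiset.mem_toFinset, mem_roots hf0]
    simp [hfdef, IsRoot, hz]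
  have hcard : f.roots.toFinset.card ≤ q :=
    le_trans (Multiset.toFinset_card_le _) (le_trans (card_roots' f) hdeg.le)
  by_contra hc
  push_neg at hc
  set I : Finset K := Finset.univ.image (algebraMap F K) with hI
  have hIsub : insert l I ⊆ f.roots.toFinset := by
    intro z hz
    rcases Finset.mem_insert.mp hz with rfl | hz
    · exact hroot _ hl
    · obtain ⟨c, _, rfl⟩ := Finset.mem_image.mp hz
      apply hroot
      rw [← map_pow, ← hF, FiniteField.pow_card]
  have hlI : l ∉ I := by
    rw [hI]
    simp only [Finset.mem_image, Finset.mem_univ, true_and]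
    rintro ⟨c, hcl⟩
    exact hc c hcl
  have hIcard : I.card = q := by
    rw [hI, Finset.card_image_of_injective _ (algebraMap F K).injective,
      Finset.card_univ, hF]
  have h2 := Finset.card_le_card hIsub
  rw [Finset.card_insert_of_notMem hlI, hIcard] at h2
  omega

/-- The set `{(x, x^q, a) : x ∈ F_{q^4}, a ∈ F_q}` is an `F_q`-subspace of `F_{q^4}^3` of
dimension `5`, whose linear set is scattered (hence of size `q^4+q^3+q^2+q+1`) and is a
`1`-saturating linear set in `PG(2, q^4)`. -/
theorem scattered_rank_five_example (q : ℕ) (hq : IsPrimePow q) (F K : Type*)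
    [Field F] [Field K] [Fintype F] [Fintype K] [Algebra F K]
    (hF : Fintype.card F = q) (hK : Fintype.card K = q ^ 4) :
    ∃ U : Submodule F (Fin 3 → K),
      (U : Set (Fin 3 → K)) =
        {v | ∃ (x : K) (a : F), v = ![x, x ^ q, algebraMap F K a]} ∧
      Module.finrank F ↥U = 5 ∧
      Scattered F K U ∧
      (linSet F K U).ncard = q ^ 4 + q ^ 3 + q ^ 2 + q + 1 ∧
      OneSat F K U := by
  classical
  have hq2 : 2 ≤ q := hq.two_le
  -- characteristic setup
  set p := ringChar F with hp
  haveI : CharP F p := ringChar.charP F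
  obtain ⟨n, hpprime, hcardF⟩ := FiniteField.card F p
  haveI : Fact p.Prime := ⟨hpprime⟩
  haveI : CharP K p := charP_of_injective_algebraMap (algebraMap F K).injective p
  have hqpn : q = p ^ (n : ℕ) := hF ▸ hcardF
  -- frobenius facts
  have frob_add : ∀ x y : K, (x + y) ^ q = x ^ q + y ^ q := by
    intro x y; rw [hqpn]; exact add_pow_char_pow ..
  have frob_neg : ∀ x : K, (-x) ^ q = -(x ^ q) := by
    intro x
    rw [hqpn, neg_pow, neg_one_pow_char_pow, neg_mul, one_mul]
  have frob_alg : ∀ c : F, (algebraMap F K c) ^ q = algebraMap F K c := by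
    intro c
    rw [← map_pow, ← hF, FiniteField.pow_card]
  have frob_smul : ∀ (c : F) (x : K), (c • x) ^ q = c • (x ^ q) := by
    intro c x
    rw [Algebra.smul_def, Algebra.smul_def, mul_pow, frob_alg]
  have pow_q4 : ∀ z : K, z ^ (q ^ 4) = z := by
    intro z
    rw [← hK]; exact FiniteField.pow_card z
  have fix : ∀ l : K, l ^ q = l → ∃ c : F, algebraMap F K c = l := fun l hl =>
    exists_algebraMap_of_pow_card_eq hq2 hF hl
  -- the linear map and the subspace
  let φ : (K × F) →ₗ[F] (Fin 3 → K) :=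
    { toFun := fun w => ![w.1, w.1 ^ q, algebraMap F K w.2]
      map_add' := by
        intro w w'
        funext i
        fin_cases i <;>
          simp [frob_add, map_add]
      map_smul' := by
        intro c w
        funext i
        fin_cases i <;>
          simp [frob_smul, Algebra.smul_def, mul_pow, frob_alg, map_mul] }
  set U : Submodule F (Fin 3 → K) := LinearMap.range φ with hU
  have memU : ∀ (x : K) (a : F), (![x, x ^ q, algebraMap F K a] : Fin 3 → K) ∈ U :=
    fun x a => ⟨(x, a), rfl⟩
  -- rank
  have hK4 : Module.finrank F K = 4 := by
    have := Module.card_eq_pow_finrank (K := F) (V := K)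
    rw [hF, hK] at this
    exact Nat.pow_right_injective hq2 this.symm
  have hinj : Function.Injective φ := by
    intro w w' h
    have h0 := congrFun h 0
    have h2 := congrFun h 2
    simp only [φ, LinearMap.coe_mk, AddHom.coe_mk, Matrix.cons_val_zero] at h0
    have h2' : algebraMap F K w.2 = algebraMap F K w'.2 := by simpa [φ] using h2
    exact Prod.ext h0 ((algebraMap F K).injective h2')
  have hrank : Module.finrank F ↥U = 5 := by
    rw [hU, LinearMap.finrank_range_of_inj hinj, Module.finrank_prod, hK4,
      Module.finrank_self]
  -- the core weight-one computation
  have core : ∀ v ∈ U, ∀ (_ : v ≠ 0),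
      (U ⊓ (Submodule.span K {v}).restrictScalars F) = Submodule.span F {v} := by
    intro v hvU hv
    apply le_antisymm
    · rintro w ⟨hwU, hwv⟩
      obtain ⟨⟨y, b⟩, hw⟩ := hwU
      obtain ⟨⟨x, a⟩, hveq⟩ := hvU
      rw [Submodule.mem_span_singleton]
      obtain ⟨lam, hlam⟩ := Submodule.mem_span_singleton.mp hwv
      have hcomp := hlam
      rw [← hw, ← hveq] at hcomp
      have c0 : lam * x = y := by simpa [φ] using congrFun hcomp 0
      have c1 : lam * x ^ q = y ^ q := by simpa [φ] using congrFun hcomp 1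
      by_cases hx : x = 0
      · subst hx
        have ha : a ≠ 0 := by
          rintro rfl
          apply hv
          rw [← hveq]
          funext i
          fin_cases i <;> simp [φ, zero_pow (show q ≠ 0 by omega)]
        have hy0 : y = 0 := by rw [← c0, mul_zero]
        subst hy0
        refine ⟨b * a⁻¹, ?_⟩
        rw [← hveq, ← map_smul, ← hw]
        congr 1
        refine Prod.ext (by simp) ?_
        show (b * a⁻¹) * a = b
        field_simp
      · have hlq : lam ^ q = lam := by
          have : lam ^ q * x ^ q = lam * x ^ q := by
            rw [← mul_pow, c0, c1]
          exact mul_right_cancel₀ (pow_ne_zero q hx) this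
        obtain ⟨c, hc⟩ := fix lam hlq
        refine ⟨c, ?_⟩
        rw [← hlam, ← hc, algebraMap_smul]
    · rw [Submodule.span_le]
      intro z hz
      rw [Set.mem_singleton_iff] at hz
      subst hz
      exact ⟨hvU, Submodule.mem_span_singleton_self _⟩
  -- scatteredness
  have hscat : Scattered F K U := by
    rintro P ⟨u, hu, huU, rfl⟩
    unfold wtPt wt
    rw [Projectivization.submodule_mk, core u huU hu]
    exact finrank_span_singleton hu
  refine ⟨U, ?_, hrank, hscat, ?_, ?_⟩
  · ext v
    simp only [SetLike.mem_coe, hU, LinearMap.mem_range, Set.mem_setOf_eq]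
    constructor
    · rintro ⟨⟨x, a⟩, rfl⟩
      exact ⟨x, a, rfl⟩
    · rintro ⟨x, a, rfl⟩
      exact ⟨(x, a), rfl⟩
  · -- cardinality
    haveI : Finite (Projectivization K (Fin 3 → K)) := Quotient.finite _
    set SU : Finset (Fin 3 → K) := Finset.univ.filter (· ∈ U) with hSU
    set S : Finset (Fin 3 → K) := SU.erase 0 with hS
    have hSUcard : SU.card = q ^ 5 := by
      have h2 : SU.card = Nat.card {x : Fin 3 → K // x ∈ U} := by
        rw [← Nat.card_eq_finsetCard]
        exact Nat.card_congr (Equiv.subtypeEquivRight (by simp [hSU]))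
      have h1 : Nat.card {x : Fin 3 → K // x ∈ U} = q ^ 5 := by
        rw [Nat.card_eq_fintype_card]
        have h3 := Module.card_eq_pow_finrank (K := F) (V := ↥U)
        rw [hF, hrank] at h3
        exact h3
      rw [h2, h1]
    have h0SU : (0 : Fin 3 → K) ∈ SU := by
      simp [hSU, Submodule.zero_mem]
    have hScard : S.card = q ^ 5 - 1 := by
      rw [hS, Finset.card_erase_of_mem h0SU, hSUcard]
    have hLfin : (linSet F K U).Finite := Set.toFinite _
    set T : Finset (Projectivization K (Fin 3 → K)) := hLfin.toFinset with hT
    have hjunk : (![1, 0, 0] : Fin 3 → K) ≠ 0 := by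
      intro h
      simpa using congrFun h 0
    set f : (Fin 3 → K) → Projectivization K (Fin 3 → K) :=
      fun u => if h : u = 0 then Projectivization.mk K ![1, 0, 0] hjunk
        else Projectivization.mk K u h with hf
    have hfval : ∀ (u : Fin 3 → K) (hu : u ≠ 0), f u = Projectivization.mk K u hu :=
      fun u hu => dif_neg hu
    have hmemS : ∀ u, u ∈ S ↔ u ∈ U ∧ u ≠ 0 := by
      intro u
      rw [hS, Finset.mem_erase, hSU, Finset.mem_filter]
      simp only [Finset.mem_univ, true_and]
      tauto
    have H : ∀ u ∈ S, f u ∈ T := by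
      intro u hu
      obtain ⟨huU, hu0⟩ := (hmemS u).mp hu
      rw [hT, Set.Finite.mem_toFinset]
      exact ⟨u, hu0, huU, hfval u hu0⟩
    have hfiber : ∀ P ∈ T, (S.filter (fun u => f u = P)).card = q - 1 := by
      intro P hP
      rw [hT, Set.Finite.mem_toFinset] at hP
      obtain ⟨v, hv, hvU, rfl⟩ := hP
      have hkey : S.filter (fun u => f u = Projectivization.mk K v hv) =
          (Finset.univ.erase (0 : F)).image (fun c : F => c • v) := by
        ext u
        simp only [Finset.mem_filter, Finset.mem_image, Finset.mem_erase, Finset.mem_univ,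
          true_and, and_true]
        constructor
        · rintro ⟨huS, hfu⟩
          obtain ⟨huU, hu0⟩ := (hmemS u).mp huS
          rw [hfval u hu0, Projectivization.mk_eq_mk_iff'] at hfu
          obtain ⟨lam, hlam⟩ := hfu
          have humem : u ∈ U ⊓ (Submodule.span K {v}).restrictScalars F :=
            ⟨huU, Submodule.mem_span_singleton.mpr ⟨lam, hlam⟩⟩
          rw [core v hvU hv] at humem
          obtain ⟨c, hc⟩ := Submodule.mem_span_singleton.mp humem
          refine ⟨c, ?_, hc⟩
          rintro rfl
          rw [zero_smul] at hc
          exact hu0 hc.symm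
        · rintro ⟨c, hc0, rfl⟩
          have hcv : c • v ≠ 0 := by
            intro h
            apply hv
            have h2 : c⁻¹ • (c • v) = (0 : Fin 3 → K) := by rw [h, smul_zero]
            rwa [smul_smul, inv_mul_cancel₀ hc0, one_smul] at h2
          refine ⟨(hmemS _).mpr ⟨Submodule.smul_mem _ c hvU, hcv⟩, ?_⟩
          rw [hfval _ hcv, Projectivization.mk_eq_mk_iff']
          exact ⟨algebraMap F K c, algebraMap_smul K c v⟩
      have hinjc : Function.Injective (fun c : F => c • v) := by
        intro c c' h
        have h' : c • v = c' • v := h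
        by_contra hne
        apply hv
        have h1 : (c - c') • v = 0 := by
          rw [sub_smul, h', sub_self]
        have h2 : (c - c')⁻¹ • ((c - c') • v) = (0 : Fin 3 → K) := by
          rw [h1, smul_zero]
        rwa [smul_smul, inv_mul_cancel₀ (sub_ne_zero_of_ne hne), one_smul] at h2
      rw [hkey]
      rw [Finset.card_image_of_injective _ hinjc]
      rw [Finset.card_erase_of_mem (Finset.mem_univ 0)]
      rw [Finset.card_univ, hF]
    have hmain := Finset.card_eq_sum_card_fiberwise H
    rw [Finset.sum_congr rfl hfiber, Finset.sum_const, smul_eq_mul, hScard] at hmain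
    have hfactor : (q ^ 4 + q ^ 3 + q ^ 2 + q + 1) * (q - 1) = q ^ 5 - 1 := by
      obtain ⟨r, rfl⟩ := Nat.exists_eq_add_of_le (show 1 ≤ q by omega)
      have h1 : 1 + r - 1 = r := by omega
      rw [h1]
      symm
      apply Nat.sub_eq_of_eq_add
      ring
    have hpos : 0 < q - 1 := by omega
    have hTcard : T.card = q ^ 4 + q ^ 3 + q ^ 2 + q + 1 := by
      apply Nat.eq_of_mul_eq_mul_right hpos
      rw [← hmain, hfactor]
    rw [Set.ncard_eq_toFinset_card _ hLfin]
    exact hTcard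
  · -- 1-saturating
    intro P
    induction P using Projectivization.ind with
    | h v hv =>
    have hqne0 : q ≠ 0 := by omega
    -- an element not fixed by the q-power map
    obtain ⟨t, ht⟩ : ∃ t : K, t ^ q ≠ t := by
      by_contra h
      push_neg at h
      have hsurj : Function.Surjective (algebraMap F K) := fun z => fix z (h z)
      have hle := Fintype.card_le_of_surjective _ hsurj
      rw [hF, hK] at hle
      have hlt : q < q ^ 4 := by
        calc q = q ^ 1 := (pow_one q).symm
        _ < q ^ 4 := Nat.pow_lt_pow_right hq2 (by omega)
      omega
    have ht0 : t ≠ 0 := by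
      rintro rfl
      exact ht (by rw [zero_pow hqne0])
    have hQmem : ∀ x : K, (![x, x ^ q, 1] : Fin 3 → K) ∈ U := by
      intro x
      have := memU x 1
      rwa [map_one] at this
    have hRmem : ∀ y : K, (![y, y ^ q, 0] : Fin 3 → K) ∈ U := by
      intro y
      have := memU y 0
      rwa [map_zero] at this
    have hQne : ∀ x : K, (![x, x ^ q, 1] : Fin 3 → K) ≠ 0 := by
      intro x h
      simpa using congrFun h 2
    have hRne : ∀ y : K, y ≠ 0 → (![y, y ^ q, 0] : Fin 3 → K) ≠ 0 := by
      intro y hy h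
      exact hy (by simpa using congrFun h 0)
    by_cases hγ : v 2 = 0
    · -- the point lies on the line at infinity
      have h1mem : (![1, 1, 0] : Fin 3 → K) ∈ U := by
        have := hRmem 1
        rwa [one_pow] at this
      have h1ne : (![1, 1, 0] : Fin 3 → K) ≠ 0 := by
        intro h
        simpa using congrFun h 0
      refine ⟨Projectivization.mk K ![1, 1, 0] h1ne,
        Projectivization.mk K ![t, t ^ q, 0] (hRne t ht0),
        ⟨_, h1ne, h1mem, rfl⟩, ⟨_, hRne t ht0, hRmem t, rfl⟩, ?_, ?_⟩
      · intro h
        rw [Projectivization.mk_eq_mk_iff'] at h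
        obtain ⟨a, ha⟩ := h
        have h0 : a * t = 1 := by simpa using congrFun ha 0
        have h1 : a * t ^ q = 1 := by simpa using congrFun ha 1
        have ha0 : a ≠ 0 := by
          intro h
          rw [h, zero_mul] at h0
          exact zero_ne_one h0
        exact ht (mul_left_cancel₀ ha0 (h1.trans h0.symm))
      · rw [Projectivization.submodule_mk, Projectivization.submodule_mk,
          Projectivization.submodule_mk, Submodule.span_le]
        intro z hz
        rw [Set.mem_singleton_iff] at hz
        rw [hz]
        have he : t ^ q - t ≠ 0 := sub_ne_zero_of_ne ht
        set μ : K := (v 1 - v 0) / (t ^ q - t) with hμ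
        set lam : K := v 0 - μ * t with hlam
        apply Submodule.mem_sup.mpr
        refine ⟨lam • ![1, 1, 0], Submodule.smul_mem _ _ (Submodule.mem_span_singleton_self _),
          μ • ![t, t ^ q, 0], Submodule.smul_mem _ _ (Submodule.mem_span_singleton_self _), ?_⟩
        funext i
        fin_cases i
        · show lam * 1 + μ * t = v 0
          rw [hlam]; ring
        · show lam * 1 + μ * t ^ q = v 1
          rw [hlam, hμ]
          field_simp
          ring
        · show lam * 0 + μ * 0 = v 2
          rw [hγ]; ring
    · -- the point is off the line at infinity
      set α' : K := v 0 * (v 2)⁻¹ with hα'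
      set β' : K := v 1 * (v 2)⁻¹ with hβ'
      obtain ⟨μ, y, hy0, hkey⟩ : ∃ μ y : K, y ≠ 0 ∧ y ^ q * (μ - μ ^ q) = β' - α' ^ q := by
        by_cases hδ : β' - α' ^ q = 0
        · exact ⟨0, 1, one_ne_zero, by rw [hδ, zero_pow hqne0]; ring⟩
        · have he : t ^ q - t ≠ 0 := sub_ne_zero_of_ne ht
          refine ⟨-t, ((β' - α' ^ q) / (t ^ q - t)) ^ (q ^ 3),
            pow_ne_zero _ (div_ne_zero hδ he), ?_⟩
          have hyq : (((β' - α' ^ q) / (t ^ q - t)) ^ (q ^ 3)) ^ q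
              = (β' - α' ^ q) / (t ^ q - t) := by
            rw [← pow_mul, ← pow_succ]
            exact pow_q4 _
          rw [hyq, frob_neg, show -t - -(t ^ q) = t ^ q - t by ring,
            div_mul_cancel₀ _ he]
      set x : K := α' - μ * y with hx
      have hx1 : x + μ * y = α' := by rw [hx]; ring
      have hx2 : x ^ q + μ * y ^ q = β' := by
        have hxq : x ^ q = α' ^ q - μ ^ q * y ^ q := by
          rw [hx, sub_eq_add_neg, frob_add, frob_neg, mul_pow, ← sub_eq_add_neg]
          rw [mul_pow]
        rw [hxq, show α' ^ q - μ ^ q * y ^ q + μ * y ^ q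
          = α' ^ q + y ^ q * (μ - μ ^ q) by ring, hkey]
        ring
      refine ⟨Projectivization.mk K ![x, x ^ q, 1] (hQne x),
        Projectivization.mk K ![y, y ^ q, 0] (hRne y hy0),
        ⟨_, hQne x, hQmem x, rfl⟩, ⟨_, hRne y hy0, hRmem y, rfl⟩, ?_, ?_⟩
      · intro h
        rw [Projectivization.mk_eq_mk_iff'] at h
        obtain ⟨a, ha⟩ := h
        have h2 : a * 0 = 1 := by simpa using congrFun ha 2
        rw [mul_zero] at h2
        exact zero_ne_one h2
      · rw [Projectivization.submodule_mk, Projectivization.submodule_mk,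
          Projectivization.submodule_mk, Submodule.span_le]
        intro z hz
        rw [Set.mem_singleton_iff] at hz
        rw [hz]
        apply Submodule.mem_sup.mpr
        refine ⟨(v 2) • ![x, x ^ q, 1],
          Submodule.smul_mem _ _ (Submodule.mem_span_singleton_self _),
          (v 2 * μ) • ![y, y ^ q, 0],
          Submodule.smul_mem _ _ (Submodule.mem_span_singleton_self _), ?_⟩
        funext i
        fin_cases i
        · show v 2 * x + v 2 * μ * y = v 0
          rw [show v 2 * x + v 2 * μ * y = v 2 * (x + μ * y) by ring, hx1, hα']
          field_simp
        · show v 2 * x ^ q + v 2 * μ * y ^ q = v 1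
          rw [show v 2 * x ^ q + v 2 * μ * y ^ q = v 2 * (x ^ q + μ * y ^ q) by ring,
            hx2, hβ']
          field_simp
        · show v 2 * 1 + v 2 * μ * 0 = v 2
          ring
end
end

section
/- Let q be a prime power and let U = {(x, x^q, x^{q^2}) : x ∈ F_{q^4}} ⊆ F_{q^4}^3. Then the point ⟨(0,0,1)⟩_{F_{q^4}} of PG(2,q^4) lies on no line spanned by two distinct points of L_U; in particular, L_U is not a 1-saturating linear set in PG(2,q^4). -/
noncomputable section

theorem key_lemma (q : ℕ) (hq0 : q ≠ 0) (K : Type*) [Field K]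
    (x y a b : K) (hx : x ≠ 0) (hy : y ≠ 0)
    (e0 : a * x + b * y = 0) (e1 : a * x ^ q + b * y ^ q = 0)
    (e2 : a * x ^ q ^ 2 + b * y ^ q ^ 2 = 1) :
    ∃ c : K, c • (![y, y ^ q, y ^ q ^ 2] : Fin 3 → K) = ![x, x ^ q, x ^ q ^ 2] := by
  have ha : a ≠ 0 := by
    rintro rfl
    have hb : b = 0 := by
      have : b * y = 0 := by linear_combination e0
      rcases mul_eq_zero.1 this with h | h
      · exact h
      · exact absurd h hy
    rw [hb] at e2
    simp at e2
  -- key relation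
  have key : x ^ q * y = x * y ^ q := by
    have h : a * (x ^ q * y) = a * (x * y ^ q) := by
      linear_combination y * e1 - y ^ q * e0
    exact mul_left_cancel₀ ha h
  have hpx : x ^ q ^ 2 = (x ^ q) ^ q := by rw [← pow_mul, pow_two]
  have hpy : y ^ q ^ 2 = (y ^ q) ^ q := by rw [← pow_mul, pow_two]
  have keyq : x ^ q ^ 2 * y ^ q = x ^ q * y ^ q ^ 2 := by
    rw [hpx, hpy, ← mul_pow, ← mul_pow, key]
  have key2 : x ^ q ^ 2 * y = x * y ^ q ^ 2 := by
    have hyq : (y : K) ^ q ≠ 0 := pow_ne_zero _ hy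
    apply mul_right_cancel₀ hyq
    linear_combination y ^ q ^ 2 * key + y * keyq
  refine ⟨x / y, ?_⟩
  funext i
  fin_cases i <;>
    simp only [Pi.smul_apply, smul_eq_mul, Matrix.cons_val_zero, Matrix.cons_val_one,
      Matrix.head_cons, Matrix.cons_val_two, Matrix.tail_cons]
  · exact div_mul_cancel₀ x hy
  · field_simp
    change x * y ^ q = y * x ^ q
    linear_combination -key
  · field_simp
    change x * y ^ q ^ 2 = y * x ^ q ^ 2
    linear_combination -key2

/-- For `U = {(x, x^q, x^{q^2}) : x ∈ F_{q^4}}`, the point `⟨(0,0,1)⟩` of `PG(2, q^4)`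
lies on no line spanned by two distinct points of `L_U`; in particular `L_U` is not a
`1`-saturating linear set. -/
theorem pseudoregulus_not_saturating (q : ℕ) (hq : IsPrimePow q) (F K : Type*)
    [Field F] [Field K] [Fintype F] [Fintype K] [Algebra F K]
    (hF : Fintype.card F = q) (hK : Fintype.card K = q ^ 4)
    (U : Submodule F (Fin 3 → K))
    (hU : (U : Set (Fin 3 → K)) = {v | ∃ x : K, v = ![x, x ^ q, x ^ q ^ 2]}) :
    (¬ ∃ Q R : Projectivization K (Fin 3 → K),
        Q ∈ linSet F K U ∧ R ∈ linSet F K U ∧ Q ≠ R ∧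
          (Projectivization.mk K ![0, 0, 1] (by simp)).submodule ≤
            Q.submodule ⊔ R.submodule) ∧
      ¬ OneSat F K U := by
  have hq0 : q ≠ 0 := hq.one_lt.ne_bot
  have main : ¬ ∃ Q R : Projectivization K (Fin 3 → K),
        Q ∈ linSet F K U ∧ R ∈ linSet F K U ∧ Q ≠ R ∧
          (Projectivization.mk K ![0, 0, 1] (by simp)).submodule ≤
            Q.submodule ⊔ R.submodule := by
    rintro ⟨Q, R, hQ, hR, hne, hle⟩
    obtain ⟨u, hu0, huU, rfl⟩ := hQ
    obtain ⟨v, hv0, hvU, rfl⟩ := hR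
    obtain ⟨x, rfl⟩ : ∃ x : K, u = ![x, x ^ q, x ^ q ^ 2] := by
      have : u ∈ (U : Set (Fin 3 → K)) := huU
      rw [hU] at this; exact this
    obtain ⟨y, rfl⟩ : ∃ y : K, v = ![y, y ^ q, y ^ q ^ 2] := by
      have : v ∈ (U : Set (Fin 3 → K)) := hvU
      rw [hU] at this; exact this
    have hx : x ≠ 0 := by
      rintro rfl
      apply hu0
      funext i
      fin_cases i <;> simp [zero_pow hq0, zero_pow (pow_ne_zero 2 hq0)]
    have hy : y ≠ 0 := by
      rintro rfl
      apply hv0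
      funext i
      fin_cases i <;> simp [zero_pow hq0, zero_pow (pow_ne_zero 2 hq0)]
    rw [Projectivization.submodule_mk, Projectivization.submodule_mk,
      Projectivization.submodule_mk, ← Submodule.span_union,
      Set.singleton_union] at hle
    have hm : (![0, 0, 1] : Fin 3 → K) ∈ Submodule.span K
        {(![x, x ^ q, x ^ q ^ 2] : Fin 3 → K), ![y, y ^ q, y ^ q ^ 2]} :=
      hle (Submodule.mem_span_singleton_self _)
    obtain ⟨a, b, hab⟩ := Submodule.mem_span_pair.1 hm
    have e0 := congrFun hab 0
    have e1 := congrFun hab 1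
    have e2 := congrFun hab 2
    simp only [Pi.add_apply, Pi.smul_apply, smul_eq_mul, Matrix.cons_val_zero,
      Matrix.cons_val_one, Matrix.head_cons, Matrix.cons_val_two, Matrix.tail_cons] at e0 e1 e2
    obtain ⟨c, hc⟩ := key_lemma q hq0 K x y a b hx hy e0 e1 e2
    exact hne ((Projectivization.mk_eq_mk_iff' K _ _ hu0 hv0).2 ⟨c, hc⟩)
  exact ⟨main, fun h => main (h (Projectivization.mk K ![0, 0, 1] (by simp)))⟩
end
end

section
/- Let q be a prime power, let V be a finite-dimensional F_{q^m}-vector space, let U be a k-dimensional F_q-subspace of V, and let v ∈ V be a nonzero vector such that the point ⟨v⟩_{F_{q^m}} does not belong to L_U. Set U₁ = U ⊕ ⟨v⟩_{F_q}. Then every point of L_{U₁} \ L_U has weight one in L_{U₁}. Moreover, if ⟨v⟩_{F_{q^m}} ∩ ⟨U⟩_{F_{q^m}} = {0}, then |L_{U₁}| = |L_U| + q^k. -/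
noncomputable section

/-- Extension of a linear set by a point off `L_U`: every point of `L_{U₁} \ L_U` has
weight one in `L_{U₁}`, where `U₁ = U ⊕ ⟨v⟩_F`; moreover, if `⟨v⟩_K ∩ ⟨U⟩_K = 0` then
`|L_{U₁}| = |L_U| + q^k`. -/
theorem extension_point_lemma (q m k : ℕ) (hq : IsPrimePow q) (F K : Type*)
    [Field F] [Field K] [Fintype F] [Fintype K] [Algebra F K]
    (hF : Fintype.card F = q) (hK : Fintype.card K = q ^ m)
    (V : Type*) [AddCommGroup V] [Module K V] [Module F V] [IsScalarTower F K V]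
    [FiniteDimensional K V]
    (U : Submodule F V) (hU : Module.finrank F ↥U = k)
    (v : V) (hv : v ≠ 0)
    (hvL : Projectivization.mk K v hv ∉ linSet F K U) :
    (∀ P ∈ linSet F K (U ⊔ Submodule.span F {v}) \ linSet F K U,
        wtPt F K (U ⊔ Submodule.span F {v}) P = 1) ∧
      (Submodule.span K {v} ⊓ Submodule.span K (U : Set V) = ⊥ →
        (linSet F K (U ⊔ Submodule.span F {v})).ncard =
          (linSet F K U).ncard + q ^ k) := by
  classical
  haveI : Finite V := Module.finite_of_finite K
  set U₁ := U ⊔ Submodule.span F {v} with hU₁def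
  have hdec : ∀ x ∈ U₁, ∃ u ∈ U, ∃ a : F, x = u + a • v := by
    intro x hx
    rw [hU₁def, Submodule.mem_sup] at hx
    obtain ⟨u, hu, z, hz, rfl⟩ := hx
    rw [Submodule.mem_span_singleton] at hz
    obtain ⟨a, rfl⟩ := hz
    exact ⟨u, hu, a, rfl⟩
  constructor
  · rintro P ⟨hP1, hP2⟩
    obtain ⟨w, hw, hwU₁, rfl⟩ := hP1
    obtain ⟨u, hu, a, rfl⟩ := hdec w hwU₁
    have ha : a ≠ 0 := by
      rintro rfl
      exact hP2 ⟨u + (0 : F) • v, hw, by simpa using hu, rfl⟩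
    have key : U₁ ⊓ (Submodule.span K {u + a • v}).restrictScalars F
        = Submodule.span F {u + a • v} := by
      apply le_antisymm
      · rintro x ⟨hx1, hx2⟩
        obtain ⟨lam, hlam⟩ := Submodule.mem_span_singleton.mp hx2
        obtain ⟨u', hu', a', hxeq⟩ := hdec x hx1
        have hy : a • x - a' • (u + a • v) = a • u' - a' • u := by
          rw [hxeq]; module
        have hyU : a • x - a' • (u + a • v) ∈ U :=
          hy ▸ sub_mem (U.smul_mem a hu') (U.smul_mem a' hu)
        have hy2 : a • x - a' • (u + a • v)
            = (algebraMap F K a * lam - algebraMap F K a') • (u + a • v) := by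
          rw [← hlam, sub_smul, mul_smul, algebraMap_smul, algebraMap_smul]
        by_cases hc : algebraMap F K a * lam - algebraMap F K a' = 0
        · -- then lam = algebraMap (a'/a)
          have hA : algebraMap F K a ≠ 0 := by
            simpa using (algebraMap F K).injective.ne ha
          have hlam' : lam = algebraMap F K (a' * a⁻¹) := by
            have : algebraMap F K a * lam = algebraMap F K a' := by
              rwa [sub_eq_zero] at hc
            rw [map_mul, map_inv₀, eq_mul_inv_iff_mul_eq₀ hA, mul_comm]
            exact this
          rw [Submodule.mem_span_singleton]
          refine ⟨a' * a⁻¹, ?_⟩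
          rw [← algebraMap_smul K (a' * a⁻¹) (u + a • v), ← hlam', hlam]
        · exfalso
          have hyne : a • x - a' • (u + a • v) ≠ 0 := by
            rw [hy2]
            exact smul_ne_zero hc hw
          refine hP2 ⟨a • x - a' • (u + a • v), hyne, hyU, ?_⟩
          rw [Projectivization.mk_eq_mk_iff']
          refine ⟨(algebraMap F K a * lam - algebraMap F K a')⁻¹, ?_⟩
          rw [hy2, smul_smul, inv_mul_cancel₀ hc, one_smul]
      · rw [Submodule.span_le, Set.singleton_subset_iff]
        exact ⟨hwU₁, Submodule.subset_span rfl⟩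
    unfold wtPt wt
    rw [Projectivization.submodule_mk, key, finrank_span_singleton hw]
  · intro h0
    have hvKU : v ∉ Submodule.span K (U : Set V) := by
      intro h
      have : v ∈ Submodule.span K {v} ⊓ Submodule.span K (U : Set V) :=
        ⟨Submodule.mem_span_singleton_self v, h⟩
      rw [h0] at this
      exact hv this
    have hadd : ∀ u : V, u ∈ U → u + v ≠ 0 := by
      intro u hu h
      apply hvKU
      rw [eq_neg_of_add_eq_zero_right h]
      exact Submodule.neg_mem _ (Submodule.subset_span hu)
    set f : ↥U → Projectivization K V :=
      fun u => Projectivization.mk K ((u : V) + v) (hadd u u.2) with hf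
    have hzero : ∀ c : K, c • v ∈ Submodule.span K (U : Set V) → c = 0 := by
      intro c hc
      by_contra h'
      apply hvKU
      have : v = c⁻¹ • (c • v) := by rw [smul_smul, inv_mul_cancel₀ h', one_smul]
      rw [this]
      exact Submodule.smul_mem _ _ hc
    have hinj : Function.Injective f := by
      intro u₁ u₂ h
      rw [hf, Projectivization.mk_eq_mk_iff'] at h
      obtain ⟨c, hc⟩ := h
      have h1 : ((1 : K) - c) • v = c • (u₂ : V) - (u₁ : V) := by
        rw [smul_add] at hc
        have h2 : c • (u₂ : V) = (u₁ : V) + v - c • v := by rw [← hc]; abel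
        rw [sub_smul, one_smul, h2]
        abel
      have hc1 : c = 1 := by
        have := hzero ((1 : K) - c) (by
          rw [h1]
          exact sub_mem (Submodule.smul_mem _ _ (Submodule.subset_span u₂.2))
            (Submodule.subset_span u₁.2))
        have : c = 1 := by linear_combination -this
        exact this
      apply Subtype.ext
      have : (u₂ : V) + v = (u₁ : V) + v := by rw [← hc, hc1, one_smul]
      have := add_right_cancel this
      exact this.symm
    have hun : linSet F K U₁ = linSet F K U ∪ Set.range f := by
      ext P
      constructor
      · rintro ⟨w, hw, hwU₁, rfl⟩
        obtain ⟨u, hu, a, rfl⟩ := hdec w hwU₁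
        by_cases ha : a = 0
        · left
          subst ha
          refine ⟨u, by simpa using hw, hu, ?_⟩
          rw [Projectivization.mk_eq_mk_iff']
          exact ⟨1, by simp⟩
        · right
          refine ⟨⟨a⁻¹ • u, U.smul_mem _ hu⟩, ?_⟩
          rw [hf, Projectivization.mk_eq_mk_iff']
          refine ⟨algebraMap F K a⁻¹, ?_⟩
          rw [algebraMap_smul, smul_add, smul_smul, inv_mul_cancel₀ ha, one_smul]
      · rintro (⟨u, hu0, hu, rfl⟩ | ⟨u, rfl⟩)
        · exact ⟨u, hu0, Submodule.mem_sup_left hu, rfl⟩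
        · exact ⟨(u : V) + v, hadd u u.2,
            add_mem (Submodule.mem_sup_left u.2)
              (Submodule.mem_sup_right (Submodule.mem_span_singleton_self v)), rfl⟩
    have hdisj : Disjoint (linSet F K U) (Set.range f) := by
      rw [Set.disjoint_left]
      rintro P ⟨u', hu'0, hu', rfl⟩ ⟨u, hfu⟩
      rw [hf, Projectivization.mk_eq_mk_iff'] at hfu
      obtain ⟨c, hc⟩ := hfu
      have hcv : c • u' - (u : V) = v := by rw [hc]; abel
      have : (1 : K) = 0 := by
        apply hzero 1
        rw [one_smul, ← hcv]
        exact sub_mem (Submodule.smul_mem _ _ (Submodule.subset_span hu'))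
          (Submodule.subset_span u.2)
      exact one_ne_zero this
    haveI : Fintype ↥U := Fintype.ofFinite _
    haveI : Finite (Projectivization K V) := Quotient.finite _
    rw [hun, Set.ncard_union_eq hdisj (Set.toFinite _) (Set.toFinite _)]
    congr 1
    rw [← Nat.card_coe_set_eq, Nat.card_range_of_injective hinj,
      Nat.card_eq_fintype_card, Module.card_eq_pow_finrank (K := F) (V := ↥U), hF, hU]
end
end

section
/- (Singleton-like bound for the rank metric) Let q be a prime power and let C ⊆ F_{q^m}^n be an F_{q^m}-linear rank-metric code of F_{q^m}-dimension k ≥ 1 with minimum distance d. Then mk ≤ max{m,n}·(min{m,n} − d + 1). -/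
noncomputable section

/-- The rank weight of a vector `v ∈ K^n` over `F`: the `F`-dimension of the
`F`-span of its coordinates. -/
def rankWeight (F : Type*) {K : Type*} [Field F] [Field K] [Module F K] {n : ℕ}
    (v : Fin n → K) : ℕ :=
  Module.finrank F (Submodule.span F (Set.range v))

private lemma tail_card_le (N a : ℕ) : ({i : Fin N | a ≤ (i : ℕ)}).toFinset.card ≤ N - a := by
  classical
  have h1 : ∀ i ∈ ({i : Fin N | a ≤ (i : ℕ)}).toFinset,
      (fun i : Fin N => (i : ℕ) - a) i ∈ Finset.range (N - a) := by
    intro i hi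
    rw [Set.mem_toFinset, Set.mem_setOf_eq] at hi
    have hlt := i.isLt
    rw [Finset.mem_range]
    show (i : ℕ) - a < N - a
    omega
  have h2 : Set.InjOn (fun i : Fin N => (i : ℕ) - a) ↑({i : Fin N | a ≤ (i : ℕ)}).toFinset := by
    intro i hi j hj hij
    rw [Finset.mem_coe, Set.mem_toFinset, Set.mem_setOf_eq] at hi hj
    dsimp at hij
    exact Fin.ext (by omega)
  have := Finset.card_le_card_of_injOn _ h1 h2
  simpa using this

/-- Singleton-like bound for the rank metric: if `C ⊆ F_{q^m}^n` is an `F_{q^m}`-linear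
code of dimension `k ≥ 1` with minimum rank distance `d`, then
`m * k ≤ max m n * (min m n - d + 1)`. -/
theorem singleton_bound_rank_metric (q m n k d : ℕ) (hq : IsPrimePow q) (F K : Type*)
    [Field F] [Field K] [Fintype F] [Fintype K] [Algebra F K]
    (hF : Fintype.card F = q) (hK : Fintype.card K = q ^ m)
    (C : Submodule K (Fin n → K)) (hC : Module.finrank K ↥C = k) (hk : 1 ≤ k)
    (hd : IsLeast {w | ∃ c ∈ C, c ≠ 0 ∧ w = rankWeight F c} d) :
    m * k ≤ max m n * (min m n - d + 1) := by
  classical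
  have hq1 : 1 < q := hq.one_lt
  have hm : Module.finrank F K = m := by
    have h := Module.card_eq_pow_finrank (K := F) (V := K)
    rw [hF, hK] at h
    exact (Nat.pow_right_injective hq1 h.symm)
  obtain ⟨⟨c, hcC, hc0, hcd⟩, hlb⟩ := hd
  -- the minimum distance is at least 1
  have hd1 : 1 ≤ d := by
    rw [hcd]
    unfold rankWeight
    rw [Nat.one_le_iff_ne_zero]
    intro h0
    apply hc0
    have hbot : Submodule.span F (Set.range c) = ⊥ := Submodule.finrank_eq_zero.mp h0
    funext i
    have hi : c i ∈ Submodule.span F (Set.range c) :=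
      Submodule.subset_span (Set.mem_range_self i)
    rw [hbot] at hi
    simpa using hi
  -- every nonzero codeword has rank weight at least d
  have hge : ∀ v ∈ C, v ≠ 0 → d ≤ rankWeight F v := fun v hv hv0 =>
    hlb ⟨v, hv, hv0, rfl⟩
  rcases le_total n m with hnm | hmn
  · -- case n ≤ m : project onto the first n - (d-1) coordinates
    set t := n - (d - 1) with htdef
    have htn : t ≤ n := Nat.sub_le _ _
    let π : (Fin n → K) →ₗ[K] (Fin t → K) := LinearMap.funLeft K K (Fin.castLE htn)
    have hker : ∀ x : C, π.comp C.subtype x = 0 → x = 0 := by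
      intro x hx
      by_contra hx0
      have hxne : (x : Fin n → K) ≠ 0 := by
        simpa [Submodule.coe_eq_zero] using hx0
      have hdle : d ≤ rankWeight F (x : Fin n → K) := hge _ x.2 hxne
      -- the support of x is contained in the last d-1 coordinates
      have hzero : ∀ i : Fin n, (i : ℕ) < t → (x : Fin n → K) i = 0 := by
        intro i hi
        have := congrFun hx ⟨(i : ℕ), hi⟩
        simpa [π, LinearMap.funLeft, Fin.castLE] using this
      have hspan : Submodule.span F (Set.range (x : Fin n → K)) ≤
          Submodule.span F ((x : Fin n → K) '' {i : Fin n | t ≤ (i : ℕ)}) := by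
        rw [Submodule.span_le]
        rintro _ ⟨i, rfl⟩
        by_cases hi : t ≤ (i : ℕ)
        · exact Submodule.subset_span ⟨i, hi, rfl⟩
        · rw [hzero i (by omega)]
          exact Submodule.zero_mem _
      have hle : rankWeight F (x : Fin n → K) ≤ d - 1 := by
        haveI : Fintype ↥((x : Fin n → K) '' {i : Fin n | t ≤ (i : ℕ)}) := Fintype.ofFinite _
        calc rankWeight F (x : Fin n → K)
            ≤ Module.finrank F (Submodule.span F ((x : Fin n → K) '' {i : Fin n | t ≤ (i : ℕ)})) :=
              Submodule.finrank_mono hspan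
          _ ≤ ((x : Fin n → K) '' {i : Fin n | t ≤ (i : ℕ)}).toFinset.card :=
              finrank_span_le_card _
          _ ≤ ({i : Fin n | t ≤ (i : ℕ)}).toFinset.card := by
              rw [Set.toFinset_image]
              exact Finset.card_image_le
          _ ≤ n - t := tail_card_le n t
          _ ≤ d - 1 := by omega
      omega
    have hinj : Function.Injective (π.comp C.subtype) :=
      LinearMap.ker_eq_bot.mp (LinearMap.ker_eq_bot'.mpr hker)
    have hkt : k ≤ t := by
      have := LinearMap.finrank_le_finrank_of_injective hinj
      rwa [hC, Module.finrank_pi, Fintype.card_fin] at this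
    have hmax : max m n = m := max_eq_left hnm
    have hmin : min m n = n := min_eq_right hnm
    rw [hmax, hmin]
    exact Nat.mul_le_mul_left m (by omega)
  · -- case m ≤ n : take coordinates w.r.t. an F-basis of K
    set t := m - (d - 1) with htdef
    have htm : t ≤ m := Nat.sub_le _ _
    let b : Module.Basis (Fin m) F K := (Module.finBasis F K).reindex (finCongr hm)
    let L : (Fin n → K) →ₗ[F] (Fin n × Fin t → F) := LinearMap.pi fun p =>
      (Finsupp.lapply (Fin.castLE htm p.2)).comp
        ((b.repr.toLinearMap : K →ₗ[F] (Fin m →₀ F)).comp (LinearMap.proj (R := F) p.1))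
    set C' := C.restrictScalars F with hC'def
    have hker : ∀ x : C', L.comp C'.subtype x = 0 → x = 0 := by
      intro x hx
      by_contra hx0
      have hxC : (x : Fin n → K) ∈ C := x.2
      have hxne : (x : Fin n → K) ≠ 0 := by
        simpa [Submodule.coe_eq_zero] using hx0
      have hdle : d ≤ rankWeight F (x : Fin n → K) := hge _ hxC hxne
      have hzero : ∀ (i : Fin n) (j : Fin m), (j : ℕ) < t →
          b.repr ((x : Fin n → K) i) j = 0 := by
        intro i j hj
        have := congrFun hx (i, ⟨(j : ℕ), hj⟩)
        have h2 : Fin.castLE htm (⟨(j : ℕ), hj⟩ : Fin t) = j := Fin.ext rfl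
        simpa [L, h2] using this
      have hspan : Submodule.span F (Set.range (x : Fin n → K)) ≤
          Submodule.span F (⇑b '' {j : Fin m | t ≤ (j : ℕ)}) := by
        rw [Submodule.span_le]
        rintro _ ⟨i, rfl⟩
        apply (Module.Basis.mem_span_image b).mpr
        intro j hj
        simp only [Finset.coe_sort_coe, Finsupp.mem_support_iff, Finsupp.fun_support_eq,
          Set.mem_setOf_eq, Finset.mem_coe] at hj ⊢
        by_contra hjt
        exact hj (hzero i j (by omega))
      have hle : rankWeight F (x : Fin n → K) ≤ d - 1 := by
        haveI : Fintype ↥(⇑b '' {j : Fin m | t ≤ (j : ℕ)}) := Fintype.ofFinite _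
        calc rankWeight F (x : Fin n → K)
            ≤ Module.finrank F (Submodule.span F (⇑b '' {j : Fin m | t ≤ (j : ℕ)})) :=
              Submodule.finrank_mono hspan
          _ ≤ (⇑b '' {j : Fin m | t ≤ (j : ℕ)}).toFinset.card := finrank_span_le_card _
          _ ≤ ({j : Fin m | t ≤ (j : ℕ)}).toFinset.card := by
              rw [Set.toFinset_image]
              exact Finset.card_image_le
          _ ≤ m - t := tail_card_le m t
          _ ≤ d - 1 := by omega
      omega
    have hinj : Function.Injective (L.comp C'.subtype) :=
      LinearMap.ker_eq_bot.mp (LinearMap.ker_eq_bot'.mpr hker)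
    have hfr : Module.finrank F ↥C' ≤ n * t := by
      have := LinearMap.finrank_le_finrank_of_injective hinj
      rwa [Module.finrank_pi, Fintype.card_prod, Fintype.card_fin, Fintype.card_fin] at this
    have hCk : Module.finrank K ↥C' = k := by
      rw [← hC]
      exact LinearEquiv.finrank_eq (Submodule.restrictScalarsEquiv F K _ C)
    have hmk : Module.finrank F ↥C' = m * k := by
      rw [← Module.finrank_mul_finrank F K ↥C', hm, hCk]
    have hmax : max m n = n := max_eq_right hmn
    have hmin : min m n = m := min_eq_left hmn
    rw [hmax, hmin, ← hmk]
    calc Module.finrank F ↥C' ≤ n * t := hfr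
      _ ≤ n * (m - d + 1) := Nat.mul_le_mul_left n (by omega)
end
end

section
/- Let q be a prime power and let G be a k×n matrix over F_{q^m} whose rows are F_{q^m}-linearly independent and whose columns are F_q-linearly independent (i.e., G generates a non-degenerate [n,k]_{q^m/q} code C). Let U ⊆ F_{q^m}^k be the F_q-span of the columns of G. Then for every x ∈ F_{q^m}^k, the rank weight of the codeword xG satisfies w(xG) = n − dim_{F_q}(U ∩ x^⊥), where x^⊥ = {y ∈ F_{q^m}^k : x·y = 0} with respect to the standard inner product. In particular, the minimum distance of C equals n − max{dim_{F_q}(U ∩ H) : H an F_{q^m}-hyperplane of F_{q^m}^k}. -/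
noncomputable section

set_option linter.unusedSectionVars false
section Aux
variable {F K : Type*} [Field F] [Field K] [Algebra F K] {k : ℕ} [Finite K]

/-- The functional y ↦ ∑ x i * y i. -/
private def phiK (x : Fin k → K) : (Fin k → K) →ₗ[K] K :=
  ∑ i, x i • (LinearMap.proj i : (Fin k → K) →ₗ[K] K)

lemma phiK_apply (x y : Fin k → K) : phiK x y = ∑ i, x i * y i := by
  simp [phiK, smul_eq_mul]

lemma phiK_single (x : Fin k → K) (i : Fin k) :
    phiK x (fun j => if i = j then (1:K) else 0) = x i := by
  rw [phiK_apply]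
  simp [Finset.sum_ite_eq]

lemma phiK_eq_zero_iff (x : Fin k → K) : phiK x = 0 ↔ x = 0 := by
  constructor
  · intro h; funext i
    have := phiK_single x i
    rw [h] at this; simpa using this.symm
  · rintro rfl; apply LinearMap.ext; intro y; simp [phiK_apply]

/-- Every K-linear functional on Fin k → K is a phiK. -/
lemma exists_phiK (f : (Fin k → K) →ₗ[K] K) : ∃ x, phiK x = f := by
  refine ⟨fun i => f (fun j => if i = j then 1 else 0), ?_⟩
  apply LinearMap.ext; intro y
  rw [phiK_apply, LinearMap.pi_apply_eq_sum_univ f y]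
  simp [smul_eq_mul, mul_comm]

lemma finrank_map_phi (U : Submodule F (Fin k → K)) [FiniteDimensional F (Fin k → K)]
    (f : (Fin k → K) →ₗ[K] K) :
    Module.finrank F (U.map ((f.restrictScalars F)))
      + Module.finrank F (U ⊓ (LinearMap.ker f).restrictScalars F : Submodule F (Fin k → K))
      = Module.finrank F U := by
  have h := LinearMap.finrank_range_add_finrank_ker ((f.restrictScalars F).domRestrict U)
  rw [LinearMap.range_domRestrict, LinearMap.ker_domRestrict] at h
  rw [← h]
  congr 1
  rw [← Submodule.finrank_map_subtype_eq U, Submodule.map_comap_subtype,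
    LinearMap.ker_restrictScalars]

lemma finrank_ker_phiK [FiniteDimensional K (Fin k → K)] (x : Fin k → K) (hx : x ≠ 0) :
    Module.finrank K (LinearMap.ker (phiK x)) = k - 1 := by
  have hphi : phiK x ≠ 0 := by rw [Ne, phiK_eq_zero_iff]; exact hx
  have hr : LinearMap.range (phiK x) = ⊤ := by
    rcases eq_bot_or_eq_top (LinearMap.range (phiK x)) with h | h
    · exact absurd (LinearMap.range_eq_bot.mp h) hphi
    · exact h
  have h := LinearMap.finrank_range_add_finrank_ker (phiK x)
  rw [hr, finrank_top, Module.finrank_self, Module.finrank_pi, Fintype.card_fin] at h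
  omega

lemma exists_x_of_hyperplane [FiniteDimensional K (Fin k → K)] (hk : 1 ≤ k)
    (H : Submodule K (Fin k → K)) (hH : Module.finrank K H = k - 1) :
    ∃ x : Fin k → K, x ≠ 0 ∧ LinearMap.ker (phiK x) = H := by
  have hpi : Module.finrank K (Fin k → K) = k := by
    rw [Module.finrank_pi, Fintype.card_fin]
  have hq : Module.finrank K ((Fin k → K) ⧸ H) = 1 := by
    have := Submodule.finrank_quotient_add_finrank H
    rw [hpi, hH] at this; omega
  let b := Module.finBasisOfFinrankEq K ((Fin k → K) ⧸ H) hq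
  let e : ((Fin k → K) ⧸ H) ≃ₗ[K] K :=
    b.equivFun ≪≫ₗ LinearEquiv.funUnique (Fin 1) K K
  obtain ⟨x, hx⟩ := exists_phiK (e.toLinearMap ∘ₗ H.mkQ)
  have hker : LinearMap.ker (phiK x) = H := by
    rw [hx, LinearEquiv.ker_comp, Submodule.ker_mkQ]
  refine ⟨x, ?_, hker⟩
  rintro rfl
  rw [(phiK_eq_zero_iff (0 : Fin k → K)).mpr rfl, LinearMap.ker_zero] at hker
  have : Module.finrank K (⊤ : Submodule K (Fin k → K)) = k := by rw [finrank_top, hpi]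
  rw [hker, hH] at this; omega

end Aux

/-- Geometric description of rank weights: if `G` is a generator matrix of a
non-degenerate code (rows `K`-independent, columns `F`-independent) and `U` is the
`F`-span of the columns of `G`, then `w(xG) = n - dim_F (U ∩ x^⊥)` for all `x`, and the
minimum distance equals `n - max {dim_F (U ∩ H) : H hyperplane}`. -/
theorem weight_via_system (q m n k : ℕ) (hq : IsPrimePow q) (F K : Type*)
    [Field F] [Field K] [Fintype F] [Fintype K] [Algebra F K]
    (hF : Fintype.card F = q) (hK : Fintype.card K = q ^ m)
    (G : Matrix (Fin k) (Fin n) K)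
    (hrows : LinearIndependent K G)
    (hcols : LinearIndependent F G.transpose) :
    (∀ x : Fin k → K,
      rankWeight F (Matrix.vecMul x G) =
        n - Module.finrank F
          (Submodule.span F (Set.range G.transpose) ⊓
            Submodule.restrictScalars F
              (LinearMap.ker (∑ i, x i • (LinearMap.proj i : (Fin k → K) →ₗ[K] K))) :
            Submodule F (Fin k → K))) ∧
    (∀ d wmax : ℕ,
      IsLeast {w | ∃ x : Fin k → K, Matrix.vecMul x G ≠ 0 ∧
        w = rankWeight F (Matrix.vecMul x G)} d →
      IsGreatest {w | ∃ H : Submodule K (Fin k → K), Module.finrank K ↥H = k - 1 ∧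
        w = Module.finrank F
          (Submodule.span F (Set.range G.transpose) ⊓ H.restrictScalars F :
            Submodule F (Fin k → K))} wmax →
      d = n - wmax) := by
  set U : Submodule F (Fin k → K) := Submodule.span F (Set.range G.transpose) with hUdef
  have hU : Module.finrank F U = n := by
    rw [hUdef, finrank_span_eq_card hcols, Fintype.card_fin]
  have part1 : ∀ x : Fin k → K,
      rankWeight F (Matrix.vecMul x G) =
        n - Module.finrank F
          (U ⊓ Submodule.restrictScalars F (LinearMap.ker (phiK x)) :
            Submodule F (Fin k → K)) := by
    intro x
    have hcomp : Matrix.vecMul x G = ((phiK x).restrictScalars F) ∘ G.transpose := by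
      funext j
      simp [Matrix.vecMul, dotProduct, phiK_apply, Matrix.transpose_apply]; exact (phiK_apply x _).symm
    have hspan : Submodule.span F (Set.range (Matrix.vecMul x G)) =
        U.map ((phiK x).restrictScalars F) := by
      rw [hUdef, ← Submodule.span_image, hcomp]; exact congrArg _ (Set.range_comp _ _)
    have h := finrank_map_phi U (phiK x)
    rw [hU] at h
    rw [rankWeight, hspan]
    omega
  refine ⟨part1, ?_⟩
  intro d wmax hd hwmax
  obtain ⟨⟨x0, hx0ne, hx0w⟩, hdlb⟩ := hd
  obtain ⟨⟨H, hHr, hHw⟩, hwub⟩ := hwmax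
  have hx0 : x0 ≠ 0 := by
    rintro rfl; exact hx0ne (Matrix.zero_vecMul G)
  have hk : 1 ≤ k := by
    obtain ⟨i, -⟩ := Function.ne_iff.mp hx0
    exact i.pos
  have hvec : ∀ x : Fin k → K, Matrix.vecMul x G = 0 → x = 0 := by
    intro x hx
    have hsum : ∑ i, x i • G i = 0 := by
      funext j
      have := congrFun hx j
      simpa [Matrix.vecMul, dotProduct, Finset.sum_apply] using this
    funext i
    exact Fintype.linearIndependent_iff.mp hrows x hsum i
  -- d ≥ n - wmax
  have h1 : n - wmax ≤ d := by
    have ht0 : Module.finrank F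
        (U ⊓ Submodule.restrictScalars F (LinearMap.ker (phiK x0)) :
          Submodule F (Fin k → K)) ≤ wmax := by
      exact hwub ⟨LinearMap.ker (phiK x0), finrank_ker_phiK x0 hx0, rfl⟩
    rw [hx0w, part1 x0]
    omega
  -- d ≤ n - wmax
  obtain ⟨x, hxne, hxker⟩ := exists_x_of_hyperplane hk H hHr
  have hxG : Matrix.vecMul x G ≠ 0 := fun h => hxne (hvec x h)
  have h2 : d ≤ n - wmax := by
    have := hdlb ⟨x, hxG, rfl⟩
    rw [part1 x, hxker, ← hHw] at this
    exact this
  omega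
end
end

section
/- Let q be a prime power, let 2 ≤ n ≤ m, and let U be an F_q-subspace of F_{q^m}^{n−1} with dim_{F_q}(U) = n such that ⟨U⟩_{F_{q^m}} = F_{q^m}^{n−1} and dim_{F_q}(U ∩ H) ≤ n−2 for every F_{q^m}-hyperplane H of F_{q^m}^{n−1} (i.e., the linear set L_U of rank n in PG(n−2,q^m) is scattered with respect to the hyperplanes). Then there exist an invertible F_{q^m}-linear map φ ∈ GL(n−1, q^m) and an F_q-subspace Z of F_{q^m} with dim_{F_q}(Z) = n such that φ(U) = {(x, x^q, x^{q^2}, …, x^{q^{n−2}}) : x ∈ Z}. -/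
noncomputable section

open Polynomial Module Submodule LinearMap Matrix Finset

section Helpers

variable {F K : Type*} [Field F] [Field K] [Fintype F] [Fintype K] [Algebra F K]
variable {q : ℕ}

lemma frobF (hF : Fintype.card F = q) (f : F) (i : ℕ) :
    (algebraMap F K f) ^ q ^ i = algebraMap F K f := by
  rw [← map_pow]; congr 1; rw [← hF]; exact FiniteField.pow_card_pow i f

lemma sum_pow_qq {p e : ℕ} [Fact p.Prime] [CharP K p] (hq : q = p ^ e) (t : ℕ)
    {ι : Type*} (s : Finset ι) (f : ι → K) :
    (∑ j ∈ s, f j) ^ q ^ t = ∑ j ∈ s, f j ^ q ^ t := by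
  subst hq
  rw [← pow_mul]
  exact map_sum (iterateFrobenius K p (e * t)) f s

lemma qpoly_eq_zero {p e : ℕ} [Fact p.Prime] [CharP K p] (hq : q = p ^ e)
    (hF : Fintype.card F = q) (hq2 : 2 ≤ q)
    {n s : ℕ} (hsn : s ≤ n) (w : Fin n → K) (hw : LinearIndependent F w)
    (c : Fin s → K) (h : ∀ j, ∑ i : Fin s, c i * w j ^ q ^ (i : ℕ) = 0) :
    c = 0 := by
  classical
  by_contra hc
  obtain ⟨i0, hi0⟩ : ∃ i0, c i0 ≠ 0 := by
    by_contra h'; push_neg at h'; exact hc (funext h')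
  have hn1 : 1 ≤ n := by have := i0.isLt; omega
  set P : K[X] := ∑ i : Fin s, Polynomial.C (c i) * Polynomial.X ^ (q ^ (i : ℕ)) with hPdef
  have hPco : P.coeff (q ^ (i0 : ℕ)) = c i0 := by
    rw [hPdef, Polynomial.finset_sum_coeff, Finset.sum_eq_single i0]
    · simp [Polynomial.coeff_C_mul, Polynomial.coeff_X_pow]
    · intro b _ hb
      have hne : q ^ (b : ℕ) ≠ q ^ (i0 : ℕ) := fun hh =>
        hb (Fin.ext (Nat.pow_right_injective hq2 hh))
      simp [Polynomial.coeff_C_mul, Polynomial.coeff_X_pow, Ne.symm hne]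
    · simp
  have hPne : P ≠ 0 := fun h0 => hi0 (by rw [h0, Polynomial.coeff_zero] at hPco; exact hPco.symm)
  have hdeg : P.natDegree ≤ q ^ (n - 1) := by
    apply Polynomial.natDegree_sum_le_of_forall_le
    intro i _
    refine le_trans (Polynomial.natDegree_C_mul_le _ _) ?_
    rw [Polynomial.natDegree_X_pow]
    exact Nat.pow_le_pow_right (by omega) (by omega)
  -- the F-linear map x ↦ ∑ c i * x ^ q^i
  let L : K →ₗ[F] K :=
    { toFun := fun x => ∑ i : Fin s, c i * x ^ q ^ (i : ℕ)
      map_add' := by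
        intro x y
        rw [← Finset.sum_add_distrib]
        refine Finset.sum_congr rfl fun i _ => ?_
        have : (x + y) ^ q ^ (i : ℕ) = x ^ q ^ (i : ℕ) + y ^ q ^ (i : ℕ) := by
          have := sum_pow_qq (K := K) hq (i : ℕ) (Finset.univ : Finset (Fin 2)) ![x, y]
          simpa [Fin.sum_univ_two] using this
        rw [this, mul_add]
      map_smul' := by
        intro f x
        simp only [RingHom.id_apply]
        rw [Finset.smul_sum]
        refine Finset.sum_congr rfl fun i _ => ?_
        rw [Algebra.smul_def, Algebra.smul_def, mul_pow, frobF hF]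
        ring }
  have hker : Submodule.span F (Set.range w) ≤ LinearMap.ker L := by
    rw [Submodule.span_le]
    rintro _ ⟨j, rfl⟩
    exact h j
  -- cardinality contradiction
  have hSfr : Module.finrank F (Submodule.span F (Set.range w)) = n := by
    rw [finrank_span_eq_card hw, Fintype.card_fin]
  have hScard : Fintype.card (Submodule.span F (Set.range w)) = q ^ n := by
    rw [card_eq_pow_finrank (K := F), hF, hSfr]
  set Zf : Finset K := ((Submodule.span F (Set.range w) : Set K)).toFinset with hZf
  have hZcard : Zf.card = q ^ n := by
    rw [hZf, Set.toFinset_card]; exact hScard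
  have hsubset : Zf.val ⊆ P.roots := by
    intro x hx
    have hx' : x ∈ Submodule.span F (Set.range w) := by
      have : x ∈ Zf := hx
      rwa [hZf, Set.mem_toFinset] at this
    have hLx : L x = 0 := hker hx'
    have hev : P.eval x = 0 := by
      rw [hPdef]
      simp only [Polynomial.eval_finset_sum, Polynomial.eval_mul, Polynomial.eval_pow,
        Polynomial.eval_C, Polynomial.eval_X]
      exact hLx
    exact Polynomial.mem_roots'.mpr ⟨hPne, hev⟩
  have hle := Polynomial.card_le_degree_of_subset_roots hsubset
  rw [hZcard] at hle
  have : q ^ n ≤ q ^ (n - 1) := le_trans hle hdeg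
  have hlt : q ^ (n - 1) < q ^ n := Nat.pow_lt_pow_right (by omega) (by omega)
  omega

-- kernel of a nonzero functional
lemma ker_functional_finrank {K V : Type*} [Field K] [AddCommGroup V] [Module K V]
    [FiniteDimensional K V] (ψ : V →ₗ[K] K) (h : ψ ≠ 0) :
    Module.finrank K (LinearMap.ker ψ) + 1 = Module.finrank K V := by
  have h1 : LinearMap.range ψ = ⊤ := by
    rcases (Ideal.eq_bot_or_top (LinearMap.range ψ)) with h0 | h0
    · exact absurd (LinearMap.range_eq_bot.mp h0) h
    · exact h0
  have := LinearMap.finrank_range_add_finrank_ker ψ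
  rw [h1, finrank_top, Module.finrank_self] at this
  omega

end Helpers

theorem aux_main (q m N : ℕ) (p e : ℕ) (hp : Fact p.Prime) (hqe : q = p ^ e)
    (hq2 : 2 ≤ q) (hnm : N + 2 ≤ m)
    (F K : Type*) [Field F] [Field K] [Fintype F] [Fintype K] [Algebra F K]
    (hF : Fintype.card F = q) (hK : Fintype.card K = q ^ m)
    (U : Submodule F (Fin (N + 1) → K)) (hrank : Module.finrank F ↥U = N + 2)
    (hspan : Submodule.span K (U : Set (Fin (N + 1) → K)) = ⊤)
    (hscat : ∀ H : Submodule K (Fin (N + 1) → K), Module.finrank K ↥H = N →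
      Module.finrank F (U ⊓ H.restrictScalars F : Submodule F (Fin (N + 1) → K)) ≤ N) :
    ∃ (φ : (Fin (N + 1) → K) ≃ₗ[K] (Fin (N + 1) → K)) (Z : Submodule F K),
      Module.finrank F ↥Z = N + 2 ∧
      φ '' (U : Set (Fin (N + 1) → K)) =
        {w | ∃ x ∈ Z, w = fun i : Fin (N + 1) => x ^ q ^ (i : ℕ)} := by
  classical
  haveI := hp
  -- characteristic
  haveI hCF : CharP F p := by
    obtain ⟨n', hp', hcard⟩ := FiniteField.card F (ringChar F)
    have : ringChar F = p := by
      have hdvd : p ∣ ringChar F ^ (n' : ℕ) := by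
        rw [← hcard, hF, hqe]; exact dvd_pow_self p (by
          rcases Nat.eq_zero_or_pos e with h | h
          · exfalso; rw [h, pow_zero] at hqe; omega
          · omega)
      have := hp.out.dvd_of_dvd_pow hdvd
      exact ((Nat.prime_dvd_prime_iff_eq hp.out hp').mp this).symm
    rw [← this]; infer_instance
  haveI hCK : CharP K p := charP_of_injective_algebraMap (algebraMap F K).injective p
  haveI : FiniteDimensional F K := Module.Finite.of_finite
  have hq1 : 1 ≤ q := by omega
  have hqpow0 : ∀ t : ℕ, q ^ t ≠ 0 := fun t => pow_ne_zero t (by omega)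
  -- Frobenius basics
  have hKpow : ∀ x : K, x ^ q ^ m = x := by
    intro x; rw [← hK]; exact FiniteField.pow_card x
  have powAdd : ∀ (x : K) (t : ℕ), x ^ q ^ (m + t) = x ^ q ^ t := by
    intro x t
    rw [pow_add, pow_mul, hKpow]
  have powPow : ∀ (x : K) (s t : ℕ), (x ^ q ^ s) ^ q ^ t = x ^ q ^ (s + t) := by
    intro x s t
    rw [← pow_mul, ← pow_add]
  -- basis of U
  let bU : Basis (Fin (N + 2)) F U := Module.finBasisOfFinrankEq F U hrank
  let u : Fin (N + 2) → (Fin (N + 1) → K) := fun j => (bU j : Fin (N + 1) → K)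
  have hUspan : Submodule.span F (Set.range u) = U := by
    have h1 : Set.range u = U.subtype '' Set.range bU := by
      rw [← Set.range_comp]; rfl
    rw [h1, ← Submodule.map_span, bU.span_eq, Submodule.map_top, Submodule.range_subtype]
  -- the matrix whose columns are the basis vectors
  let Mmat : Matrix (Fin (N + 1)) (Fin (N + 2)) K := Matrix.of fun i j => u j i
  let T : (Fin (N + 2) → K) →ₗ[K] (Fin (N + 1) → K) := Mmat.mulVecLin
  have hTsurj : Function.Surjective T := by
    rw [← LinearMap.range_eq_top]
    show LinearMap.range Mmat.mulVecLin = ⊤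
    rw [Matrix.range_mulVecLin]
    have : Set.range Mmat.col = Set.range u := by
      ext v; constructor
      · rintro ⟨j, rfl⟩; exact ⟨j, rfl⟩
      · rintro ⟨j, rfl⟩; exact ⟨j, rfl⟩
    rw [this]
    calc Submodule.span K (Set.range u)
        = Submodule.span K (Submodule.span F (Set.range u) : Set (Fin (N + 1) → K)) :=
          (Submodule.span_span_of_tower F K _).symm
      _ = ⊤ := by rw [hUspan, hspan]
  have hfrT : Module.finrank K (LinearMap.ker T) = 1 := by
    have := LinearMap.finrank_range_add_finrank_ker T
    rw [LinearMap.range_eq_top.mpr hTsurj, finrank_top] at this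
    simp [Module.finrank_pi] at this ⊢
    omega
  obtain ⟨a, haT, hane⟩ : ∃ a, a ∈ LinearMap.ker T ∧ a ≠ 0 := by
    apply Submodule.exists_mem_ne_zero_of_ne_bot
    intro h0
    rw [h0] at hfrT
    simp at hfrT
  have hTa : Mmat.mulVec a = 0 := haT
  -- the entries of `a` are linearly independent over F
  have haF : LinearIndependent F (fun j : Fin (N + 2) => a j) := by
    rw [Fintype.linearIndependent_iff]
    intro g hg
    by_contra hgn
    push_neg at hgn
    obtain ⟨j0, hj0⟩ := hgn
    set f' : Fin (N + 2) → K := fun j => algebraMap F K (g j) with hf'def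
    have hf'a : ∑ j, f' j * a j = 0 := by
      rw [← hg]
      refine Finset.sum_congr rfl fun j _ => ?_
      rw [hf'def, Algebra.smul_def]
    -- the functional x ↦ ∑ x j * a j
    let la : (Fin (N + 2) → K) →ₗ[K] K :=
      { toFun := fun x => ∑ j, x j * a j
        map_add' := by intros; simp [add_mul, Finset.sum_add_distrib]
        map_smul' := by intros; simp [Finset.mul_sum, mul_assoc] }
    have hlane : la ≠ 0 := by
      obtain ⟨j1, hj1⟩ := Function.ne_iff.mp hane
      intro h0
      apply hj1
      have : la (Pi.single j1 1) = a j1 := by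
        simp [la, Pi.single_apply]
      rw [h0] at this
      simpa using this.symm
    have hkerla : Module.finrank K (LinearMap.ker la) = N + 1 := by
      have := ker_functional_finrank la hlane
      simp [Module.finrank_pi] at this
      omega
    -- range of transpose = ker la
    have hranT : LinearMap.range (Mmatᵀ.mulVecLin) = LinearMap.ker la := by
      apply Submodule.eq_of_le_of_finrank_le
      · rintro _ ⟨c, rfl⟩
        show (∑ j, (Mmatᵀ.mulVec c) j * a j) = 0
        have : ∑ j, (Mmatᵀ.mulVec c) j * a j = Mmatᵀ.mulVec c ⬝ᵥ a := rfl
        rw [this, Matrix.mulVec_transpose, ← Matrix.dotProduct_mulVec, hTa,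
          dotProduct_zero]
      · rw [hkerla]
        show N + 1 ≤ Matrix.rank Mmatᵀ
        rw [Matrix.rank_transpose]
        show N + 1 ≤ Module.finrank K (LinearMap.range Mmat.mulVecLin)
        rw [LinearMap.range_eq_top.mpr hTsurj, finrank_top, Module.finrank_pi]
        simp
    have hf'mem : f' ∈ LinearMap.range (Mmatᵀ.mulVecLin) := by
      rw [hranT]; exact hf'a
    obtain ⟨c, hc⟩ := hf'mem
    have hcmv : Mmatᵀ.mulVec c = f' := hc
    have hcne : c ≠ 0 := by
      rintro rfl
      rw [Matrix.mulVec_zero] at hcmv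
      have : algebraMap F K (g j0) = 0 := (congrFun hcmv j0).symm
      exact hj0 ((_root_.map_eq_zero (algebraMap F K)).mp this)
    -- the hyperplane
    let lc : (Fin (N + 1) → K) →ₗ[K] K :=
      { toFun := fun v => ∑ i, v i * c i
        map_add' := by intros; simp [add_mul, Finset.sum_add_distrib]
        map_smul' := by intros; simp [Finset.mul_sum, mul_assoc] }
    have hlcne : lc ≠ 0 := by
      obtain ⟨i1, hi1⟩ := Function.ne_iff.mp hcne
      intro h0
      apply hi1
      have : lc (Pi.single i1 1) = c i1 := by
        simp [lc, Pi.single_apply]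
      rw [h0] at this
      simpa using this.symm
    have hHrank : Module.finrank K (LinearMap.ker lc) = N := by
      have := ker_functional_finrank lc hlcne
      simp [Module.finrank_pi] at this
      omega
    have hlcu : ∀ j, lc (u j) = f' j := by
      intro j
      show (∑ i, u j i * c i) = f' j
      rw [← hcmv]
      rfl
    -- the F-linear functional on U
    let Ψ : U →ₗ[F] K := (lc.restrictScalars F).comp U.subtype
    have hΨrange : LinearMap.range Ψ ≤ LinearMap.range (Algebra.linearMap F K) := by
      rintro _ ⟨x, rfl⟩
      have hxrepr : (x : Fin (N + 1) → K) = ∑ j, bU.repr x j • u j := by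
        conv_lhs => rw [← bU.sum_repr x]
        push_cast [Submodule.coe_sum]
        rfl
      have : Ψ x = ∑ j, bU.repr x j • lc (u j) := by
        show lc (x : Fin (N + 1) → K) = _
        rw [hxrepr, map_sum]
        refine Finset.sum_congr rfl fun j _ => ?_
        exact (lc.restrictScalars F).map_smul (bU.repr x j) (u j)
      rw [this]
      refine ⟨∑ j, bU.repr x j * g j, ?_⟩
      rw [map_sum]
      refine Finset.sum_congr rfl fun j _ => ?_
      rw [hlcu j, hf'def]
      show algebraMap F K (bU.repr x j * g j) = _
      rw [_root_.map_mul, ← Algebra.smul_def]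
    have hΨker : N + 1 ≤ Module.finrank F (LinearMap.ker Ψ) := by
      have h1 := LinearMap.finrank_range_add_finrank_ker Ψ
      rw [hrank] at h1
      have h2 : Module.finrank F (LinearMap.range Ψ) ≤ 1 := by
        refine le_trans (Submodule.finrank_mono hΨrange) ?_
        refine le_trans (LinearMap.finrank_range_le _) ?_
        simp
      omega
    have hmap : Submodule.map U.subtype (LinearMap.ker Ψ) ≤
        U ⊓ (LinearMap.ker lc).restrictScalars F := by
      rintro _ ⟨x, hx, rfl⟩
      refine ⟨x.2, ?_⟩
      show (x : Fin (N + 1) → K) ∈ LinearMap.ker lc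
      exact hx
    have hfin : N + 1 ≤ Module.finrank F
        (U ⊓ (LinearMap.ker lc).restrictScalars F : Submodule F (Fin (N + 1) → K)) := by
      refine le_trans ?_ (Submodule.finrank_mono hmap)
      rw [Submodule.finrank_map_subtype_eq]
      exact hΨker
    have := hscat (LinearMap.ker lc) hHrank
    omega
  -- the twisted families
  let w : Fin (N + 2) → (Fin (N + 2) → K) := fun k => fun j => a j ^ q ^ (m + 1 - (k : ℕ))
  have hwInd : LinearIndependent K w := by
    rw [Fintype.linearIndependent_iff]
    intro e' he'
    have hrel : ∀ j, ∑ k : Fin (N + 2), (e' k ^ q ^ N) * a j ^ q ^ (N + 1 - (k : ℕ)) = 0 := by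
      intro j
      have h1 : ∑ k : Fin (N + 2), e' k * a j ^ q ^ (m + 1 - (k : ℕ)) = 0 := by
        have := congrFun he' j
        simpa [w, Finset.sum_apply] using this
      have h2 := congrArg (fun x => x ^ q ^ N) h1
      simp only [zero_pow (hqpow0 N)] at h2
      rw [sum_pow_qq hqe] at h2
      rw [← h2]
      refine Finset.sum_congr rfl fun k _ => ?_
      rw [mul_pow, powPow]
      have hk : (k : ℕ) ≤ N + 1 := by omega
      have h3 : m + 1 - (k : ℕ) + N = m + (N + 1 - (k : ℕ)) := by omega
      rw [h3, powAdd]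
    -- reindex by Fin.rev
    have hrel2 : ∀ j, ∑ i : Fin (N + 2), (e' (Fin.rev i) ^ q ^ N) * a j ^ q ^ (i : ℕ) = 0 := by
      intro j
      rw [← hrel j]
      apply Fintype.sum_bijective Fin.rev (Fin.rev_bijective)
      intro i
      have h4 : (N + 1 : ℕ) - ((Fin.rev i : Fin (N + 2)) : ℕ) = (i : ℕ) := by
        rw [Fin.val_rev]; omega
      rw [h4]
    have hd := qpoly_eq_zero hqe hF hq2 (le_refl (N + 2)) (fun j => a j) haF
      (fun i => e' (Fin.rev i) ^ q ^ N) hrel2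
    intro k
    have := congrFun hd (Fin.rev k)
    rw [Fin.rev_rev] at this
    simpa [pow_eq_zero_iff (hqpow0 N)] using this
  let b : Fin (N + 1) → (Fin (N + 2) → K) := fun i => fun j => a j ^ q ^ (m - (i : ℕ))
  have hbw : b = fun i => w (i.succ) := by
    funext i j
    show a j ^ q ^ (m - (i : ℕ)) = a j ^ q ^ (m + 1 - ((i : ℕ) + 1))
    congr 2
    omega
  have hbInd : LinearIndependent K b := by
    rw [hbw]
    exact hwInd.comp Fin.succ (Fin.succ_injective _)
  -- find z in the kernel of the matrix with rows b
  let Bmat : Matrix (Fin (N + 1)) (Fin (N + 2)) K := Matrix.of fun i j => b i j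
  obtain ⟨z, hzker, hzne⟩ : ∃ z, z ∈ LinearMap.ker Bmat.mulVecLin ∧ z ≠ 0 := by
    apply Submodule.exists_mem_ne_zero_of_ne_bot
    intro h0
    have hinj : Function.Injective Bmat.mulVecLin := by
      rw [← LinearMap.ker_eq_bot]; exact h0
    have := LinearMap.finrank_le_finrank_of_injective hinj
    simp [Module.finrank_pi] at this
  have hz : ∀ i, ∑ j, b i j * z j = 0 := by
    intro i
    have := congrFun (show Bmat.mulVec z = 0 from hzker) i
    simpa [Bmat, Matrix.mulVec, dotProduct] using this
  have hGa : ∀ i : Fin (N + 1), ∑ j, a j * z j ^ q ^ (i : ℕ) = 0 := by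
    intro i
    have h1 := hz i
    have h2 := congrArg (fun x => x ^ q ^ (i : ℕ)) h1
    simp only [zero_pow (hqpow0 (i : ℕ))] at h2
    rw [sum_pow_qq hqe] at h2
    rw [← h2]
    refine Finset.sum_congr rfl fun j _ => ?_
    rw [mul_pow, powPow]
    have h3 : m - (i : ℕ) + (i : ℕ) = m := by have := i.isLt; omega
    rw [h3, hKpow]
  -- the entries of z are linearly independent over F
  have hzF : LinearIndependent F (fun j : Fin (N + 2) => z j) := by
    rw [Fintype.linearIndependent_iff]
    intro g hg
    by_contra hgn
    push_neg at hgn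
    obtain ⟨j0, hj0⟩ := hgn
    set f' : Fin (N + 2) → K := fun j => algebraMap F K (g j) with hf'def
    have hf'z : ∑ j, f' j * z j = 0 := by
      rw [← hg]
      refine Finset.sum_congr rfl fun j _ => ?_
      rw [hf'def, Algebra.smul_def]
    -- the functional x ↦ ∑ x j * z j
    let lz : (Fin (N + 2) → K) →ₗ[K] K :=
      { toFun := fun x => ∑ j, x j * z j
        map_add' := by intros; simp [add_mul, Finset.sum_add_distrib]
        map_smul' := by intros; simp [Finset.mul_sum, mul_assoc] }
    have hlzne : lz ≠ 0 := by
      obtain ⟨j1, hj1⟩ := Function.ne_iff.mp hzne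
      intro h0
      apply hj1
      have : lz (Pi.single j1 1) = z j1 := by
        simp [lz, Pi.single_apply]
      rw [h0] at this
      simpa using this.symm
    have hkerlz : Module.finrank K (LinearMap.ker lz) = N + 1 := by
      have := ker_functional_finrank lz hlzne
      simp [Module.finrank_pi] at this
      omega
    have hspanb : Submodule.span K (Set.range b) = LinearMap.ker lz := by
      apply Submodule.eq_of_le_of_finrank_le
      · rw [Submodule.span_le]
        rintro _ ⟨i, rfl⟩
        exact hz i
      · rw [hkerlz, finrank_span_eq_card hbInd, Fintype.card_fin]
    have hf'mem : f' ∈ Submodule.span K (Set.range b) := by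
      rw [hspanb]; exact hf'z
    rw [mem_span_range_iff_exists_fun] at hf'mem
    obtain ⟨c, hc⟩ := hf'mem
    have hc1 : ∀ j, ∑ i : Fin (N + 1), c i * a j ^ q ^ (m - (i : ℕ)) = f' j := by
      intro j
      have := congrFun hc j
      simpa [b, Finset.sum_apply] using this
    have hc2 : ∀ j, ∑ i : Fin (N + 1), c i ^ q * a j ^ q ^ (m + 1 - (i : ℕ)) = f' j := by
      intro j
      have h1 : (∑ i : Fin (N + 1), c i * a j ^ q ^ (m - (i : ℕ))) ^ q ^ (1 : ℕ)
          = f' j ^ q ^ (1 : ℕ) := by rw [hc1 j]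
      rw [sum_pow_qq hqe] at h1
      have h2 : f' j ^ q ^ (1 : ℕ) = f' j := frobF hF (g j) 1
      rw [h2] at h1
      rw [← h1]
      refine Finset.sum_congr rfl fun i _ => ?_
      rw [mul_pow, powPow, pow_one]
      have hi : (i : ℕ) ≤ N := by omega
      have h3 : m - (i : ℕ) + 1 = m + 1 - (i : ℕ) := by omega
      rw [h3]
    -- assemble a linear relation on the w family
    let c' : ℕ → K := fun t => if h : t < N + 1 then c ⟨t, h⟩ else 0
    let E : Fin (N + 2) → K := fun k =>
      c' (k : ℕ) ^ q - if (k : ℕ) = 0 then 0 else c' ((k : ℕ) - 1)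
    have hEw : ∀ j, ∑ k : Fin (N + 2), E k * w k j = 0 := by
      intro j
      have hsplit : ∀ k : Fin (N + 2), E k * w k j =
          c' (k : ℕ) ^ q * w k j - (if (k : ℕ) = 0 then 0 else c' ((k : ℕ) - 1)) * w k j := by
        intro k
        rw [sub_mul]
      rw [Finset.sum_congr rfl (fun k _ => hsplit k), Finset.sum_sub_distrib]
      have hsum1 : ∑ k : Fin (N + 2), c' (k : ℕ) ^ q * w k j = f' j := by
        rw [Fin.sum_univ_castSucc]
        have hlast : c' ((Fin.last (N + 1) : Fin (N + 2)) : ℕ) ^ q *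
            w (Fin.last (N + 1)) j = 0 := by
          have : c' ((Fin.last (N + 1) : Fin (N + 2)) : ℕ) = 0 := by
            show c' (N + 1) = 0
            simp [c']
          rw [this, zero_pow (by omega : q ≠ 0), zero_mul]
        rw [hlast, add_zero, ← hc2 j]
        refine Finset.sum_congr rfl fun i _ => ?_
        have h1 : c' ((Fin.castSucc i : Fin (N + 2)) : ℕ) = c i := by
          show c' (i : ℕ) = c i
          simp [c', i.isLt]; intro h; omega
        rw [h1]
        rfl
      have hsum2 : ∑ k : Fin (N + 2),
          (if (k : ℕ) = 0 then 0 else c' ((k : ℕ) - 1)) * w k j = f' j := by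
        rw [Fin.sum_univ_succ]
        have h0 : (if ((0 : Fin (N + 2)) : ℕ) = 0 then (0 : K)
            else c' (((0 : Fin (N + 2)) : ℕ) - 1)) * w 0 j = 0 := by
          simp
        rw [h0, zero_add, ← hc1 j]
        refine Finset.sum_congr rfl fun i _ => ?_
        have h1 : ((Fin.succ i : Fin (N + 2)) : ℕ) = (i : ℕ) + 1 := rfl
        rw [h1]
        simp only [Nat.add_sub_cancel, if_neg (Nat.succ_ne_zero _)]
        have h2 : c' (i : ℕ) = c i := by simp [c', i.isLt]; intro h; omega
        rw [h2]
        have h3 : w (Fin.succ i) j = a j ^ q ^ (m - (i : ℕ)) := by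
          show a j ^ q ^ (m + 1 - ((i : ℕ) + 1)) = a j ^ q ^ (m - (i : ℕ))
          congr 2
          omega
        rw [h3]
      rw [hsum1, hsum2, sub_self]
    have hE0 : ∀ k, E k = 0 := by
      have hEsum : ∑ k : Fin (N + 2), E k • w k = 0 := by
        funext j
        rw [Finset.sum_apply]
        simpa using hEw j
      exact Fintype.linearIndependent_iff.mp hwInd E hEsum
    -- downward induction: all coefficients vanish
    have hc'top : c' (N + 1) = 0 := by simp [c']
    have hrec : ∀ t, t ≤ N → c' t = c' (t + 1) ^ q := by
      intro t ht
      have := hE0 ⟨t + 1, by omega⟩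
      have h1 : c' (t + 1) ^ q - c' t = 0 := by
        simpa [E] using this
      exact (sub_eq_zero.mp h1).symm
    have hcall : ∀ t, t ≤ N + 1 → c' (N + 1 - t) = 0 := by
      intro t
      induction t with
      | zero => intro _; simpa using hc'top
      | succ s ih =>
        intro hs
        have h1 : N + 1 - (s + 1) ≤ N := by omega
        have h2 := hrec (N + 1 - (s + 1)) h1
        have h3 : N + 1 - (s + 1) + 1 = N + 1 - s := by omega
        rw [h3] at h2
        rw [h2, ih (by omega), zero_pow (by omega : q ≠ 0)]
    have hczero : ∀ i : Fin (N + 1), c i = 0 := by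
      intro i
      have h1 : c' (i : ℕ) = c i := by simp [c', i.isLt]; intro h; omega
      have h2 : (i : ℕ) = N + 1 - (N + 1 - (i : ℕ)) := by omega
      rw [← h1, h2]
      exact hcall _ (by omega)
    have : f' = 0 := by
      rw [← hc]
      funext j
      rw [Finset.sum_apply]
      simp [hczero]
    have : algebraMap F K (g j0) = 0 := congrFun this j0
    exact hj0 ((_root_.map_eq_zero (algebraMap F K)).mp this)
  -- the Gabidulin matrix
  let Gmat : Matrix (Fin (N + 1)) (Fin (N + 2)) K :=
    Matrix.of fun i j => z j ^ q ^ (i : ℕ)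
  let G : (Fin (N + 2) → K) →ₗ[K] (Fin (N + 1) → K) := Gmat.mulVecLin
  have hGTinj : Function.Injective (Gmatᵀ.mulVecLin) := by
    rw [← LinearMap.ker_eq_bot]
    rw [Submodule.eq_bot_iff]
    intro c hc
    have hcrel : ∀ j, ∑ i : Fin (N + 1), c i * z j ^ q ^ (i : ℕ) = 0 := by
      intro j
      have := congrFun (show Gmatᵀ.mulVec c = 0 from hc) j
      simpa [Gmat, Matrix.mulVec, dotProduct, Matrix.transpose_apply, mul_comm] using this
    exact qpoly_eq_zero hqe hF hq2 (by omega : N + 1 ≤ N + 2)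
      (fun j : Fin (N + 2) => z j) hzF c hcrel
  have hGsurj : Function.Surjective G := by
    rw [← LinearMap.range_eq_top]
    apply Submodule.eq_top_of_finrank_eq
    have h1 : Matrix.rank Gmatᵀ = N + 1 := by
      show Module.finrank K (LinearMap.range Gmatᵀ.mulVecLin) = N + 1
      rw [LinearMap.finrank_range_of_inj hGTinj, Module.finrank_pi]
      simp
    have h2 : Matrix.rank Gmat = N + 1 := by rw [← Matrix.rank_transpose, h1]
    show Module.finrank K (LinearMap.range Gmat.mulVecLin) = _
    rw [show Module.finrank K (LinearMap.range Gmat.mulVecLin) = Matrix.rank Gmat from rfl, h2,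
      Module.finrank_pi]
    simp
  -- kernels of T and G are both spanned by a
  have hGa0 : G a = 0 := by
    funext i
    show Gmat.mulVec a i = 0
    rw [show Gmat.mulVec a i = ∑ j, z j ^ q ^ (i : ℕ) * a j from rfl]
    rw [← hGa i]
    exact Finset.sum_congr rfl fun j _ => mul_comm _ _
  have hkerT : LinearMap.ker T = Submodule.span K {a} := by
    symm
    apply Submodule.eq_of_le_of_finrank_le
    · rw [Submodule.span_singleton_le_iff_mem]; exact haT
    · rw [hfrT, finrank_span_singleton hane]
  have hkerG : LinearMap.ker G = Submodule.span K {a} := by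
    have hfrG : Module.finrank K (LinearMap.ker G) = 1 := by
      have := LinearMap.finrank_range_add_finrank_ker G
      rw [LinearMap.range_eq_top.mpr hGsurj, finrank_top] at this
      simp [Module.finrank_pi] at this ⊢
      omega
    symm
    apply Submodule.eq_of_le_of_finrank_le
    · rw [Submodule.span_singleton_le_iff_mem]; exact hGa0
    · rw [hfrG, finrank_span_singleton hane]
  -- construct the equivalence
  let eT := LinearMap.quotKerEquivOfSurjective T hTsurj
  let eG := LinearMap.quotKerEquivOfSurjective G hGsurj
  let eQ := Submodule.quotEquivOfEq _ _ (hkerT.trans hkerG.symm)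
  let φ : (Fin (N + 1) → K) ≃ₗ[K] (Fin (N + 1) → K) := (eT.symm.trans eQ).trans eG
  have hφT : ∀ x, φ (T x) = G x := by
    intro x
    have h1 : ∀ y, eT (Submodule.Quotient.mk y) = T y := fun y => rfl
    have h2 : ∀ y, eG (Submodule.Quotient.mk y) = G y := fun y => rfl
    have h3 : eT.symm (T x) = Submodule.Quotient.mk x := by
      rw [← h1 x, LinearEquiv.symm_apply_apply]
    show eG (eQ (eT.symm (T x))) = G x
    rw [h3, Submodule.quotEquivOfEq_mk, h2]
  -- the subspace Z
  let Z : Submodule F K := Submodule.span F (Set.range fun j : Fin (N + 2) => z j)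
  have hZr : Module.finrank F Z = N + 2 := by
    rw [finrank_span_eq_card hzF, Fintype.card_fin]
  -- membership in U via T
  have hTalg : ∀ r : Fin (N + 2) → F,
      T (fun j => algebraMap F K (r j)) = ∑ j, r j • u j := by
    intro r
    funext i
    rw [show T (fun j => algebraMap F K (r j)) i
      = ∑ j, u j i * algebraMap F K (r j) from rfl]
    rw [Finset.sum_apply]
    refine Finset.sum_congr rfl fun j _ => ?_
    rw [Pi.smul_apply, Algebra.smul_def, mul_comm]
  have hUmem : ∀ v, v ∈ U ↔ ∃ r : Fin (N + 2) → F,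
      v = T (fun j => algebraMap F K (r j)) := by
    intro v
    constructor
    · intro hv
      refine ⟨fun j => bU.repr ⟨v, hv⟩ j, ?_⟩
      have hxrepr : v = ∑ j, bU.repr ⟨v, hv⟩ j • u j := by
        conv_lhs => rw [show v = ((⟨v, hv⟩ : U) : Fin (N + 1) → K) from rfl,
          ← bU.sum_repr ⟨v, hv⟩]
        push_cast [Submodule.coe_sum]
        rfl
      rw [hTalg, ← hxrepr]
    · rintro ⟨r, rfl⟩
      rw [hTalg]
      exact Submodule.sum_mem U fun j _ => Submodule.smul_mem U (r j) (bU j).2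
  -- G applied to F-combinations gives q-power vectors
  have hGr : ∀ r : Fin (N + 2) → F, G (fun j => algebraMap F K (r j))
      = fun i : Fin (N + 1) => (∑ j, r j • z j) ^ q ^ (i : ℕ) := by
    intro r
    funext i
    rw [show G (fun j => algebraMap F K (r j)) i
      = ∑ j, z j ^ q ^ (i : ℕ) * algebraMap F K (r j) from rfl]
    rw [sum_pow_qq hqe]
    refine Finset.sum_congr rfl fun j _ => ?_
    rw [Algebra.smul_def, mul_pow, frobF hF, mul_comm]
  refine ⟨φ, Z, hZr, ?_⟩
  ext v
  constructor
  · rintro ⟨uv, huv, rfl⟩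
    obtain ⟨r, rfl⟩ := (hUmem uv).mp huv
    refine ⟨∑ j, r j • z j, ?_, ?_⟩
    · exact Submodule.sum_mem Z fun j _ => Submodule.smul_mem Z (r j)
        (Submodule.subset_span ⟨j, rfl⟩)
    · rw [hφT, hGr]
  · rintro ⟨x, hx, rfl⟩
    rw [mem_span_range_iff_exists_fun] at hx
    obtain ⟨r, hr⟩ := hx
    refine ⟨T (fun j => algebraMap F K (r j)), (hUmem _).mpr ⟨r, rfl⟩, ?_⟩
    rw [hφT, hGr, hr]




/-- A rank-`n` linear set in `PG(n-2, q^m)` scattered with respect to the hyperplanes is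
`GL(n-1, q^m)`-equivalent to `{(x, x^q, …, x^{q^{n-2}}) : x ∈ Z}` for some `F_q`-subspace
`Z` of `F_{q^m}` of dimension `n`. -/
theorem scattered_wrt_hyperplanes_gabidulin (q m n : ℕ) (hq : IsPrimePow q)
    (hn : 2 ≤ n) (hnm : n ≤ m)
    (F K : Type*) [Field F] [Field K] [Fintype F] [Fintype K] [Algebra F K]
    (hF : Fintype.card F = q) (hK : Fintype.card K = q ^ m)
    (U : Submodule F (Fin (n - 1) → K)) (hrank : Module.finrank F ↥U = n)
    (hspan : Submodule.span K (U : Set (Fin (n - 1) → K)) = ⊤)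
    (hscat : ∀ H : Submodule K (Fin (n - 1) → K), Module.finrank K ↥H = n - 2 →
      Module.finrank F (U ⊓ H.restrictScalars F : Submodule F (Fin (n - 1) → K))
        ≤ n - 2) :
    ∃ (φ : (Fin (n - 1) → K) ≃ₗ[K] (Fin (n - 1) → K)) (Z : Submodule F K),
      Module.finrank F ↥Z = n ∧
      φ '' (U : Set (Fin (n - 1) → K)) =
        {w | ∃ x ∈ Z, w = fun i : Fin (n - 1) => x ^ q ^ (i : ℕ)} := by
  have hq2 : 2 ≤ q := hq.two_le
  obtain ⟨N, rfl⟩ : ∃ N, n = N + 2 := ⟨n - 2, by omega⟩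
  obtain ⟨p, e, hp, he, hpe⟩ := hq
  haveI hfp : Fact p.Prime := ⟨Nat.prime_iff.mpr hp⟩
  exact aux_main q m N p e hfp hpe.symm hq2 (by omega) F K hF hK U hrank hspan hscat
end
end

section
/- Let q be a prime power, let n ∈ {1,2,3}, let k ≤ n ≤ m, and let U be an F_q-subspace of F_{q^m}^{k} with dim_{F_q}(U) = n such that ⟨U⟩_{F_{q^m}} = F_{q^m}^{k} and dim_{F_q}(U ∩ H) ≤ k−1 for every F_{q^m}-hyperplane H of F_{q^m}^{k} (i.e., the linear set L_U of rank n in PG(k−1,q^m) is scattered with respect to the hyperplanes). Then there exist an invertible F_{q^m}-linear map φ ∈ GL(k, q^m) and an F_q-subspace Z of F_{q^m} with dim_{F_q}(Z) = n such that φ(U) = {(x, x^q, …, x^{q^{k−1}}) : x ∈ Z}. -/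
noncomputable section

section AuxChar

variable {q : ℕ} {F K : Type*} [Field F] [Field K] [Fintype F] [Fintype K] [Algebra F K]

lemma aux_char (hF : Fintype.card F = q) :
    ∃ r e : ℕ, r.Prime ∧ 0 < e ∧ q = r ^ e ∧ CharP K r := by
  set r := ringChar F with hr
  haveI : CharP F r := ringChar.charP F
  have hrp : r.Prime := CharP.char_is_prime F r
  obtain ⟨n, -, hcard⟩ := FiniteField.card F r
  haveI : CharP K r := charP_of_injective_algebraMap (algebraMap F K).injective r
  exact ⟨r, n, hrp, n.2, by rw [← hF, hcard], inferInstance⟩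

lemma aux_add_pow (hF : Fintype.card F = q) (x y : K) (t : ℕ) :
    (x + y) ^ q ^ t = x ^ q ^ t + y ^ q ^ t := by
  obtain ⟨r, e, hrp, he, rfl, hchar⟩ := aux_char (K := K) hF
  haveI := Fact.mk hrp
  simp only [← pow_mul]
  exact add_pow_char_pow x y r (e * t)

lemma aux_add_pow_q (hF : Fintype.card F = q) (x y : K) :
    (x + y) ^ q = x ^ q + y ^ q := by
  simpa using aux_add_pow hF x y 1

lemma aux_sub_pow_q (hF : Fintype.card F = q) (x y : K) :
    (x - y) ^ q = x ^ q - y ^ q := by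
  have h := aux_add_pow_q hF (x - y) y
  rw [sub_add_cancel] at h
  exact eq_sub_of_add_eq h.symm

lemma aux_algebraMap_pow (hF : Fintype.card F = q) (a : F) (t : ℕ) :
    (algebraMap F K a) ^ q ^ t = algebraMap F K a := by
  rw [← map_pow]
  congr 1
  subst hF
  exact FiniteField.pow_card_pow t a

/-- The `q^t` power map as an `F`-linear endomorphism of `K`. -/
def frobPow (q : ℕ) (F K : Type*) [Field F] [Field K] [Fintype F] [Fintype K] [Algebra F K]
    (hF : Fintype.card F = q) (t : ℕ) : K →ₗ[F] K where
  toFun x := x ^ q ^ t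
  map_add' x y := aux_add_pow hF x y t
  map_smul' a x := by
    simp only [Algebra.smul_def, RingHom.id_apply, mul_pow, aux_algebraMap_pow hF a t]

@[simp] lemma frobPow_apply (hF : Fintype.card F = q) (t : ℕ) (x : K) :
    frobPow q F K hF t x = x ^ q ^ t := rfl

lemma aux_qroot (hF : Fintype.card F = q) (hq : IsPrimePow q) (c : K) : ∃ a : K, a ^ q = c := by
  have hinj : Function.Injective (fun x : K => x ^ q) := by
    intro x y hxy
    simp only at hxy
    have h0 : (x - y) ^ q = 0 := by rw [aux_sub_pow_q hF, hxy]; ring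
    have h1 : x - y = 0 := pow_eq_zero_iff (n := q) hq.ne_zero |>.mp h0
    exact sub_eq_zero.mp h1
  have hsurj := Finite.injective_iff_surjective.mp hinj
  obtain ⟨a, ha⟩ := hsurj c
  exact ⟨a, ha⟩

open Polynomial in
lemma aux_qpoly_eq_zero (hF : Fintype.card F = q) (hq : IsPrimePow q) {t : ℕ}
    (c : Fin t → K) (W : Submodule F K) (hW : t - 1 < Module.finrank F W)
    (hvan : ∀ x ∈ W, ∑ i : Fin t, c i * x ^ q ^ (i : ℕ) = 0) : c = 0 := by
  have hq2 : 2 ≤ q := hq.two_le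
  set P : K[X] := ∑ i : Fin t, C (c i) * X ^ q ^ (i : ℕ) with hP
  have heval : ∀ x : ↥W, P.eval (x : K) = 0 := by
    intro x
    rw [hP, eval_finset_sum]
    simpa using hvan x x.2
  have hdeg : P.natDegree ≤ q ^ (t - 1) := by
    apply natDegree_sum_le_of_forall_le
    intro i _
    refine (natDegree_C_mul_le _ _).trans ?_
    rw [natDegree_X_pow]
    exact Nat.pow_le_pow_right (by omega) (by omega)
  haveI : Fintype ↥W := Fintype.ofFinite _
  have hcard : Fintype.card ↥W = q ^ Module.finrank F W := by
    rw [Module.card_eq_pow_finrank (K := F) (V := ↥W), hF]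
  have hP0 : P = 0 := by
    apply eq_zero_of_natDegree_lt_card_of_eval_eq_zero P (f := fun x : ↥W => (x : K))
      Subtype.val_injective heval
    rw [hcard]
    exact lt_of_le_of_lt hdeg (Nat.pow_lt_pow_right (by omega) hW)
  funext i
  have : P.coeff (q ^ (i : ℕ)) = c i := by
    rw [hP, finset_sum_coeff]
    rw [Finset.sum_eq_single i]
    · simp
    · intro j _ hji
      simp only [coeff_C_mul, coeff_X_pow]
      rw [if_neg, mul_zero]
      intro h
      exact hji (Fin.ext (Nat.pow_right_injective hq2 h.symm))
    · simp
  rw [hP0] at this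
  simpa using this.symm

open Polynomial in
lemma aux_fixed (hF : Fintype.card F = q) (hq : IsPrimePow q) (x : K) (hx : x ^ q = x) :
    ∃ a : F, algebraMap F K a = x := by
  classical
  have hq2 : 2 ≤ q := hq.two_le
  by_contra hcon
  push_neg at hcon
  set P : K[X] := X ^ q - X with hP
  set T : Finset K := insert x (Finset.univ.image (algebraMap F K)) with hT
  have hTcard : q + 1 ≤ T.card := by
    rw [hT, Finset.card_insert_of_notMem]
    · rw [Finset.card_image_of_injective _ (algebraMap F K).injective]
      simp [hF]
    · simp only [Finset.mem_image, Finset.mem_univ, true_and]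
      rintro ⟨a, ha⟩
      exact hcon a ha
  have hP0 : P = 0 := by
    apply eq_zero_of_natDegree_lt_card_of_eval_eq_zero' P T
    · intro y hy
      rcases Finset.mem_insert.mp hy with rfl | hy
      · simp [hP, hx]
      · obtain ⟨a, -, rfl⟩ := Finset.mem_image.mp hy
        have : (algebraMap F K a) ^ q = algebraMap F K a := by
          simpa using aux_algebraMap_pow hF a 1
        simp [hP, this]
    · calc P.natDegree ≤ max (X ^ q : K[X]).natDegree (X : K[X]).natDegree :=
            natDegree_sub_le _ _
        _ ≤ q := by simp [natDegree_X_pow]; omega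
        _ < T.card := by omega
  have : P.coeff q = 1 := by
    rw [hP, coeff_sub, coeff_X_pow, if_pos rfl, coeff_X, if_neg (by omega), sub_zero]
  rw [hP0] at this
  simp at this

lemma aux_moore (hF : Fintype.card F = q) (hq : IsPrimePow q) {k : ℕ}
    (z : Fin k → K) (hz : LinearIndependent F z) :
    LinearIndependent K (fun j : Fin k => fun i : Fin k => z j ^ q ^ (i : ℕ)) := by
  rcases Nat.eq_zero_or_pos k with rfl | hk
  · exact linearIndependent_empty_type
  set M : Matrix (Fin k) (Fin k) K := Matrix.of fun i j => z j ^ q ^ (i : ℕ) with hM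
  have hrows : LinearIndependent K (fun i => M i) := by
    rw [Fintype.linearIndependent_iff]
    intro g hg
    have hvan : ∀ x ∈ Submodule.span F (Set.range z), ∑ i : Fin k, g i * x ^ q ^ (i : ℕ) = 0 := by
      set L : K →ₗ[F] K := ∑ i : Fin k, g i • frobPow q F K hF i with hL
      have hsub : Submodule.span F (Set.range z) ≤ LinearMap.ker L := by
        rw [Submodule.span_le]
        rintro - ⟨j, rfl⟩
        have := congr_fun hg j
        simp only [Finset.sum_apply, Pi.smul_apply, Pi.zero_apply, smul_eq_mul] at this
        simp only [LinearMap.mem_ker, SetLike.mem_coe, hL, LinearMap.sum_apply,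
          LinearMap.smul_apply, frobPow_apply, smul_eq_mul]
        simpa [hM] using this
      intro x hx
      have := hsub hx
      simpa [hL] using this
    have := aux_qpoly_eq_zero hF hq g (Submodule.span F (Set.range z)) ?_ hvan
    · exact fun i => congr_fun this i
    · rw [finrank_span_eq_card hz, Fintype.card_fin]
      omega
  have hunit : IsUnit M := Matrix.linearIndependent_rows_iff_isUnit.mp hrows
  have hunitT : IsUnit M.transpose := (Matrix.isUnit_transpose M).mpr hunit
  have hres := Matrix.linearIndependent_rows_iff_isUnit.mpr hunitT
  have heq : (fun j : Fin k => fun i : Fin k => z j ^ q ^ (i : ℕ)) = fun j => M.transpose j := by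
    funext j i
    simp [hM, Matrix.transpose_apply]
  rw [heq]
  exact hres

/-- The set of "pseudoregulus-type" vectors, as an `F`-submodule. -/
def auxG (q : ℕ) (F K : Type*) [Field F] [Field K] [Fintype F] [Fintype K] [Algebra F K]
    (hF : Fintype.card F = q) (hq : IsPrimePow q) (k : ℕ) [NeZero k] :
    Submodule F (Fin k → K) where
  carrier := {v | ∀ i : Fin k, v i = (v 0) ^ q ^ (i : ℕ)}
  add_mem' := by
    intro a b ha hb i
    simp only [Pi.add_apply, ha i, hb i, aux_add_pow hF]
  zero_mem' := by
    intro i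
    simp only [Pi.zero_apply]
    rw [zero_pow (pow_ne_zero _ hq.ne_zero)]
  smul_mem' := by
    intro t v hv i
    simp only [Pi.smul_apply, hv i, Algebra.smul_def, mul_pow, aux_algebraMap_pow hF]

lemma mem_auxG_iff (hF : Fintype.card F = q) (hq : IsPrimePow q) {k : ℕ} [NeZero k]
    (v : Fin k → K) : v ∈ auxG q F K hF hq k ↔ ∀ i : Fin k, v i = (v 0) ^ q ^ (i : ℕ) :=
  Iff.rfl

lemma aux_package {n k : ℕ} [NeZero k] (hF : Fintype.card F = q) (hq : IsPrimePow q)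
    (U : Submodule F (Fin k → K)) (hrank : Module.finrank F ↥U = n)
    (φ : (Fin k → K) ≃ₗ[K] (Fin k → K))
    (hφ : ∀ u ∈ U, ∀ i : Fin k, φ u i = (φ u 0) ^ q ^ (i : ℕ)) :
    ∃ Z : Submodule F K, Module.finrank F ↥Z = n ∧
      φ '' (U : Set (Fin k → K)) = {w | ∃ x ∈ Z, w = fun i : Fin k => x ^ q ^ (i : ℕ)} := by
  classical
  set φF : (Fin k → K) →ₗ[F] (Fin k → K) :=
    (LinearEquiv.restrictScalars F φ).toLinearMap with hφF
  set gF : (Fin k → K) →ₗ[F] K :=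
    ((LinearMap.proj (0 : Fin k) : (Fin k → K) →ₗ[K] K).restrictScalars F).comp φF with hgF
  have hgF_apply : ∀ v, gF v = φ v 0 := fun v => rfl
  set Z : Submodule F K := U.map gF with hZ
  have hker : ∀ u ∈ U, gF u = 0 → u = 0 := by
    intro u hu h0
    have hzero : φ u = 0 := by
      funext i
      rw [hφ u hu i, ← hgF_apply, h0, Pi.zero_apply,
        zero_pow (pow_ne_zero _ hq.ne_zero)]
    exact φ.injective (show φ u = φ 0 by rw [map_zero]; exact hzero)
  refine ⟨Z, ?_, ?_⟩
  · set gU : ↥U →ₗ[F] K := gF.comp U.subtype with hgU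
    have hinj : Function.Injective gU := by
      rw [LinearMap.ker_eq_bot.symm, LinearMap.ker_eq_bot']
      intro u h0
      exact Subtype.ext (hker u u.2 h0)
    have hr : LinearMap.range gU = Z := by
      rw [hgU, LinearMap.range_comp, Submodule.range_subtype, hZ]
    rw [← hr, LinearMap.finrank_range_of_inj hinj, hrank]
  · ext w
    constructor
    · rintro ⟨u, hu, rfl⟩
      refine ⟨gF u, Submodule.mem_map_of_mem hu, ?_⟩
      funext i
      rw [hφ u hu i, hgF_apply]
    · rintro ⟨x, hx, rfl⟩
      obtain ⟨u, hu, rfl⟩ := hx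
      refine ⟨u, hu, ?_⟩
      funext i
      rw [hφ u hu i, hgF_apply]

lemma aux_keqn {n : ℕ} [NeZero n] (hF : Fintype.card F = q) (hK : Fintype.card K = q ^ m)
    (hq : IsPrimePow q) (hnm : n ≤ m) (U : Submodule F (Fin n → K))
    (hrank : Module.finrank F ↥U = n)
    (hspan : Submodule.span K (U : Set (Fin n → K)) = ⊤) :
    ∃ φ : (Fin n → K) ≃ₗ[K] (Fin n → K),
      ∀ u ∈ U, ∀ i : Fin n, φ u i = (φ u 0) ^ q ^ (i : ℕ) := by
  classical
  haveI : Module.Finite F K := Module.Finite.of_finite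
  haveI : Nonempty (Fin n) := ⟨0⟩
  have hfr : Module.finrank F K = m := by
    have h1 : Fintype.card K = Fintype.card F ^ Module.finrank F K :=
      Module.card_eq_pow_finrank (K := F) (V := K)
    rw [hF, hK] at h1
    exact (Nat.pow_right_injective hq.two_le h1.symm)
  -- choose n F-linearly independent elements of K
  set bK := Module.finBasis F K with hbK
  set z : Fin n → K := fun j => bK (Fin.castLE (by omega) j) with hz
  have hzind : LinearIndependent F z := by
    apply bK.linearIndependent.comp
    exact Fin.castLE_injective _
  have moore := aux_moore hF hq z hzind
  set cB : Module.Basis (Fin n) K (Fin n → K) :=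
    basisOfLinearIndependentOfCardEqFinrank moore (by simp) with hcB
  -- a K-basis of the ambient space inside U
  set bU : Module.Basis (Fin n) F ↥U := Module.finBasisOfFinrankEq F ↥U hrank with hbU
  set uvec : Fin n → (Fin n → K) := fun j => ((bU j : ↥U) : Fin n → K) with huvec
  have hUeq : U = Submodule.span F (Set.range uvec) := by
    conv_lhs => rw [← Submodule.map_subtype_top U]
    rw [← bU.span_eq, Submodule.map_span]
    congr 1
    rw [← Set.range_comp]
    rfl
  have htop : ⊤ ≤ Submodule.span K (Set.range uvec) := by
    rw [← hspan]
    apply Submodule.span_le.mpr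
    intro u hu
    rw [hUeq] at hu
    exact Submodule.span_subset_span F K _ hu
  set bAmb : Module.Basis (Fin n) K (Fin n → K) :=
    basisOfTopLeSpanOfCardEqFinrank uvec htop (by simp) with hbAmb
  set φ := bAmb.equiv cB (Equiv.refl _) with hφdef
  refine ⟨φ, ?_⟩
  have hsub : U ≤ (auxG q F K hF hq n).comap
      ((LinearEquiv.restrictScalars F φ).toLinearMap) := by
    rw [hUeq]
    apply Submodule.span_le.mpr
    rintro - ⟨j, rfl⟩
    simp only [SetLike.mem_coe, Submodule.mem_comap]
    have h1 : (LinearEquiv.restrictScalars F φ).toLinearMap (uvec j) = cB j := by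
      have h2 : uvec j = bAmb j := by
        rw [hbAmb, coe_basisOfTopLeSpanOfCardEqFinrank]
      show φ (uvec j) = cB j
      rw [h2, hφdef, bAmb.equiv_apply, Equiv.refl_apply]
    rw [h1]
    have h3 : cB j = fun i : Fin n => z j ^ q ^ (i : ℕ) := by
      rw [hcB, coe_basisOfLinearIndependentOfCardEqFinrank]
    rw [mem_auxG_iff hF hq, h3]
    intro i
    simp
  intro u hu i
  have hmem := hsub hu
  simp only [Submodule.mem_comap] at hmem
  exact (mem_auxG_iff hF hq _).mp hmem i

set_option maxHeartbeats 2000000 in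
lemma aux_k2n3 (hF : Fintype.card F = q) (hq : IsPrimePow q)
    (U : Submodule F (Fin 2 → K)) (hrank : Module.finrank F ↥U = 3)
    (hscat : ∀ H : Submodule K (Fin 2 → K), Module.finrank K ↥H = 1 →
      Module.finrank F ↥(U ⊓ H.restrictScalars F) ≤ 1) :
    ∃ φ : (Fin 2 → K) ≃ₗ[K] (Fin 2 → K),
      ∀ u ∈ U, ∀ i : Fin 2, φ u i = (φ u 0) ^ q ^ (i : ℕ) := by
  classical
  haveI : Module.Finite F K := Module.Finite.of_finite
  set bU3 : Module.Basis (Fin 3) F ↥U := Module.finBasisOfFinrankEq F ↥U hrank with hbU3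
  haveI : Module.Finite K (↥U →ₗ[F] K) := Module.Finite.equiv (bU3.constr K (M' := K))
  have hdim3 : Module.finrank K (↥U →ₗ[F] K) = 3 := by
    rw [← (bU3.constr K (M' := K)).finrank_eq]
    simp
  set π : Fin 2 → (↥U →ₗ[F] K) := fun i =>
    ((LinearMap.proj i : (Fin 2 → K) →ₗ[K] K).restrictScalars F).comp U.subtype with hπ
  set fr : Fin 2 → (↥U →ₗ[F] K) := fun i => (frobPow q F K hF 1).comp (π i) with hfr
  set v4 : Fin 4 → (↥U →ₗ[F] K) := ![π 0, π 1, fr 0, fr 1] with hv4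
  have hnotli : ¬ LinearIndependent K v4 := by
    intro h
    have := h.fintype_card_le_finrank
    rw [hdim3] at this
    simp at this
  obtain ⟨g, hgsum, i0, hgne⟩ := Fintype.not_linearIndependent_iff.mp hnotli
  obtain ⟨a, ha⟩ := aux_qroot hF hq (g 2)
  obtain ⟨b, hb⟩ := aux_qroot hF hq (g 3)
  -- the key linear relation satisfied by every vector of U
  have hid : ∀ u ∈ U, g 0 * u 0 + g 1 * u 1 + a ^ q * (u 0) ^ q + b ^ q * (u 1) ^ q = 0 := by
    intro u hu
    have h := LinearMap.congr_fun hgsum (⟨u, hu⟩ : ↥U)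
    rw [ha, hb]
    simpa [hv4, Fin.sum_univ_four, hfr, hπ, pow_one, mul_comm] using h
  -- the candidate linear map
  set φL : (Fin 2 → K) →ₗ[K] (Fin 2 → K) :=
    { toFun := fun w => ![a * w 0 + b * w 1, -(g 0 * w 0) - g 1 * w 1]
      map_add' := by
        intro w1 w2
        funext i
        fin_cases i <;> simp [Pi.add_apply] <;> ring
      map_smul' := by
        intro c w
        funext i
        fin_cases i <;> simp [Pi.smul_apply, smul_eq_mul] <;> ring } with hφL
  have hφL0 : ∀ w, φL w 0 = a * w 0 + b * w 1 := fun w => rfl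
  have hφL1 : ∀ w, φL w 1 = -(g 0 * w 0) - g 1 * w 1 := fun w => rfl
  have hkey : ∀ u ∈ U, φL u 1 = (φL u 0) ^ q := by
    intro u hu
    rw [hφL0, hφL1, aux_add_pow_q hF, mul_pow, mul_pow]
    linear_combination -(hid u hu)
  -- φL is nonzero
  have hφLne : φL ≠ 0 := by
    intro h0
    have e0 : φL ![1, 0] = 0 := by rw [h0]; rfl
    have e1 : φL ![0, 1] = 0 := by rw [h0]; rfl
    have ha0 : a = 0 := by
      have h := congr_fun e0 0
      rw [hφL0] at h
      simpa using h
    have hb0 : b = 0 := by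
      have h := congr_fun e1 0
      rw [hφL0] at h
      simpa using h
    have hg0 : g 0 = 0 := by
      have h := congr_fun e0 1
      rw [hφL1] at h
      simpa using h
    have hg1 : g 1 = 0 := by
      have h := congr_fun e1 1
      rw [hφL1] at h
      simpa using h
    have hg2 : g 2 = 0 := by rw [← ha, ha0, zero_pow hq.ne_zero]
    have hg3 : g 3 = 0 := by rw [← hb, hb0, zero_pow hq.ne_zero]
    have hall : ∀ i : Fin 4, g i = 0 := by
      intro i
      fin_cases i
      · exact hg0
      · exact hg1
      · exact hg2
      · exact hg3
    exact hgne (hall i0)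
  -- φL is injective
  have hinj : Function.Injective φL := by
    by_contra hninj
    have hker : LinearMap.ker φL ≠ ⊥ := fun h => hninj (LinearMap.ker_eq_bot.mp h)
    have hrn : Module.finrank K (LinearMap.range φL) +
        Module.finrank K (LinearMap.ker φL) = 2 := by
      rw [LinearMap.finrank_range_add_finrank_ker]
      simp
    have hkpos : 0 < Module.finrank K (LinearMap.ker φL) := by
      rw [Module.finrank_pos_iff]
      exact Submodule.nontrivial_iff_ne_bot.mpr hker
    have hrpos : 0 < Module.finrank K (LinearMap.range φL) := by
      rw [Module.finrank_pos_iff]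
      exact Submodule.nontrivial_iff_ne_bot.mpr
        (fun h => hφLne (LinearMap.range_eq_bot.mp h))
    have hk1 : Module.finrank K (LinearMap.ker φL) = 1 := by omega
    have hr1 : Module.finrank K (LinearMap.range φL) = 1 := by omega
    have hsc := hscat (LinearMap.ker φL) hk1
    set jU : ↥U →ₗ[F] K := ((LinearMap.proj (0 : Fin 2) :
        (Fin 2 → K) →ₗ[K] K).restrictScalars F).comp
        ((φL.restrictScalars F).comp U.subtype) with hjU
    have hjU_apply : ∀ u : ↥U, jU u = φL (↑u) 0 := fun u => rfl
    -- the range of jU has F-dimension at most 1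
    have hrangele : Module.finrank F (LinearMap.range jU) ≤ 1 := by
      by_cases hbot : LinearMap.range jU = ⊥
      · rw [hbot]
        simp
      · obtain ⟨x1, hx1mem, hx1ne⟩ := (Submodule.ne_bot_iff _).mp hbot
        obtain ⟨u1, rfl⟩ := hx1mem
        have hle : LinearMap.range jU ≤ Submodule.span F {jU u1} := by
          rintro - ⟨u2, rfl⟩
          by_cases h2 : jU u2 = 0
          · rw [h2]
            exact Submodule.zero_mem _
          · set w1 := φL ↑u1 with hw1
            set w2 := φL ↑u2 with hw2
            have hwdep : ¬ LinearIndependent K ![w1, w2] := by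
              intro hind
              have hsple : Submodule.span K (Set.range ![w1, w2]) ≤ LinearMap.range φL := by
                rw [Submodule.span_le]
                rintro - ⟨i, rfl⟩
                fin_cases i
                · exact ⟨↑u1, rfl⟩
                · exact ⟨↑u2, rfl⟩
              have h2le := Submodule.finrank_mono hsple
              rw [finrank_span_eq_card hind, hr1] at h2le
              simp at h2le
            obtain ⟨s, hssum, is, hsne⟩ := Fintype.not_linearIndependent_iff.mp hwdep
            have hsum2 : s 0 • w1 + s 1 • w2 = 0 := by
              simpa [Fin.sum_univ_two] using hssum
            have c0 : s 0 * w1 0 + s 1 * w2 0 = 0 := by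
              simpa using congr_fun hsum2 0
            have c1 : s 0 * w1 1 + s 1 * w2 1 = 0 := by
              simpa using congr_fun hsum2 1
            have hk1' : w1 1 = (w1 0) ^ q := hkey ↑u1 u1.2
            have hk2' : w2 1 = (w2 0) ^ q := hkey ↑u2 u2.2
            rw [hk1', hk2'] at c1
            have hx1 : w1 0 ≠ 0 := hx1ne
            have hx2 : w2 0 ≠ 0 := h2
            have hs1 : s 1 ≠ 0 := by
              intro hs10
              have hs00 : s 0 ≠ 0 := by
                intro hs00
                apply hsne
                fin_cases is
                · exact hs00
                · exact hs10
              rw [hs10] at c0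
              simp only [zero_mul, add_zero] at c0
              exact hx1 ((mul_eq_zero.mp c0).resolve_left hs00)
            set c : K := -(s 0 / s 1) with hc
            have hx2eq : w2 0 = c * w1 0 := by
              rw [hc]
              linear_combination (s 1)⁻¹ * c0 - w2 0 * mul_inv_cancel₀ hs1
            have hx2q : (w2 0) ^ q = c * (w1 0) ^ q := by
              rw [hc]
              linear_combination (s 1)⁻¹ * c1 - (w2 0) ^ q * mul_inv_cancel₀ hs1
            have hcq : c ^ q = c := by
              have hpow : (c * w1 0) ^ q = c * (w1 0) ^ q := by rw [← hx2eq, hx2q]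
              rw [mul_pow] at hpow
              have := mul_right_cancel₀ (pow_ne_zero q hx1) hpow
              exact this
            obtain ⟨tF, htF⟩ := aux_fixed hF hq c hcq
            rw [Submodule.mem_span_singleton]
            refine ⟨tF, ?_⟩
            rw [Algebra.smul_def, htF, hjU_apply, hjU_apply, ← hw1, ← hw2, hx2eq]
        calc Module.finrank F (LinearMap.range jU)
            ≤ Module.finrank F (Submodule.span F {jU u1}) := Submodule.finrank_mono hle
          _ = 1 := finrank_span_singleton hx1ne
    have hrk : Module.finrank F (LinearMap.range jU) +
        Module.finrank F (LinearMap.ker jU) = 3 := by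
      rw [LinearMap.finrank_range_add_finrank_ker, hrank]
    have hmaple : (LinearMap.ker jU).map U.subtype ≤
        U ⊓ (LinearMap.ker φL).restrictScalars F := by
      rintro - ⟨u, hu, rfl⟩
      refine ⟨u.2, ?_⟩
      have h0 : φL (↑u) 0 = 0 := by
        rw [← hjU_apply]
        exact hu
      have h1 : φL (↑u) 1 = 0 := by
        rw [hkey ↑u u.2, h0, zero_pow hq.ne_zero]
      show (↑u : Fin 2 → K) ∈ LinearMap.ker φL
      rw [LinearMap.mem_ker]
      funext i
      fin_cases i
      · exact h0
      · exact h1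
    have hfinle := Submodule.finrank_mono hmaple
    rw [Submodule.finrank_map_subtype_eq] at hfinle
    omega
  refine ⟨LinearEquiv.ofInjectiveEndo φL hinj, ?_⟩
  intro u hu i
  have happ : (LinearEquiv.ofInjectiveEndo φL hinj) u = φL u := rfl
  fin_cases i
  · rw [happ]
    norm_num
  · rw [happ]
    show φL u 1 = (φL u 0) ^ q ^ ((1 : Fin 2) : ℕ)
    rw [hkey u hu]
    norm_num

end AuxChar

/-- For `n ∈ {1,2,3}` and `k ≤ n ≤ m`, a rank-`n` linear set in `PG(k-1, q^m)` scattered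
with respect to the hyperplanes is `GL(k, q^m)`-equivalent to
`{(x, x^q, …, x^{q^{k-1}}) : x ∈ Z}` for some `F_q`-subspace `Z` of `F_{q^m}` of
dimension `n`. -/
theorem scattered_wrt_hyperplanes_small_rank (q m n k : ℕ) (hq : IsPrimePow q)
    (hn : n ∈ ({1, 2, 3} : Set ℕ)) (hkn : k ≤ n) (hnm : n ≤ m)
    (F K : Type*) [Field F] [Field K] [Fintype F] [Fintype K] [Algebra F K]
    (hF : Fintype.card F = q) (hK : Fintype.card K = q ^ m)
    (U : Submodule F (Fin k → K)) (hrank : Module.finrank F ↥U = n)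
    (hspan : Submodule.span K (U : Set (Fin k → K)) = ⊤)
    (hscat : ∀ H : Submodule K (Fin k → K), Module.finrank K ↥H = k - 1 →
      Module.finrank F (U ⊓ H.restrictScalars F : Submodule F (Fin k → K)) ≤ k - 1) :
    ∃ (φ : (Fin k → K) ≃ₗ[K] (Fin k → K)) (Z : Submodule F K),
      Module.finrank F ↥Z = n ∧
      φ '' (U : Set (Fin k → K)) =
        {w | ∃ x ∈ Z, w = fun i : Fin k => x ^ q ^ (i : ℕ)} := by
  have hn3 : n = 1 ∨ n = 2 ∨ n = 3 := by simpa using hn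
  have hk0 : k ≠ 0 := by
    rintro rfl
    have h0 : Module.finrank F ↥U = 0 := Module.finrank_zero_of_subsingleton
    omega
  have hk123 : k = 1 ∨ k = 2 ∨ k = 3 := by omega
  rcases hk123 with rfl | rfl | rfl
  · -- k = 1
    have hφ : ∀ u ∈ U, ∀ i : Fin 1,
        (LinearEquiv.refl K (Fin 1 → K)) u i = ((LinearEquiv.refl K (Fin 1 → K)) u 0) ^ q ^ (i : ℕ) := by
      intro u hu i
      have hi : i = 0 := Subsingleton.elim i 0
      subst hi
      simp
    obtain ⟨Z, hZ1, hZ2⟩ := aux_package hF hq U hrank _ hφ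
    exact ⟨_, Z, hZ1, hZ2⟩
  · -- k = 2
    rcases (by omega : n = 2 ∨ n = 3) with rfl | rfl
    · obtain ⟨φ, hφ⟩ := aux_keqn hF hK hq hnm U hrank hspan
      obtain ⟨Z, hZ1, hZ2⟩ := aux_package hF hq U hrank φ hφ
      exact ⟨φ, Z, hZ1, hZ2⟩
    · have hscat' : ∀ H : Submodule K (Fin 2 → K), Module.finrank K ↥H = 1 →
          Module.finrank F ↥(U ⊓ H.restrictScalars F) ≤ 1 := by
        intro H hH
        exact hscat H (by omega)
      obtain ⟨φ, hφ⟩ := aux_k2n3 hF hq U hrank hscat'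
      obtain ⟨Z, hZ1, hZ2⟩ := aux_package hF hq U hrank φ hφ
      exact ⟨φ, Z, hZ1, hZ2⟩
  · -- k = 3
    have hn' : n = 3 := by omega
    subst hn'
    obtain ⟨φ, hφ⟩ := aux_keqn hF hK hq hnm U hrank hspan
    obtain ⟨Z, hZ1, hZ2⟩ := aux_package hF hq U hrank φ hφ
    exact ⟨φ, Z, hZ1, hZ2⟩
end
end
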